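/- arXiv:2208.10699 — 7 statements merged into one kernel-verified Lean document; each statement's English description precedes it below -/
import Mathlib

section
/- Let G be a finite group, H and K subgroups of G, and Q an H-conjugacy invariant probability on G. Then for all x, x', y, y' in G with x' ∈ HxK and y' ∈ HyK one has Q(H y' K (x')⁻¹) = Q(H y K x⁻¹). In particular the transition kernel P(x, y) := Q(H y K x⁻¹) of the random walk driven by Q, lumped to the double coset space H\G/K, is well defined (independent of the choice of double coset representatives). -/
/-- Let `G` be a finite group, `H` and `K` subgroups of `G`, and `Q` an
`H`-conjugacy invariant probability on `G`.  Then for all `x, x', y, y'` in `G` with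
`x' ∈ HxK` and `y' ∈ HyK` one has `Q(H y' K (x')⁻¹) = Q(H y K x⁻¹)`: the transition kernel
`P(x, y) := Q(H y K x⁻¹)` of the random walk driven by `Q`, lumped to the double coset space
`H\G/K`, is well defined. -/
theorem double_coset_kernel_well_defined
    {G : Type*} [Group G] [Fintype G] (H K : Subgroup G) (Q : G → ℝ)
    (hQnonneg : ∀ s : G, 0 ≤ Q s) (hQsum : ∑ s : G, Q s = 1)
    (hQinv : ∀ h ∈ H, ∀ s : G, Q (h * s * h⁻¹) = Q s)
    (x x' y y' : G)
    (hx' : ∃ h ∈ H, ∃ k ∈ K, x' = h * x * k)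
    (hy' : ∃ h ∈ H, ∃ k ∈ K, y' = h * y * k) :
    ∑ s : G, Set.indicator {g : G | ∃ h ∈ H, ∃ k ∈ K, g = h * y' * k * x'⁻¹} Q s
      = ∑ s : G, Set.indicator {g : G | ∃ h ∈ H, ∃ k ∈ K, g = h * y * k * x⁻¹} Q s := by
  obtain ⟨h₁, hh₁, k₁, hk₁, hx'eq⟩ := hx'
  obtain ⟨h₂, hh₂, k₂, hk₂, hy'eq⟩ := hy'
  -- reindex by conjugation s ↦ h₁⁻¹ s h₁
  refine Fintype.sum_equiv
    (⟨fun s => h₁⁻¹ * s * h₁, fun s => h₁ * s * h₁⁻¹, fun s => by group, fun s => by group⟩)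
    _ _ (fun s => ?_)
  simp only [Equiv.coe_fn_mk]
  have hmem : s ∈ {g : G | ∃ h ∈ H, ∃ k ∈ K, g = h * y' * k * x'⁻¹} ↔
      (h₁⁻¹ * s * h₁) ∈ {g : G | ∃ h ∈ H, ∃ k ∈ K, g = h * y * k * x⁻¹} := by
    constructor
    · rintro ⟨h, hh, k, hk, rfl⟩
      exact ⟨h₁⁻¹ * h * h₂, mul_mem (mul_mem (inv_mem hh₁) hh) hh₂, k₂ * k * k₁⁻¹,
        mul_mem (mul_mem hk₂ hk) (inv_mem hk₁), by rw [hx'eq, hy'eq]; group⟩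
    · rintro ⟨h, hh, k, hk, heq⟩
      have hs : s = h₁ * (h * y * k * x⁻¹) * h₁⁻¹ := by
        rw [← heq]; group
      refine ⟨h₁ * h * h₂⁻¹, mul_mem (mul_mem hh₁ hh) (inv_mem hh₂),
        k₂⁻¹ * k * k₁, mul_mem (mul_mem (inv_mem hk₂) hk) hk₁, ?_⟩
      rw [hs, hx'eq, hy'eq]; group
  have hQ : Q (h₁⁻¹ * s * h₁) = Q s := by
    simpa using hQinv h₁⁻¹ (inv_mem hh₁) s
  by_cases hs : s ∈ {g : G | ∃ h ∈ H, ∃ k ∈ K, g = h * y' * k * x'⁻¹}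
  · rw [Set.indicator_of_mem hs, Set.indicator_of_mem (hmem.mp hs), hQ]
  · rw [Set.indicator_of_notMem hs, Set.indicator_of_notMem (fun hc => hs (hmem.mpr hc))]
end

section
/- Let G be a finite group, H and K subgroups of G, and Q an H-conjugacy invariant probability on G. Let R ⊆ G be a set containing exactly one element from each double coset in H\G/K. Then for every y ∈ G, ∑_{x∈R} |HxK| · Q(H y K x⁻¹) = |HyK|. Equivalently, the probability distribution π(x) = |HxK|/|G| on H\G/K is stationary for the lumped transition kernel P(x,y) = Q(H y K x⁻¹). -/
/-- Let `G` be a finite group, `H`, `K` subgroups, and `Q` an `H`-conjugacy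
invariant probability on `G`.  Let `R ⊆ G` contain exactly one element from each double coset
in `H\G/K`.  Then for every `y ∈ G`, `∑_{x ∈ R} |HxK| · Q(H y K x⁻¹) = |HyK|`; i.e. the
distribution `π(x) = |HxK|/|G|` on `H\G/K` is stationary for the lumped kernel
`P(x,y) = Q(HyKx⁻¹)`. -/
theorem double_coset_stationary
    {G : Type*} [Group G] [Fintype G] (H K : Subgroup G) (Q : G → ℝ)
    (hQnonneg : ∀ s : G, 0 ≤ Q s) (hQsum : ∑ s : G, Q s = 1)
    (hQinv : ∀ h ∈ H, ∀ s : G, Q (h * s * h⁻¹) = Q s)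
    (R : Finset G)
    (hR : ∀ g : G, ∃! x, x ∈ R ∧ ∃ h ∈ H, ∃ k ∈ K, g = h * x * k)
    (y : G) :
    ∑ x ∈ R, (Nat.card {g : G | ∃ h ∈ H, ∃ k ∈ K, g = h * x * k} : ℝ) *
        (∑ s : G, Set.indicator {g : G | ∃ h ∈ H, ∃ k ∈ K, g = h * y * k * x⁻¹} Q s)
      = (Nat.card {g : G | ∃ h ∈ H, ∃ k ∈ K, g = h * y * k} : ℝ) := by
  classical
  let D : G → Set G := fun x => {g : G | ∃ h ∈ H, ∃ k ∈ K, g = h * x * k}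
  let S : G → Set G := fun x => {g : G | ∃ h ∈ H, ∃ k ∈ K, g = h * y * k * x⁻¹}
  let F : G → ℝ := fun x => ∑ s : G, Set.indicator (S x) Q s
  show ∑ x ∈ R, (Nat.card (D x) : ℝ) * F x = (Nat.card (D y) : ℝ)
  have hcard : ∀ x, (Nat.card (D x) : ℝ) = ((D x).toFinset.card : ℝ) := by
    intro x
    rw [Nat.card_eq_fintype_card, Set.toFinset_card]
  -- F is constant on double cosets
  have hFconst : ∀ x z, z ∈ D x → F z = F x := by
    rintro x z ⟨h, hh, k, hk, rfl⟩
    have hmem : ∀ s : G, (h * s * h⁻¹ ∈ S (h * x * k)) ↔ s ∈ S x := by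
      intro s
      constructor
      · rintro ⟨h', hh', k', hk', heq⟩
        refine ⟨h⁻¹ * h', mul_mem (inv_mem hh) hh', k' * k⁻¹, mul_mem hk' (inv_mem hk), ?_⟩
        have hs : s = h⁻¹ * (h * s * h⁻¹) * h := by group
        rw [hs, heq]; group
      · rintro ⟨h', hh', k', hk', heq⟩
        refine ⟨h * h', mul_mem hh hh', k' * k, mul_mem hk' hk, ?_⟩
        rw [heq]; group
    have hpt : ∀ s : G,
        Set.indicator (S x) Q s = Set.indicator (S (h * x * k)) Q (h * s * h⁻¹) := by
      intro s
      by_cases hs : s ∈ S x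
      · rw [Set.indicator_of_mem hs, Set.indicator_of_mem ((hmem s).mpr hs), hQinv h hh]
      · rw [Set.indicator_of_notMem hs,
          Set.indicator_of_notMem (fun c => hs ((hmem s).mp c))]
    exact (Fintype.sum_equiv
      ⟨fun s => h * s * h⁻¹, fun s => h⁻¹ * s * h, fun s => by group, fun s => by group⟩
      _ _ hpt).symm
  have hx_self : ∀ x : G, x ∈ D x := fun x => ⟨1, one_mem _, 1, one_mem _, by group⟩
  -- rewrite each term as a sum over the double coset
  have hterm : ∀ x, (Nat.card (D x) : ℝ) * F x = ∑ z ∈ (D x).toFinset, F z := by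
    intro x
    rw [Finset.sum_congr rfl (fun z hz => hFconst x z (Set.mem_toFinset.mp hz)),
      Finset.sum_const, nsmul_eq_mul, hcard]
  rw [Finset.sum_congr rfl (fun x _ => hterm x)]
  -- double cosets partition G
  have hdisj : (R : Set G).PairwiseDisjoint (fun x => (D x).toFinset) := by
    intro a ha b hb hab
    refine Finset.disjoint_left.mpr ?_
    intro z hza hzb
    have h1 : z ∈ D a := by simpa using hza
    have h2 : z ∈ D b := by simpa using hzb
    exact absurd ((hR z).unique ⟨ha, h1⟩ ⟨hb, h2⟩) hab
  rw [← Finset.sum_biUnion hdisj]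
  have hunion : R.biUnion (fun x => (D x).toFinset) = Finset.univ := by
    refine Finset.eq_univ_of_forall ?_
    intro z
    obtain ⟨x, ⟨hxR, hx⟩, -⟩ := hR z
    exact Finset.mem_biUnion.mpr ⟨x, hxR, Set.mem_toFinset.mpr hx⟩
  rw [hunion]
  -- now compute ∑ z, F z
  show ∑ z : G, ∑ s : G, Set.indicator (S z) Q s = (Nat.card (D y) : ℝ)
  rw [Finset.sum_comm]
  have hinner : ∀ s : G, ∑ z : G, Set.indicator (S z) Q s = ((D y).toFinset.card : ℝ) * Q s := by
    intro s
    have hTmem : ∀ z : G, s ∈ S z ↔ z ∈ (D y).toFinset.image (fun w => s⁻¹ * w) := by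
      intro z
      constructor
      · rintro ⟨h, hh, k, hk, heq⟩
        refine Finset.mem_image.mpr ⟨h * y * k, Set.mem_toFinset.mpr ⟨h, hh, k, hk, rfl⟩, ?_⟩
        rw [heq]; group
      · rintro hz
        obtain ⟨w, hw, hzw⟩ := Finset.mem_image.mp hz
        obtain ⟨h, hh, k, hk, rfl⟩ := Set.mem_toFinset.mp hw
        exact ⟨h, hh, k, hk, by rw [← hzw]; group⟩
    calc ∑ z : G, Set.indicator (S z) Q s
        = ∑ z : G, if z ∈ (D y).toFinset.image (fun w => s⁻¹ * w) then Q s else 0 := by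
          refine Finset.sum_congr rfl fun z _ => ?_
          rw [Set.indicator_apply]
          simp only [hTmem z]
      _ = ∑ z ∈ Finset.univ ∩ (D y).toFinset.image (fun w => s⁻¹ * w), Q s := by
          rw [Finset.sum_ite_mem]
      _ = ((D y).toFinset.card : ℝ) * Q s := by
          rw [Finset.univ_inter, Finset.sum_const, nsmul_eq_mul,
            Finset.card_image_of_injective _ (mul_right_injective s⁻¹)]
  rw [Finset.sum_congr rfl (fun s _ => hinner s), ← Finset.mul_sum, hQsum, mul_one, hcard]
end

section
/- Let G be a finite group, H and K subgroups of G, and Q a probability on G which is a class function (Q(t⁻¹ s t) = Q(s) for all s,t ∈ G) and symmetric (Q(s⁻¹) = Q(s) for all s ∈ G). Then for all x, y ∈ G, |HxK| · Q(H y K x⁻¹) = |HyK| · Q(H x K y⁻¹); that is, the lumped chain P(x,y) = Q(H y K x⁻¹) on H\G/K is reversible with respect to π(x) = |HxK|/|G|. -/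
open Finset

section DCRAux

variable {G : Type*} [Group G] [Fintype G] (H K : Subgroup G)

open Classical in
/-- Number of pairs `(h,k) ∈ H × K` with `h * a * k = g`. -/
noncomputable def dcrN (a g : G) : ℕ :=
  (Finset.univ.filter (fun p : H × K => (p.1 : G) * a * (p.2 : G) = g)).card

open Classical in
lemma dcrN_const (a g : G) (hg : ∃ h ∈ H, ∃ k ∈ K, g = h * a * k) :
    dcrN H K a g = dcrN H K a a := by
  obtain ⟨h₀, hh₀, k₀, hk₀, rfl⟩ := hg
  unfold dcrN
  apply Finset.card_bij' (fun p _ => ((⟨h₀, hh₀⟩ : H)⁻¹ * p.1, p.2 * (⟨k₀, hk₀⟩ : K)⁻¹))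
    (fun q _ => ((⟨h₀, hh₀⟩ : H) * q.1, q.2 * (⟨k₀, hk₀⟩ : K)))
  · intro p hp
    simp only [mem_filter, mem_univ, true_and] at hp ⊢
    push_cast
    calc h₀⁻¹ * (p.1 : G) * a * ((p.2 : G) * k₀⁻¹)
        = h₀⁻¹ * ((p.1 : G) * a * (p.2 : G)) * k₀⁻¹ := by group
      _ = h₀⁻¹ * (h₀ * a * k₀) * k₀⁻¹ := by rw [hp]
      _ = a := by group
  · intro q hq
    simp only [mem_filter, mem_univ, true_and] at hq ⊢
    push_cast
    calc (h₀ : G) * (q.1 : G) * a * ((q.2 : G) * k₀)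
        = h₀ * ((q.1 : G) * a * (q.2 : G)) * k₀ := by group
      _ = h₀ * a * k₀ := by rw [hq]
  · intro p _; simp
  · intro q _; simp

lemma dcrN_self_pos (a : G) : 0 < dcrN H K a a := by
  classical
  unfold dcrN
  rw [Finset.card_pos]
  exact ⟨(1, 1), by simp⟩

open Classical in
lemma dcr_sum_eq (a : G) (f : G → ℝ) :
    ∑ p : H × K, f ((p.1 : G) * a * (p.2 : G))
      = (dcrN H K a a : ℝ) * ∑ s : G, Set.indicator {g : G | ∃ h ∈ H, ∃ k ∈ K, g = h * a * k} f s := by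
  have h1 : ∑ p : H × K, f ((p.1 : G) * a * (p.2 : G))
      = ∑ g : G, ∑ p ∈ Finset.univ.filter (fun p : H × K => (p.1 : G) * a * (p.2 : G) = g),
          f ((p.1 : G) * a * (p.2 : G)) := by
    rw [← Finset.sum_fiberwise_of_maps_to (g := fun p : H × K => (p.1 : G) * a * (p.2 : G))
      (fun p _ => Finset.mem_univ _)]
  rw [h1, Finset.mul_sum]
  apply Finset.sum_congr rfl
  intro g _
  simp only [Set.indicator_apply, Set.mem_setOf_eq]
  by_cases hg : ∃ h ∈ H, ∃ k ∈ K, g = h * a * k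
  · rw [if_pos hg]
    rw [Finset.sum_congr rfl (fun p hp => by
      rw [(Finset.mem_filter.mp hp).2])]
    rw [Finset.sum_const, nsmul_eq_mul, ← dcrN_const H K a g hg]
    rfl
  · rw [if_neg hg, mul_zero]
    apply Finset.sum_eq_zero
    intro p hp
    exact absurd ⟨p.1, p.1.2, p.2, p.2.2, (Finset.mem_filter.mp hp).2.symm⟩ hg

open Classical in
lemma dcr_card_eq (a : G) :
    (Fintype.card (H × K) : ℝ)
      = (dcrN H K a a : ℝ) * (Nat.card {g : G | ∃ h ∈ H, ∃ k ∈ K, g = h * a * k} : ℝ) := by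
  have h := dcr_sum_eq H K a (fun _ => (1 : ℝ))
  simp only [Set.indicator_apply, Set.mem_setOf_eq, Finset.sum_boole, Finset.sum_const,
    Finset.card_univ, nsmul_eq_mul, mul_one] at h
  rw [h]
  congr 1
  rw [Nat.card_eq_fintype_card, Fintype.card_subtype]
  simp only [Set.mem_setOf_eq]

end DCRAux

/-- translate sums of indicators -/
lemma dcr_indicator_translate {G : Type*} [Group G] [Fintype G] (H K : Subgroup G)
    (Q : G → ℝ) (a c : G) :
    ∑ s : G, Set.indicator {g : G | ∃ h ∈ H, ∃ k ∈ K, g = h * a * k * c} Q s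
      = ∑ s : G, Set.indicator {g : G | ∃ h ∈ H, ∃ k ∈ K, g = h * a * k} (fun g => Q (g * c)) s := by
  classical
  rw [← Fintype.sum_bijective (fun s : G => s * c) (Group.mulRight_bijective c)]
  intro s
  simp only [Set.indicator_apply, Set.mem_setOf_eq]
  have hiff : (∃ h ∈ H, ∃ k ∈ K, s * c = h * a * k * c) ↔ (∃ h ∈ H, ∃ k ∈ K, s = h * a * k) := by
    constructor
    · rintro ⟨h, hh, k, hk, heq⟩
      exact ⟨h, hh, k, hk, mul_right_cancel heq⟩
    · rintro ⟨h, hh, k, hk, rfl⟩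
      exact ⟨h, hh, k, hk, rfl⟩
  by_cases hs : ∃ h ∈ H, ∃ k ∈ K, s = h * a * k
  · rw [if_pos (hiff.mpr hs), if_pos hs]
  · rw [if_neg (fun hc => hs (hiff.mp hc)), if_neg hs]

/-- Let `G` be a finite group, `H` and `K` subgroups of `G`, and `Q` a
probability on `G` which is a class function (`Q(t⁻¹st) = Q(s)`) and symmetric
(`Q(s⁻¹) = Q(s)`).  Then for all `x, y ∈ G`,
`|HxK| · Q(H y K x⁻¹) = |HyK| · Q(H x K y⁻¹)`: the lumped chain `P(x,y) = Q(HyKx⁻¹)` on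
`H\G/K` is reversible with respect to `π(x) = |HxK|/|G|`. -/
theorem double_coset_reversible
    {G : Type*} [Group G] [Fintype G] (H K : Subgroup G) (Q : G → ℝ)
    (hQnonneg : ∀ s : G, 0 ≤ Q s) (hQsum : ∑ s : G, Q s = 1)
    (hQclass : ∀ s t : G, Q (t⁻¹ * s * t) = Q s)
    (hQsymm : ∀ s : G, Q s⁻¹ = Q s)
    (x y : G) :
    (Nat.card {g : G | ∃ h ∈ H, ∃ k ∈ K, g = h * x * k} : ℝ) *
        (∑ s : G, Set.indicator {g : G | ∃ h ∈ H, ∃ k ∈ K, g = h * y * k * x⁻¹} Q s)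
      = (Nat.card {g : G | ∃ h ∈ H, ∃ k ∈ K, g = h * y * k} : ℝ) *
        (∑ s : G, Set.indicator {g : G | ∃ h ∈ H, ∃ k ∈ K, g = h * x * k * y⁻¹} Q s) := by
  classical
  set Dx : ℝ := (Nat.card {g : G | ∃ h ∈ H, ∃ k ∈ K, g = h * x * k} : ℝ) with hDx
  set Dy : ℝ := (Nat.card {g : G | ∃ h ∈ H, ∃ k ∈ K, g = h * y * k} : ℝ) with hDy
  set Sy : ℝ := ∑ s : G, Set.indicator {g : G | ∃ h ∈ H, ∃ k ∈ K, g = h * y * k * x⁻¹} Q s with hSy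
  set Sx : ℝ := ∑ s : G, Set.indicator {g : G | ∃ h ∈ H, ∃ k ∈ K, g = h * x * k * y⁻¹} Q s with hSx
  set nx : ℝ := (dcrN H K x x : ℝ) with hnx
  set ny : ℝ := (dcrN H K y y : ℝ) with hny
  -- key symmetric sum identity
  have key : ∑ p : H × K, Q ((p.1 : G) * y * (p.2 : G) * x⁻¹)
      = ∑ p : H × K, Q ((p.1 : G) * x * (p.2 : G) * y⁻¹) := by
    rw [← Equiv.sum_comp (Equiv.prodCongr (Equiv.inv H) (Equiv.inv K))
      (fun p : H × K => Q ((p.1 : G) * y * (p.2 : G) * x⁻¹))]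
    apply Finset.sum_congr rfl
    intro p _
    simp only [Equiv.prodCongr_apply, Equiv.inv_apply, Prod.map]
    have e1 : ((p.1 : G)⁻¹ * y * (p.2 : G)⁻¹ * x⁻¹) = (x * (p.2 : G) * y⁻¹ * (p.1 : G))⁻¹ := by
      group
    have e2 : (x * (p.2 : G) * y⁻¹ * (p.1 : G))
        = (p.1 : G)⁻¹ * ((p.1 : G) * x * (p.2 : G) * y⁻¹) * (p.1 : G) := by group
    push_cast
    rw [e1, hQsymm, e2, hQclass]
  -- sums via fibers
  have hy : ∑ p : H × K, Q ((p.1 : G) * y * (p.2 : G) * x⁻¹) = ny * Sy := by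
    have h := dcr_sum_eq H K y (fun g => Q (g * x⁻¹))
    rw [hSy, dcr_indicator_translate H K Q y x⁻¹, hny]
    exact h
  have hx : ∑ p : H × K, Q ((p.1 : G) * x * (p.2 : G) * y⁻¹) = nx * Sx := by
    have h := dcr_sum_eq H K x (fun g => Q (g * y⁻¹))
    rw [hSx, dcr_indicator_translate H K Q x y⁻¹, hnx]
    exact h
  have hcx : (Fintype.card (H × K) : ℝ) = nx * Dx := dcr_card_eq H K x
  have hcy : (Fintype.card (H × K) : ℝ) = ny * Dy := dcr_card_eq H K y
  have hnx0 : nx ≠ 0 := by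
    rw [hnx]; exact_mod_cast (dcrN_self_pos H K x).ne'
  have hny0 : ny ≠ 0 := by
    rw [hny]; exact_mod_cast (dcrN_self_pos H K y).ne'
  have main : nx * ny * (Dx * Sy) = nx * ny * (Dy * Sx) := by
    calc nx * ny * (Dx * Sy) = (nx * Dx) * (ny * Sy) := by ring
    _ = (Fintype.card (H × K) : ℝ) * (ny * Sy) := by rw [hcx]
    _ = (Fintype.card (H × K) : ℝ) * (nx * Sx) := by rw [← hy, key, hx]
    _ = (ny * Dy) * (nx * Sx) := by rw [hcy]
    _ = nx * ny * (Dy * Sx) := by ring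
  exact mul_left_cancel₀ (mul_ne_zero hnx0 hny0) main
end

section
/- Let F be a finite field, n ≥ 2, and let a, v ∈ Fⁿ satisfy aᵀv = 0. Suppose 1 ≤ i < j ≤ n, a_i ≠ 0 and a_k = 0 for all k < i (so i is the index of the first nonzero entry of a), and v_j ≠ 0 and v_k = 0 for all k > j (so j is the index of the last nonzero entry of v). Then the transvection I + v aᵀ lies in the Bruhat cell B τ B, where τ is the permutation matrix of the transposition (i j) (equivalently, of s_{j−1}⋯s_{i+1} s_i s_{i+1}⋯s_{j−1}). -/
/-- The Borel subgroup of `GL_n(F)`, viewed as the set of invertible upper-triangular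
`n × n` matrices. -/
def borelSubgroup (n : ℕ) (F : Type*) [Field F] : Set (Matrix (Fin n) (Fin n) F) :=
  {M | M.BlockTriangular id ∧ IsUnit M.det}

/-- The Bruhat double coset `B ω B` associated to the permutation `ω ∈ S_n`. -/
def bruhatCell (n : ℕ) (F : Type*) [Field F] (ω : Equiv.Perm (Fin n)) :
    Set (Matrix (Fin n) (Fin n) F) :=
  {M | ∃ b₁ ∈ borelSubgroup n F, ∃ b₂ ∈ borelSubgroup n F, M = b₁ * ω.permMatrix F * b₂}

open Matrix in
private lemma aux_vecMulVec_mul {n : ℕ} {F : Type*} [Field F] (x y : Fin n → F)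
    (X : Matrix (Fin n) (Fin n) F) : vecMulVec x y * X = vecMulVec x (y ᵥ* X) := by
  ext k l
  simp [Matrix.mul_apply, Matrix.vecMulVec_apply, Matrix.vecMul, dotProduct,
    Finset.mul_sum, mul_assoc]

open Matrix in
private lemma aux_vecMul_vecMulVec {n : ℕ} {F : Type*} [Field F] (y x z : Fin n → F) :
    y ᵥ* vecMulVec x z = (y ⬝ᵥ x) • z := by
  funext l
  simp [Matrix.vecMul, Matrix.vecMulVec_apply, dotProduct, Finset.sum_mul, mul_assoc]

/-- Let `F` be a finite field, `n ≥ 2`, and `a, v ∈ Fⁿ` with `aᵀv = 0`.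
Suppose `i < j`, `i` is the index of the first nonzero entry of `a`, and `j` is the index of
the last nonzero entry of `v`.  Then the transvection `I + v aᵀ` lies in the Bruhat cell
`B τ B`, where `τ` is the permutation matrix of the transposition `(i j)`. -/
theorem transvection_mem_bruhatCell_swap
    (F : Type*) [Field F] (n : ℕ) (hn : 2 ≤ n) (a v : Fin n → F)
    (hav : (∑ i, a i * v i) = 0) (i j : Fin n) (hij : i < j)
    (hai : a i ≠ 0) (hafirst : ∀ k, k < i → a k = 0)
    (hvj : v j ≠ 0) (hvlast : ∀ k, j < k → v k = 0) :
    (1 + Matrix.vecMulVec v a) ∈ bruhatCell n F (Equiv.swap i j) := by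
  classical
  open Matrix in
  have hij' : i ≠ j := ne_of_lt hij
  have hji' : j ≠ i := hij'.symm
  -- the key scalar identity
  set β : F := ∑ l ∈ Finset.Ioo i j, a l * v l with hβ
  have key : a i * v i + (β + a j * v j) = 0 := by
    rw [← hav]
    have h0 : ∀ k ∈ Finset.univ, k ∉ insert i (insert j (Finset.Ioo i j)) → a k * v k = 0 := by
      intro k _ hk
      simp only [Finset.mem_insert, Finset.mem_Ioo, not_or, not_and_or, not_lt] at hk
      obtain ⟨hki, hkj, hio⟩ := hk
      rcases hio with h | h
      · rw [hafirst k (lt_of_le_of_ne h hki), zero_mul]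
      · rw [hvlast k (lt_of_le_of_ne h (Ne.symm hkj)), mul_zero]
    rw [← Finset.sum_subset (Finset.subset_univ _) h0]
    rw [Finset.sum_insert (by simp [hij', lt_irrefl]), Finset.sum_insert (by simp)]
    ring
  -- the vectors
  set ei : Fin n → F := Pi.single i 1 with hei_def
  set ej : Fin n → F := Pi.single j 1 with hej_def
  set w : Fin n → F := fun k => if k < j then v k / v j else 0 with hw_def
  set w'' : Fin n → F := fun k => if k < j ∧ ¬ k = i then v k / v j else 0 with hw''_def
  set d : Fin n → F := fun l =>
    if l = j then (v j * a i)⁻¹ else if i < l ∧ l < j then -(a l / a i) else 0 with hd_def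
  set p' : Fin n → F := fun l =>
    if l = i then -1 else if l = j then -(a i * v j)⁻¹ else if j < l then -(a l / a i) else 0
    with hp'_def
  set T : Matrix (Fin n) (Fin n) F :=
    1 + vecMulVec ei p' + vecMulVec ej (v j • a) - vecMulVec w'' ej with hT_def
  set b₁ : Matrix (Fin n) (Fin n) F := 1 + vecMulVec ei d + vecMulVec w ej with hb₁_def
  set b₂ : Matrix (Fin n) (Fin n) F := (Equiv.swap i j).permMatrix F * T with hb₂_def
  -- entry formulas
  have hTapp : ∀ k l, T k l = (if k = l then 1 else 0) + (if k = i then 1 else 0) * p' l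
      + (if k = j then 1 else 0) * (v j * a l)
      - (if k < j ∧ ¬ k = i then v k / v j else 0) * (if l = j then 1 else 0) := by
    intro k l
    simp [hT_def, Matrix.add_apply, Matrix.sub_apply, Matrix.one_apply, Matrix.vecMulVec_apply,
      Pi.single_apply, hei_def, hej_def, hw''_def]
  have hb₁app : ∀ k l, b₁ k l = (if k = l then 1 else 0) + (if k = i then 1 else 0) * d l
      + (if k < j then v k / v j else 0) * (if l = j then 1 else 0) := by
    intro k l
    simp [hb₁_def, Matrix.add_apply, Matrix.one_apply, Matrix.vecMulVec_apply,
      Pi.single_apply, hei_def, hej_def, hw_def]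
  have hb₂app : ∀ k l, b₂ k l = T (Equiv.swap i j k) l := by
    intro k l
    rw [hb₂_def, Equiv.Perm.permMatrix, PEquiv.toMatrix_toPEquiv_mul, Matrix.submatrix_apply]
    rfl
  -- b₁ is in the Borel subgroup
  have hb₁tri : b₁.BlockTriangular id := by
    intro k l hkl
    simp only [id] at hkl
    rw [hb₁app]
    rw [if_neg (ne_of_lt hkl).symm]
    by_cases hk : k = i
    · have hlk : l < i := hk ▸ hkl
      have hlj : ¬ l = j := ne_of_lt (lt_trans hlk hij)
      have h2 : ¬ i < l := not_lt_of_gt hlk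
      simp [hd_def, hk, hlj, h2]
    · by_cases hl : l = j
      · have : ¬ k < j := by rw [← hl]; exact not_lt_of_gt hkl
        simp [hk, hl, this]
      · simp [hk, hl]
  have hb₁diag : ∀ k, b₁ k k = 1 := by
    intro k
    rw [hb₁app, if_pos rfl]
    by_cases hk : k = i
    · simp [hd_def, hk, hij', lt_irrefl]
    · by_cases hk2 : k = j
      · simp [hk, hk2, hji', lt_irrefl]
      · simp [hk, hk2]
  have hb₁mem : b₁ ∈ borelSubgroup n F := by
    refine ⟨hb₁tri, ?_⟩
    rw [Matrix.det_of_upperTriangular hb₁tri]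
    simp [hb₁diag]
  -- b₂ is in the Borel subgroup
  have hb₂tri : b₂.BlockTriangular id := by
    intro k l hkl
    simp only [id] at hkl
    rw [hb₂app]
    by_cases hki : k = i
    · rw [hki, Equiv.swap_apply_left, hTapp]
      have hlk : l < i := hki ▸ hkl
      have h1 : ¬ j = l := (ne_of_lt (lt_trans hlk hij)).symm
      have h4 : ¬ l = j := fun h => h1 h.symm
      rw [hafirst l hlk]
      simp [h1, hji', h4, lt_irrefl]
    · by_cases hkj : k = j
      · rw [hkj, Equiv.swap_apply_right, hTapp]
        have hlj : l < j := hkj ▸ hkl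
        by_cases hl : l = i
        · simp [hp'_def, hl, hij', lt_irrefl]
        · have h1 : ¬ i = l := fun h => hl h.symm
          have h4 : ¬ l = j := ne_of_lt hlj
          have h5 : ¬ j < l := not_lt_of_gt hlj
          simp [hp'_def, h1, hij', hl, h4, h5, lt_irrefl]
      · rw [Equiv.swap_apply_of_ne_of_ne hki hkj, hTapp]
        have h1 : ¬ k = l := (ne_of_lt hkl).symm
        by_cases hl : l = j
        · have : ¬ k < j := by rw [← hl]; exact not_lt_of_gt hkl
          simp [h1, hki, hkj, hl, this]
        · simp [h1, hki, hkj, hl]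
  have hb₂memdiag : ∀ k, b₂ k k = if k = i then v j * a i
      else if k = j then -(a i * v j)⁻¹ else 1 := by
    intro k
    rw [hb₂app]
    by_cases hki : k = i
    · rw [hki, Equiv.swap_apply_left, hTapp]
      simp [hji', hij', lt_irrefl]
    · by_cases hkj : k = j
      · rw [hkj, Equiv.swap_apply_right, hTapp]
        simp [hij', hji', hki, hkj, hp'_def, lt_irrefl, hij]
      · rw [Equiv.swap_apply_of_ne_of_ne hki hkj, hTapp]
        simp [hki, hkj]
  have hb₂mem : b₂ ∈ borelSubgroup n F := by
    refine ⟨hb₂tri, ?_⟩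
    rw [Matrix.det_of_upperTriangular hb₂tri]
    rw [isUnit_iff_ne_zero, Finset.prod_ne_zero_iff]
    intro k _
    rw [hb₂memdiag]
    by_cases hki : k = i
    · simp [hki, mul_ne_zero hvj hai]
    · by_cases hkj : k = j
      · simp [hki, hkj, hji', hai, hvj]
      · simp [hki, hkj]
  -- the swap permutation matrix squares to 1
  have hswapsq : (Equiv.swap i j).permMatrix F * (Equiv.swap i j).permMatrix F = 1 := by
    rw [Equiv.Perm.permMatrix, ← PEquiv.toMatrix_trans, ← Equiv.toPEquiv_trans,
      Equiv.swap_swap, Equiv.toPEquiv_refl, PEquiv.toMatrix_refl]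
  -- row computations
  have hrow_ej : ej ᵥ* T = ej + v j • a := by
    rw [hT_def, Matrix.vecMul_sub, Matrix.vecMul_add, Matrix.vecMul_add, Matrix.vecMul_one,
      aux_vecMul_vecMulVec, aux_vecMul_vecMulVec, aux_vecMul_vecMulVec]
    have h1 : ej ⬝ᵥ ei = 0 := by simp [hei_def, hej_def, Pi.single_apply, hji']
    have h2 : ej ⬝ᵥ ej = 1 := by simp [hej_def, Pi.single_apply]
    have h3 : ej ⬝ᵥ w'' = 0 := by simp [hej_def, hw''_def, lt_irrefl]
    rw [h1, h2, h3]
    simp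
  have hdotdw : d ⬝ᵥ w'' = -(β * (a i * v j)⁻¹) := by
    have h0 : ∀ m ∈ Finset.univ, m ∉ Finset.Ioo i j → d m * w'' m = 0 := by
      intro m _ hm
      simp only [Finset.mem_Ioo, not_and_or, not_lt] at hm
      by_cases hmj : m = j
      · have : w'' m = 0 := by simp [hw''_def, hmj, lt_irrefl]
        rw [this, mul_zero]
      · have : d m = 0 := by
          rw [hd_def]
          simp only [hmj, if_false, ite_eq_right_iff]
          rintro ⟨h1, h2⟩
          rcases hm with h | h
          · exact absurd h1 (not_lt_of_ge h)
          · exact absurd h2 (not_lt_of_ge h)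
        rw [this, zero_mul]
    have hsum : d ⬝ᵥ w'' = ∑ m ∈ Finset.Ioo i j, d m * w'' m := by
      rw [dotProduct, ← Finset.sum_subset (Finset.subset_univ _) h0]
    rw [hsum]
    have hcong : ∀ m ∈ Finset.Ioo i j, d m * w'' m = a m * v m * (-(a i * v j)⁻¹) := by
      intro m hm
      rw [Finset.mem_Ioo] at hm
      have hmj : ¬ m = j := ne_of_lt hm.2
      have hmi : ¬ m = i := (ne_of_lt hm.1).symm
      rw [hd_def, hw''_def]
      simp only [hmj, if_false, hm.1, hm.2, and_self, if_true, hmi, not_false_iff]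
      field_simp
    rw [Finset.sum_congr rfl hcong, ← Finset.sum_mul, ← hβ]
    ring
  have hrow_d : d ᵥ* T = d + (v j * a i)⁻¹ • (v j • a) + (β * (a i * v j)⁻¹) • ej := by
    rw [hT_def, Matrix.vecMul_sub, Matrix.vecMul_add, Matrix.vecMul_add, Matrix.vecMul_one,
      aux_vecMul_vecMulVec, aux_vecMul_vecMulVec, aux_vecMul_vecMulVec]
    have h1 : d ⬝ᵥ ei = 0 := by
      rw [hei_def, dotProduct_single, mul_one]
      simp [hd_def, hij', lt_irrefl]
    have h2 : d ⬝ᵥ ej = (v j * a i)⁻¹ := by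
      rw [hej_def, dotProduct_single, mul_one]
      simp [hd_def]
    rw [h1, h2, hdotdw]
    simp only [zero_smul, add_zero, neg_smul, sub_neg_eq_add]
  -- the product expansion
  have hexp : b₁ * T = T + vecMulVec ei (d ᵥ* T) + vecMulVec w (ej ᵥ* T) := by
    rw [hb₁_def, add_mul, add_mul, one_mul, aux_vecMulVec_mul, aux_vecMulVec_mul]
  -- the main identity
  have hmain : 1 + Matrix.vecMulVec v a = b₁ * T := by
    rw [hexp, hrow_ej, hrow_d]
    ext k l
    simp only [Matrix.add_apply, Matrix.sub_apply, Matrix.one_apply, Matrix.vecMulVec_apply,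
      Pi.add_apply, Pi.smul_apply, smul_eq_mul]
    rw [hTapp]
    simp only [hd_def, hp'_def, hw_def, hei_def, hej_def, Pi.single_apply]
    by_cases hki : k = i
    · rw [hki]
      simp only [if_pos rfl, if_true, hij', if_neg hij', if_neg (fun h : (i:Fin n) = j => hij' h),
        not_true, and_false, if_false, if_pos hij]
      by_cases hlj : l = j
      · rw [hlj]
        simp only [if_pos rfl, if_true, if_neg hji', lt_irrefl, and_false, if_false, if_neg hij']
        rw [mul_comm (v j) (a i)]
        field_simp
        linear_combination (-1 : F) * key
      · simp only [hlj, if_false]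
        by_cases hli : l = i
        · rw [hli]
          simp only [if_pos rfl, if_true, lt_irrefl, false_and, and_false, if_false, if_neg hij']
          field_simp
          ring
        · have h1 : ¬ i = l := fun h => hli h.symm
          simp only [hli, if_false, h1, mul_zero, mul_one, add_zero, zero_add]
          rcases lt_trichotomy l i with h | h | h
          · have ha0 : a l = 0 := hafirst l h
            have h2 : ¬ i < l := not_lt_of_gt h
            have h3 : ¬ j < l := not_lt_of_gt (lt_trans h hij)
            simp [ha0, h2, h3]
          · exact absurd h hli
          · rcases lt_trichotomy l j with h2 | h2 | h2
            · have h3 : ¬ j < l := not_lt_of_gt h2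
              simp only [h3, if_false, h, h2, and_self, if_true]
              field_simp
              ring
            · exact absurd h2 hlj
            · have h3 : ¬ l < j := not_lt_of_gt h2
              have h4 : j < l := h2
              simp only [h4, if_true, h3, and_false, if_false]
              field_simp
              ring
    · by_cases hkj : k = j
      · rw [hkj]
        simp only [hki, if_neg hji', if_pos rfl, lt_irrefl, false_and, and_false, if_false,
          one_mul, zero_mul, hkj]
        simp [hji', lt_irrefl]
      · simp only [hki, hkj, if_false, zero_mul, mul_zero, add_zero, sub_zero, zero_add,
          not_false_iff, and_true]
        by_cases hkj2 : k < j
        · simp only [hkj2, if_true]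
          by_cases hlj : l = j
          · have hkl : ¬ k = l := fun h => hkj (h.trans hlj)
            simp only [hlj, hkl, hkj, if_true, if_false]
            field_simp
            ring
          · by_cases hkl : k = l <;> simp only [hlj, hkl, if_true, if_false] <;>
              field_simp <;> ring
        · have hv0 : v k = 0 := by
            have : j < k := lt_of_le_of_ne (not_lt.mp hkj2) (fun h => hkj h.symm)
            exact hvlast k this
          simp [hkj2, hv0]
  -- conclusion
  have hfinal : 1 + Matrix.vecMulVec v a = b₁ * (Equiv.swap i j).permMatrix F * b₂ := by
    rw [hb₂_def, mul_assoc, ← mul_assoc ((Equiv.swap i j).permMatrix F), hswapsq, one_mul]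
    exact hmain
  exact ⟨b₁, hb₁mem, b₂, hb₂mem, hfinal⟩
end

section
/- Let F be a finite field with q = |F| elements and n ≥ 2. For every pair 1 ≤ i < j ≤ n, the number of transvections lying in the Bruhat cell B τ_{ij} B, where τ_{ij} is the permutation matrix of the transposition (i j), equals (q − 1) · q^{n − 2 + (j − i)}; equivalently it equals (q − 1) q^{n−1−(j−i)} q^{I((i j))}, where I((i j)) = 2(j − i) − 1 is the number of inversions of the transposition (i j). -/
/-- The set of transvections: matrices of the form `I + v aᵀ` with `a, v` nonzero vectors
satisfying `aᵀ v = 0`. -/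
def transvections (n : ℕ) (F : Type*) [Field F] : Set (Matrix (Fin n) (Fin n) F) :=
  {M | ∃ a v : Fin n → F, a ≠ 0 ∧ v ≠ 0 ∧ (∑ i, a i * v i) = 0 ∧
    M = 1 + Matrix.vecMulVec v a}

section ZB
variable {F : Type*} [Field F] {n : ℕ}

/-- Lower-left block of `M` with rows `≥ r` and columns `≤ c` is zero. -/
def Zb (M : Matrix (Fin n) (Fin n) F) (r c : Fin n) : Prop :=
  ∀ r' c', r ≤ r' → c' ≤ c → M r' c' = 0

lemma Zb_mul_left {b N : Matrix (Fin n) (Fin n) F} (hb : b.BlockTriangular id) {r c : Fin n}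
    (h : Zb N r c) : Zb (b * N) r c := by
  intro r' c' hr hc
  rw [Matrix.mul_apply]
  apply Finset.sum_eq_zero
  intro k _
  rcases lt_or_ge k r' with hk | hk
  · rw [hb hk, zero_mul]
  · rw [h k c' (hr.trans hk) hc, mul_zero]

lemma Zb_mul_right {b N : Matrix (Fin n) (Fin n) F} (hb : b.BlockTriangular id) {r c : Fin n}
    (h : Zb N r c) : Zb (N * b) r c := by
  intro r' c' hr hc
  rw [Matrix.mul_apply]
  apply Finset.sum_eq_zero
  intro k _
  rcases lt_or_ge c' k with hk | hk
  · rw [hb hk, mul_zero]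
  · rw [h r' k hr (hk.trans hc), zero_mul]

lemma Zb_iff_of_mem_cell {M : Matrix (Fin n) (Fin n) F} {ω : Equiv.Perm (Fin n)}
    (hM : M ∈ bruhatCell n F ω) (r c : Fin n) : Zb M r c ↔ Zb (ω.permMatrix F) r c := by
  obtain ⟨b₁, ⟨hb₁t, hb₁d⟩, b₂, ⟨hb₂t, hb₂d⟩, rfl⟩ := hM
  haveI := b₁.invertibleOfIsUnitDet hb₁d
  haveI := b₂.invertibleOfIsUnitDet hb₂d
  constructor
  · intro h
    have e : ω.permMatrix F = b₁⁻¹ * (b₁ * ω.permMatrix F * b₂ * b₂⁻¹) := by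
      rw [Matrix.mul_nonsing_inv_cancel_right _ _ hb₂d,
        Matrix.nonsing_inv_mul_cancel_left _ _ hb₁d]
    rw [e]
    exact Zb_mul_left (Matrix.blockTriangular_inv_of_blockTriangular hb₁t)
      (Zb_mul_right (Matrix.blockTriangular_inv_of_blockTriangular hb₂t) h)
  · intro h
    rw [Matrix.mul_assoc]
    exact Zb_mul_left hb₁t (Zb_mul_right hb₂t h)
variable {F : Type*} [Field F] {n : ℕ}

lemma permMatrix_apply (ω : Equiv.Perm (Fin n)) (r c : Fin n) :
    (ω.permMatrix F) r c = if ω r = c then 1 else 0 := by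
  rw [Equiv.Perm.permMatrix, PEquiv.toMatrix_toPEquiv_apply, Pi.single_apply]
  exact if_congr eq_comm rfl rfl

lemma transvection_entry (a v : Fin n → F) {r c : Fin n} (h : r ≠ c) :
    (1 + Matrix.vecMulVec v a) r c = v r * a c := by
  simp [Matrix.add_apply, Matrix.one_apply, h, Matrix.vecMulVec_apply]

lemma support_of_transvection_mem_cell {i j : Fin n} (hij : i < j) {a v : Fin n → F}
    (hM : (1 + Matrix.vecMulVec v a) ∈ bruhatCell n F (Equiv.swap i j)) :
    a i ≠ 0 ∧ (∀ k, k < i → a k = 0) ∧ v j ≠ 0 ∧ (∀ k, j < k → v k = 0) := by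
  have hiff := Zb_iff_of_mem_cell hM
  -- the cell's permutation matrix is nonzero at (j, i)
  have h1 : ¬ Zb ((Equiv.swap i j).permMatrix F) j i := by
    intro h
    have := h j i le_rfl le_rfl
    rw [permMatrix_apply, Equiv.swap_apply_right, if_pos rfl] at this
    exact one_ne_zero this
  have h2 : ¬ Zb (1 + Matrix.vecMulVec v a) j i := fun h => h1 ((hiff j i).mp h)
  simp only [Zb, not_forall] at h2
  obtain ⟨r₀, c₀, hr₀, hc₀, hne⟩ := h2
  have hc₀r₀ : c₀ < r₀ := lt_of_le_of_lt hc₀ (lt_of_lt_of_le hij hr₀)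
  rw [transvection_entry a v (ne_of_gt hc₀r₀)] at hne
  have hvr₀ : v r₀ ≠ 0 := left_ne_zero_of_mul hne
  have hac₀ : a c₀ ≠ 0 := right_ne_zero_of_mul hne
  -- helper: lower-left entries strictly outside position (j,i) vanish
  have helper : ∀ r' c' : Fin n, c' ≤ i → j ≤ r' → (j < r' ∨ c' < i) → v r' * a c' = 0 := by
    intro r' c' hc' hr' hstrict
    by_contra hne'
    have hcr : c' < r' := lt_of_le_of_lt hc' (lt_of_lt_of_le hij hr')
    have hz : ¬ Zb (1 + Matrix.vecMulVec v a) r' c' := by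
      intro h
      have := h r' c' le_rfl le_rfl
      rw [transvection_entry a v (ne_of_gt hcr)] at this
      exact hne' this
    have hz' : ¬ Zb ((Equiv.swap i j).permMatrix F) r' c' := fun h => hz ((hiff r' c').mpr h)
    simp only [Zb, not_forall] at hz'
    obtain ⟨r'', c'', hr'', hc'', hne''⟩ := hz'
    rw [permMatrix_apply] at hne''
    have hsw : Equiv.swap i j r'' = c'' := by
      by_contra hcon; rw [if_neg hcon] at hne''; exact hne'' rfl
    rcases eq_or_ne r'' i with rfl | hri
    · exact absurd (le_trans hr' hr'') (not_le.mpr hij)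
    rcases eq_or_ne r'' j with hj | hrj
    · -- r'' = j : then c'' = i, need c'' ≤ c' ≤ i with strictness contradiction
      rw [hj, Equiv.swap_apply_right] at hsw
      rcases hstrict with h' | h'
      · have h6 : r' ≤ j := hj ▸ hr''
        exact absurd (h'.trans_le h6) (lt_irrefl j)
      · have h5 : i ≤ c' := by rw [hsw]; exact hc''
        exact absurd (lt_of_le_of_lt h5 h') (lt_irrefl i)
    · rw [Equiv.swap_apply_of_ne_of_ne hri hrj] at hsw
      have h5 : r'' ≤ i := by rw [hsw]; exact le_trans hc'' hc'
      exact absurd h5 (not_le.mpr (lt_of_lt_of_le hij (le_trans hr' hr'')))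
  refine ⟨?_, ?_, ?_, ?_⟩
  · rcases lt_or_eq_of_le hc₀ with h | h
    · exact absurd (helper r₀ c₀ hc₀ hr₀ (Or.inr h)) hne
    · exact h ▸ hac₀
  · intro k hk
    have := helper r₀ k hk.le hr₀ (Or.inr hk)
    exact (mul_eq_zero.mp this).resolve_left hvr₀
  · rcases lt_or_eq_of_le hr₀ with h | h
    · exact absurd (helper r₀ c₀ hc₀ hr₀ (Or.inl h)) hne
    · exact h ▸ hvr₀
  · intro k hk
    have := helper k c₀ hc₀ hk.le (Or.inl hk)
    exact (mul_eq_zero.mp this).resolve_right hac₀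
lemma mem_cell_of_normalized {i j : Fin n} (hij : i < j) {a v : Fin n → F}
    (hai : a i = 1) (ha0 : ∀ k, k < i → a k = 0) (hvj : v j ≠ 0)
    (hv0 : ∀ k, j < k → v k = 0) (hsum : ∑ k, a k * v k = 0) :
    (1 + Matrix.vecMulVec v a) ∈ bruhatCell n F (Equiv.swap i j) := by
  set β := v j with hβdef
  have hβ : β ≠ 0 := hvj
  set S : F := ∑ k, (if i < k ∧ k < j then a k else 0) * v k with hSdef
  set w : Fin n → F := fun c =>
    if c = i then 1 else if c = j then -β⁻¹ * (1 + S + v i)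
    else if i < c ∧ c < j then a c else 0 with hwdef
  set u : Matrix (Fin n) (Fin n) F := Matrix.of fun r c =>
    if r = i then w c else if r < j ∧ c = j then -β⁻¹ * v r
    else if r = c then 1 else 0 with hudef
  -- the constraint, reorganized
  have hC : v i + S + a j * β = 0 := by
    have key : ∀ k : Fin n, a k * v k =
        (if k = i then v i else 0) +
          ((if k = j then a j * β else 0) + (if i < k ∧ k < j then a k else 0) * v k) := by
      intro k
      by_cases hki : k = i
      · rw [hki]; simp [hai, hij.ne, lt_irrefl]
      by_cases hkj : k = j
      · rw [hkj]; simp [hij.ne', lt_irrefl, hβdef]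
      rcases lt_trichotomy k i with h | h | h
      · have h2 : ¬ i < k := not_lt.mpr h.le
        simp [hki, hkj, h2, ha0 k h]
      · exact absurd h hki
      rcases lt_trichotomy k j with h2 | h2 | h2
      · simp [hki, hkj, h, h2]
      · exact absurd h2 hkj
      · rw [hv0 k h2]; simp [hki, hkj]
    have e1 := Finset.sum_congr rfl fun k (_ : k ∈ Finset.univ) => key k
    rw [hsum] at e1
    simp only [Finset.sum_add_distrib, Finset.sum_ite_eq', Finset.mem_univ, if_true] at e1
    rw [← hSdef] at e1
    linear_combination -e1
  -- rows of u
  have hu_i : ∀ c, u i c = w c := fun c => by simp [hudef]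
  have hu_j : ∀ c, u j c = if j = c then 1 else 0 := fun c => by
    simp [hudef, hij.ne', lt_self_iff_false]
  have hu_other : ∀ r c, r ≠ i → r ≠ j →
      u r c = if r < j ∧ c = j then -β⁻¹ * v r else if r = c then 1 else 0 := by
    intro r c hri hrj; simp [hudef, hri]
  -- u applied to v
  have huv : ∀ r, ∑ k, u r k * v k = if r = j then β else if r = i then -1 else 0 := by
    intro r
    by_cases hrj : r = j
    · rw [hrj, if_pos rfl]
      have key3 : ∀ k, u j k * v k = if k = j then v j else 0 := by
        intro k; rw [hu_j]
        by_cases hkj : k = j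
        · rw [hkj]; simp
        · simp [hkj, Ne.symm hkj]
      rw [Finset.sum_congr rfl fun k _ => key3 k]
      simp [Finset.sum_ite_eq', hβdef]
    by_cases hri : r = i
    · rw [hri, if_neg hij.ne, if_pos rfl]
      have key2 : ∀ k, u i k * v k =
          (if k = i then v i else 0) +
            ((if k = j then (-β⁻¹ * (1 + S + v i)) * β else 0) +
              (if i < k ∧ k < j then a k else 0) * v k) := by
        intro k
        rw [hu_i]
        by_cases hki : k = i
        · rw [hki]; simp [hwdef, hij.ne, lt_irrefl]
        by_cases hkj : k = j
        · rw [hkj]; simp [hwdef, hij.ne', lt_irrefl, hβdef]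
        · simp [hwdef, hki, hkj]
      rw [Finset.sum_congr rfl fun k _ => key2 k]
      simp only [Finset.sum_add_distrib, Finset.sum_ite_eq', Finset.mem_univ, if_true]
      rw [← hSdef]
      have hinv : β⁻¹ * β = 1 := inv_mul_cancel₀ hβ
      linear_combination (-(1 + S + v i)) * hinv
    · rw [if_neg hrj, if_neg hri]
      have key4 : ∀ k, u r k * v k =
          (if k = j then (if r < j then -β⁻¹ * v r * β else 0) else 0) +
            (if k = r then v r else 0) := by
        intro k
        rw [hu_other r k hri hrj]
        by_cases hkj : k = j
        · rw [hkj]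
          by_cases h : r < j
          · simp [h, hrj, Ne.symm hrj, hβdef]
          · simp [h, hrj, Ne.symm hrj]
        by_cases hkr : k = r
        · rw [hkr]; simp [hrj]
        · simp [hkj, hkr, Ne.symm hkr]
      rw [Finset.sum_congr rfl fun k _ => key4 k]
      simp only [Finset.sum_add_distrib, Finset.sum_ite_eq', Finset.mem_univ, if_true]
      rcases lt_trichotomy r j with h | h | h
      · rw [if_pos h]
        have hinv : β⁻¹ * β = 1 := inv_mul_cancel₀ hβ
        linear_combination (-(v r)) * hinv
      · exact absurd h hrj
      · rw [if_neg (asymm h), hv0 r h]; ring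
  -- entries of P = u * M
  have hP : ∀ r c, (u * (1 + Matrix.vecMulVec v a)) r c =
      u r c + (if r = j then β else if r = i then -1 else 0) * a c := by
    intro r c
    rw [Matrix.mul_apply]
    have key5 : ∀ k, u r k * ((1 + Matrix.vecMulVec v a) k c) =
        (if k = c then u r k else 0) + u r k * v k * a c := by
      intro k
      rw [Matrix.add_apply, Matrix.one_apply, Matrix.vecMulVec_apply]
      by_cases h : k = c
      · rw [h]; simp; ring
      · simp [h]; ring
    rw [Finset.sum_congr rfl fun k _ => key5 k, Finset.sum_add_distrib]
    simp only [Finset.sum_ite_eq', Finset.mem_univ, if_true]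
    rw [← Finset.sum_mul, huv]
  -- u is upper triangular with determinant 1
  have hut : u.BlockTriangular id := by
    intro r c h
    replace h : c < r := h
    by_cases hri : r = i
    · rw [hri, hu_i]
      rw [hri] at h
      have h1 : c ≠ i := ne_of_lt h
      have h2 : c ≠ j := ne_of_lt (h.trans hij)
      have h3 : ¬ i < c := not_lt.mpr h.le
      simp [hwdef, h1, h2, h3]
    by_cases hrj : r = j
    · rw [hrj, hu_j, if_neg]
      rw [hrj] at h
      exact (ne_of_gt h)
    · rw [hu_other r c hri hrj, if_neg, if_neg (ne_of_gt h)]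
      rintro ⟨h1, h2⟩
      rw [h2] at h
      exact absurd (h.trans h1) (lt_irrefl _)
  have hud : IsUnit u.det := by
    rw [Matrix.det_of_upperTriangular hut]
    have hdiag : ∀ k : Fin n, u k k = 1 := by
      intro k
      by_cases hki : k = i
      · rw [hki, hu_i]; simp [hwdef]
      by_cases hkj : k = j
      · rw [hkj, hu_j]; simp
      · rw [hu_other k k hki hkj]; simp [hkj]
    rw [Finset.prod_congr rfl fun k _ => hdiag k]
    simp
  -- b₂ is upper triangular
  have hb2t : ((u * (1 + Matrix.vecMulVec v a)).submatrix (Equiv.swap i j) id).BlockTriangular id := by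
    intro r c h
    replace h : c < r := h
    rw [Matrix.submatrix_apply, id_eq]
    by_cases hri : r = i
    · rw [hri] at h ⊢
      rw [Equiv.swap_apply_left, hP, hu_j]
      simp [(h.trans hij).ne', ha0 c h, hij.ne']
    by_cases hrj : r = j
    · rw [hrj] at h ⊢
      rw [Equiv.swap_apply_right, hP, hu_i, if_neg hij.ne, if_pos rfl]
      rcases lt_trichotomy c i with h1 | h1 | h1
      · have hw0 : w c = 0 := by
          simp [hwdef, ne_of_lt h1, ne_of_lt h, not_lt.mpr h1.le]
        rw [hw0, ha0 c h1]; ring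
      · have hw1 : w c = 1 := by simp [hwdef, h1]
        rw [hw1, h1, hai]; ring
      · have hwc : w c = a c := by
          simp [hwdef, ne_of_gt h1, ne_of_lt h, h1, h]
        rw [hwc]; ring
    · rw [Equiv.swap_apply_of_ne_of_ne hri hrj, hP, if_neg hrj, if_neg hri, zero_mul, add_zero,
        hu_other r c hri hrj, if_neg, if_neg (ne_of_gt h)]
      rintro ⟨h1, h2⟩
      rw [h2] at h
      exact absurd (h.trans h1) (lt_irrefl _)
  -- diagonal of b₂
  have hb2diag : ∀ k : Fin n,
      ((u * (1 + Matrix.vecMulVec v a)).submatrix (Equiv.swap i j) id) k k =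
        if k = i then β else if k = j then -β⁻¹ else 1 := by
    intro k
    rw [Matrix.submatrix_apply, id_eq]
    by_cases hki : k = i
    · rw [hki, Equiv.swap_apply_left, hP, hu_j]
      simp [hij.ne', hai]
    by_cases hkj : k = j
    · rw [hkj, Equiv.swap_apply_right, hP, hu_i, if_neg hij.ne, if_pos rfl]
      have hwj : w j = -β⁻¹ * (1 + S + v i) := by simp [hwdef, hij.ne']
      rw [hwj, if_neg hij.ne', if_pos rfl]
      have hinv : β⁻¹ * β = 1 := inv_mul_cancel₀ hβ
      linear_combination (-β⁻¹) * hC + a j * hinv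
    · rw [Equiv.swap_apply_of_ne_of_ne hki hkj, hP, if_neg hkj, if_neg hki, zero_mul, add_zero,
        hu_other k k hki hkj, if_neg, if_pos rfl, if_neg hki, if_neg hkj]
      rintro ⟨h1, h2⟩
      rw [h2] at h1
      exact absurd h1 (lt_irrefl _)
  have hb2d : IsUnit ((u * (1 + Matrix.vecMulVec v a)).submatrix (Equiv.swap i j) id).det := by
    rw [Matrix.det_of_upperTriangular hb2t, Finset.prod_congr rfl fun k _ => hb2diag k]
    rw [isUnit_iff_ne_zero]
    apply Finset.prod_ne_zero_iff.mpr
    intro k _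
    by_cases hki : k = i
    · simp [hki, hβ]
    by_cases hkj : k = j
    · simp [hki, hkj, hij.ne', hβ]
    · simp [hki, hkj]
  haveI := u.invertibleOfIsUnitDet hud
  refine ⟨u⁻¹, ⟨Matrix.blockTriangular_inv_of_blockTriangular hut,
      u.isUnit_nonsing_inv_det hud⟩,
    (u * (1 + Matrix.vecMulVec v a)).submatrix (Equiv.swap i j) id, ⟨hb2t, hb2d⟩, ?_⟩
  rw [Matrix.mul_assoc]
  have hcomp : (⇑(Equiv.swap i j) ∘ ⇑(Equiv.swap i j)) = id := by
    funext x; simp [Equiv.swap_apply_self]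
  have hperm : (Equiv.swap i j).permMatrix F *
      ((u * (1 + Matrix.vecMulVec v a)).submatrix (Equiv.swap i j) id) =
      u * (1 + Matrix.vecMulVec v a) := by
    rw [PEquiv.toMatrix_toPEquiv_mul, Matrix.submatrix_submatrix, hcomp, Function.comp_id,
      Matrix.submatrix_id_id]
  rw [hperm, Matrix.inv_mul_cancel_left_of_invertible]

/-- The parameter space of normalized transvection data. -/
def TPred (i j : Fin n) (p : (Fin n → F) × (Fin n → F)) : Prop :=
  p.1 i = 1 ∧ (∀ k, k < i → p.1 k = 0) ∧ p.2 j ≠ 0 ∧ (∀ k, j < k → p.2 k = 0) ∧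
    ∑ k, p.1 k * p.2 k = 0

lemma card_target_eq_card_param {i j : Fin n} (hij : i < j) :
    Nat.card {M : Matrix (Fin n) (Fin n) F |
        M ∈ transvections n F ∧ M ∈ bruhatCell n F (Equiv.swap i j)}
      = Nat.card {p : (Fin n → F) × (Fin n → F) // TPred i j p} := by
  symm
  have hmemT : ∀ p : {p : (Fin n → F) × (Fin n → F) // TPred i j p},
      (1 + Matrix.vecMulVec p.1.2 p.1.1) ∈ {M : Matrix (Fin n) (Fin n) F |
        M ∈ transvections n F ∧ M ∈ bruhatCell n F (Equiv.swap i j)} := by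
    rintro ⟨⟨a, v⟩, h1, h2, h3, h4, h5⟩
    dsimp only at h1 h2 h3 h4 h5 ⊢
    refine ⟨⟨a, v, ?_, ?_, h5, rfl⟩, mem_cell_of_normalized hij h1 h2 h3 h4 h5⟩
    · intro h0
      rw [h0] at h1
      simp at h1
    · intro h0
      rw [h0] at h3
      simp at h3
  apply Nat.card_eq_of_bijective (fun p => ⟨1 + Matrix.vecMulVec p.1.2 p.1.1, hmemT p⟩)
  constructor
  · rintro ⟨⟨a, v⟩, h1, h2, h3, h4, h5⟩ ⟨⟨a', v'⟩, h1', h2', h3', h4', h5'⟩ heq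
    dsimp only at h1 h2 h3 h4 h5 h1' h2' h3' h4' h5'
    simp only [Subtype.mk.injEq] at heq
    have heq2 : Matrix.vecMulVec v a = Matrix.vecMulVec v' a' := by
      have := add_left_cancel heq
      exact this
    have hv : v = v' := by
      funext r
      have := congrFun (congrFun heq2 r) i
      rwa [Matrix.vecMulVec_apply, Matrix.vecMulVec_apply, h1, h1', mul_one, mul_one] at this
    have ha : a = a' := by
      funext c
      have := congrFun (congrFun heq2 j) c
      rw [Matrix.vecMulVec_apply, Matrix.vecMulVec_apply, ← hv] at this
      exact mul_left_cancel₀ h3 this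
    simp [hv, ha]
  · rintro ⟨M, hMt, hMc⟩
    obtain ⟨a, v, ha, hv, hsum, rfl⟩ := hMt
    obtain ⟨hai, ha0, hvj, hv0⟩ := support_of_transvection_mem_cell hij hMc
    have hinv := inv_mul_cancel₀ hai
    refine ⟨⟨((fun k => (a i)⁻¹ * a k), (fun k => a i * v k)), hinv, ?_, ?_, ?_, ?_⟩, ?_⟩
    · intro k hk; show (a i)⁻¹ * a k = 0; rw [ha0 k hk, mul_zero]
    · exact mul_ne_zero hai hvj
    · intro k hk; show a i * v k = 0; rw [hv0 k hk, mul_zero]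
    · show ∑ k, ((a i)⁻¹ * a k) * (a i * v k) = 0
      rw [← hsum]
      apply Finset.sum_congr rfl
      intro k _
      linear_combination (a k * v k) * hinv
    · apply Subtype.ext
      show 1 + Matrix.vecMulVec _ _ = 1 + Matrix.vecMulVec v a
      congr 1
      funext r c
      rw [Matrix.vecMulVec_apply, Matrix.vecMulVec_apply]
      show (a i * v r) * ((a i)⁻¹ * a c) = v r * a c
      linear_combination (v r * a c) * hinv

lemma card_param_eq_card_param2 {i j : Fin n} (hij : i < j) :
    Nat.card {p : (Fin n → F) × (Fin n → F) // TPred i j p}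
      = Nat.card {p : (Fin n → F) × (Fin n → F) //
          (p.1 i = 1 ∧ ∀ k, k < i → p.1 k = 0) ∧
          (p.2 j ≠ 0 ∧ (∀ k, j < k → p.2 k = 0) ∧ p.2 i = 0)} := by
  apply Nat.card_congr
  have hsplit : ∀ (g : Fin n → F), ∑ k, g k = g i + ∑ k ∈ Finset.univ.erase i, g k :=
    fun g => (Finset.add_sum_erase _ g (Finset.mem_univ i)).symm
  refine ⟨fun p => ⟨(p.1.1, Function.update p.1.2 i 0), ?_⟩,
          fun q => ⟨(q.1.1, Function.update q.1.2 i (-(∑ k, q.1.1 k * q.1.2 k))), ?_⟩, ?_, ?_⟩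
  · obtain ⟨⟨a, v⟩, h1, h2, h3, h4, h5⟩ := p
    dsimp only at h1 h2 h3 h4 h5 ⊢
    refine ⟨⟨h1, h2⟩, ?_, ?_, ?_⟩
    · show Function.update v i 0 j ≠ 0
      rwa [Function.update_of_ne hij.ne' 0 v]
    · intro k hk
      show Function.update v i 0 k = 0
      rw [Function.update_of_ne (hij.trans hk).ne' 0 v]
      exact h4 k hk
    · exact Function.update_self i 0 v
  · obtain ⟨⟨a, w⟩, ⟨h1, h2⟩, h3, h4, h5⟩ := q
    dsimp only at h1 h2 h3 h4 h5 ⊢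
    refine ⟨h1, h2, ?_, ?_, ?_⟩
    · show Function.update w i (-(∑ k, a k * w k)) j ≠ 0
      rwa [Function.update_of_ne hij.ne']
    · intro k hk
      show Function.update w i (-(∑ k, a k * w k)) k = 0
      rw [Function.update_of_ne (hij.trans hk).ne']
      exact h4 k hk
    · show ∑ k, a k * Function.update w i (-(∑ k, a k * w k)) k = 0
      rw [hsplit (fun k => a k * Function.update w i (-(∑ k, a k * w k)) k)]
      simp only [Function.update_self, h1, one_mul]
      have he : ∑ k ∈ Finset.univ.erase i, a k * Function.update w i (-(∑ k, a k * w k)) k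
          = ∑ k ∈ Finset.univ.erase i, a k * w k := by
        apply Finset.sum_congr rfl
        intro k hk
        rw [Function.update_of_ne (Finset.mem_erase.mp hk).1]
      rw [he]
      have he2 : ∑ k ∈ Finset.univ.erase i, a k * w k = ∑ k, a k * w k := by
        rw [hsplit (fun k => a k * w k), h5, mul_zero, zero_add]
      rw [he2]; ring
  · rintro ⟨⟨a, v⟩, h1, h2, h3, h4, h5⟩
    dsimp only at h1 h2 h3 h4 h5 ⊢
    apply Subtype.ext
    simp only [Prod.mk.injEq]
    refine ⟨by trivial, ?_⟩
    show Function.update (Function.update v i 0) i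
        (-(∑ k, a k * Function.update v i 0 k)) = v
    rw [Function.update_idem]
    have hkey : ∑ k, a k * Function.update v i 0 k = -(v i) := by
      rw [hsplit (fun k => a k * Function.update v i 0 k)]
      simp only [Function.update_self, mul_zero, zero_add]
      have he : ∑ k ∈ Finset.univ.erase i, a k * Function.update v i 0 k
          = ∑ k ∈ Finset.univ.erase i, a k * v k := by
        apply Finset.sum_congr rfl
        intro k hk
        rw [Function.update_of_ne (Finset.mem_erase.mp hk).1]
      rw [he]
      have he2 : (0 : F) = v i + ∑ k ∈ Finset.univ.erase i, a k * v k := by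
        rw [← h5, hsplit (fun k => a k * v k), h1, one_mul]
      linear_combination -he2
    rw [hkey, neg_neg, Function.update_eq_self]
  · rintro ⟨⟨a, w⟩, ⟨h1, h2⟩, h3, h4, h5⟩
    dsimp only at h1 h2 h3 h4 h5 ⊢
    apply Subtype.ext
    simp only [Prod.mk.injEq]
    refine ⟨by trivial, ?_⟩
    show Function.update (Function.update w i _) i 0 = w
    rw [Function.update_idem, ← h5, Function.update_eq_self]

lemma card_aset [Fintype F] [DecidableEq F] (i : Fin n) :
    Nat.card {a : Fin n → F // a i = 1 ∧ ∀ k, k < i → a k = 0}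
      = Fintype.card F ^ (n - 1 - (i : ℕ)) := by
  have e1 : ∀ a : Fin n → F, (a i = 1 ∧ ∀ k, k < i → a k = 0) ↔
      (∀ k, a k ∈ (if k < i then ({0} : Finset F) else if k = i then {1} else Finset.univ)) := by
    intro a
    constructor
    · rintro ⟨h1, h2⟩ k
      rcases lt_trichotomy k i with h | h | h
      · rw [if_pos h]; exact Finset.mem_singleton.mpr (h2 k h)
      · rw [if_neg (by rw [h]; exact lt_irrefl i), if_pos h, h]
        exact Finset.mem_singleton.mpr h1
      · rw [if_neg (asymm h), if_neg (ne_of_gt h)]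
        exact Finset.mem_univ _
    · intro h
      constructor
      · have := h i
        rw [if_neg (lt_irrefl i), if_pos rfl] at this
        exact Finset.mem_singleton.mp this
      · intro k hk
        have := h k
        rw [if_pos hk] at this
        exact Finset.mem_singleton.mp this
  rw [Nat.card_congr (Equiv.subtypeEquivRight (fun a =>
    (e1 a).trans (Fintype.mem_piFinset (f := a)).symm))]
  rw [Nat.card_eq_finsetCard, Fintype.card_piFinset]
  have e2 : ∀ k : Fin n,
      ((if k < i then ({0} : Finset F) else if k = i then {1} else Finset.univ)).card
        = if i < k then Fintype.card F else 1 := by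
    intro k
    rcases lt_trichotomy k i with h | h | h
    · rw [if_pos h, if_neg (asymm h), Finset.card_singleton]
    · rw [if_neg (by rw [h]; exact lt_irrefl i), if_pos h, if_neg (by rw [h]; exact lt_irrefl i),
        Finset.card_singleton]
    · rw [if_neg (asymm h), if_neg (ne_of_gt h), if_pos h, Finset.card_univ]
  rw [Finset.prod_congr rfl fun k _ => e2 k, Finset.prod_ite, Finset.prod_const,
    Finset.prod_const, one_pow, mul_one]
  congr 1
  have : Finset.univ.filter (fun k => i < k) = Finset.Ioi i := by
    ext k; simp
  rw [this, Fin.card_Ioi]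

lemma card_wset [Fintype F] [DecidableEq F] {i j : Fin n} (hij : i < j) :
    Nat.card {w : Fin n → F // w j ≠ 0 ∧ (∀ k, j < k → w k = 0) ∧ w i = 0}
      = (Fintype.card F - 1) * Fintype.card F ^ ((j : ℕ) - 1) := by
  have e1 : ∀ w : Fin n → F, (w j ≠ 0 ∧ (∀ k, j < k → w k = 0) ∧ w i = 0) ↔
      (∀ k, w k ∈ (if k = i then ({0} : Finset F) else if k = j then Finset.univ.erase 0
        else if j < k then {0} else Finset.univ)) := by
    intro w
    constructor
    · rintro ⟨h1, h2, h3⟩ k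
      by_cases hki : k = i
      · rw [if_pos hki, hki]; exact Finset.mem_singleton.mpr h3
      by_cases hkj : k = j
      · rw [if_neg hki, if_pos hkj, hkj]
        exact Finset.mem_erase.mpr ⟨h1, Finset.mem_univ _⟩
      by_cases hjk : j < k
      · rw [if_neg hki, if_neg hkj, if_pos hjk]
        exact Finset.mem_singleton.mpr (h2 k hjk)
      · rw [if_neg hki, if_neg hkj, if_neg hjk]
        exact Finset.mem_univ _
    · intro h
      refine ⟨?_, ?_, ?_⟩
      · have := h j
        rw [if_neg hij.ne', if_pos rfl] at this
        exact (Finset.mem_erase.mp this).1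
      · intro k hk
        have := h k
        rw [if_neg (hij.trans hk).ne', if_neg (ne_of_gt hk), if_pos hk] at this
        exact Finset.mem_singleton.mp this
      · have := h i
        rw [if_pos rfl] at this
        exact Finset.mem_singleton.mp this
  rw [Nat.card_congr (Equiv.subtypeEquivRight (fun w =>
    (e1 w).trans (Fintype.mem_piFinset (f := w)).symm))]
  rw [Nat.card_eq_finsetCard, Fintype.card_piFinset]
  rw [← Finset.mul_prod_erase Finset.univ _ (Finset.mem_univ j)]
  have ej : ((if j = i then ({0} : Finset F) else if j = j then Finset.univ.erase 0
      else if j < j then {0} else Finset.univ)).card = Fintype.card F - 1 := by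
    rw [if_neg hij.ne', if_pos rfl, Finset.card_erase_of_mem (Finset.mem_univ _),
      Finset.card_univ]
  rw [ej]
  congr 1
  have e2 : ∀ k ∈ Finset.univ.erase j,
      ((if k = i then ({0} : Finset F) else if k = j then Finset.univ.erase 0
        else if j < k then {0} else Finset.univ)).card
        = if k < j ∧ k ≠ i then Fintype.card F else 1 := by
    intro k hk
    have hkj : k ≠ j := (Finset.mem_erase.mp hk).1
    by_cases hki : k = i
    · rw [if_pos hki, Finset.card_singleton, if_neg]
      rintro ⟨-, h⟩; exact h hki
    rcases lt_trichotomy k j with h | h | h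
    · rw [if_neg hki, if_neg hkj, if_neg (asymm h), Finset.card_univ, if_pos ⟨h, hki⟩]
    · exact absurd h hkj
    · rw [if_neg hki, if_neg hkj, if_pos h, Finset.card_singleton, if_neg]
      rintro ⟨h', -⟩; exact absurd (h.trans h') (lt_irrefl _)
  rw [Finset.prod_congr rfl e2, Finset.prod_ite, Finset.prod_const, Finset.prod_const,
    one_pow, mul_one]
  congr 1
  have e3 : (Finset.univ.erase j).filter (fun k => k < j ∧ k ≠ i) = (Finset.Iio j).erase i := by
    ext k
    simp only [Finset.mem_filter, Finset.mem_erase, Finset.mem_univ, true_and, and_true,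
      Finset.mem_Iio]
    constructor
    · rintro ⟨hkj, hklt, hki⟩; exact ⟨hki, hklt⟩
    · rintro ⟨hki, hklt⟩; exact ⟨ne_of_lt hklt, hklt, hki⟩
  rw [e3, Finset.card_erase_of_mem (Finset.mem_Iio.mpr hij), Fin.card_Iio]

end ZB

/-- Let `F` be a finite field with `q` elements and `n ≥ 2`.  For `i < j`
(here `0`-based indices in `Fin n`, corresponding to `1`-based indices `i+1 < j+1`), the
number of transvections in the Bruhat cell `B τ_{ij} B` of the transposition `(i j)` equals
`(q − 1) q^{n − 2 + (j − i)}`, equivalently `(q − 1) q^{n−1−(j−i)} q^{I((i j))}` where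
`I((i j)) = 2(j−i) − 1` is the number of inversions of the transposition. -/
theorem card_transvections_in_bruhatCell_swap
    (F : Type*) [Field F] [Fintype F] (n : ℕ) (hn : 2 ≤ n) (i j : Fin n) (hij : i < j) :
    Nat.card {M | M ∈ transvections n F ∧ M ∈ bruhatCell n F (Equiv.swap i j)}
        = (Fintype.card F - 1) * Fintype.card F ^ (n - 2 + ((j : ℕ) - (i : ℕ))) ∧
      Nat.card {M | M ∈ transvections n F ∧ M ∈ bruhatCell n F (Equiv.swap i j)}
        = (Fintype.card F - 1) * Fintype.card F ^ (n - 1 - ((j : ℕ) - (i : ℕ)))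
            * Fintype.card F ^ (2 * ((j : ℕ) - (i : ℕ)) - 1) := by
  haveI : DecidableEq F := Classical.decEq F
  have hjn : (j : ℕ) < n := j.isLt
  have hijn : (i : ℕ) < (j : ℕ) := hij
  have key : Nat.card {M | M ∈ transvections n F ∧ M ∈ bruhatCell n F (Equiv.swap i j)}
      = Fintype.card F ^ (n - 1 - (i : ℕ)) *
          ((Fintype.card F - 1) * Fintype.card F ^ ((j : ℕ) - 1)) := by
    rw [card_target_eq_card_param hij, card_param_eq_card_param2 hij,
      Nat.card_congr (Equiv.subtypeProdEquivProd
        (p := fun a : Fin n → F => a i = 1 ∧ ∀ k, k < i → a k = 0)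
        (q := fun w : Fin n → F => w j ≠ 0 ∧ (∀ k, j < k → w k = 0) ∧ w i = 0)),
      Nat.card_prod, card_aset, card_wset hij]
  constructor
  · rw [key, mul_left_comm, ← pow_add]
    congr 2
    omega
  · rw [key, mul_left_comm, ← pow_add, mul_assoc, ← pow_add]
    congr 2
    omega
end

section
/- Let F be a finite field with q = |F| elements and n ≥ 2. In the complex group algebra ℂ[GL_n(F)], let 𝟙_B = |B|⁻¹ ∑_{b∈B} b, for each ω ∈ S_n let T_ω = |B|⁻¹ ∑_{m ∈ BωB} m, and let D = ∑_{T∈𝒯} T be the sum of all transvections. Then D · 𝟙_B = ((n−1) q^{n−1} − [n−1]_q) · 𝟙_B + (q−1) ∑_{1 ≤ i < j ≤ n} q^{n−1−(j−i)} · T_{(i j)}, where (i j) ∈ S_n is the transposition of i and j. -/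
/-- The Borel subgroup of `GL_n(F)`: invertible matrices (units of the matrix ring) whose
underlying matrix is upper triangular. -/
def borelU (n : ℕ) (F : Type*) [Field F] : Set (Matrix (Fin n) (Fin n) F)ˣ :=
  {b | Matrix.BlockTriangular (b : Matrix (Fin n) (Fin n) F) id}

/-- The set of transvections in `GL_n(F)`: invertible matrices of the form `I + v aᵀ` with
`a, v` nonzero and `aᵀ v = 0`. -/
def transvectionsU (n : ℕ) (F : Type*) [Field F] : Set (Matrix (Fin n) (Fin n) F)ˣ :=
  {T | ∃ a v : Fin n → F, a ≠ 0 ∧ v ≠ 0 ∧ (∑ i, a i * v i) = 0 ∧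
    (T : Matrix (Fin n) (Fin n) F) = 1 + Matrix.vecMulVec v a}

/-- The Bruhat double coset `B ω B ⊆ GL_n(F)` of the permutation `ω ∈ S_n`. -/
def bruhatCellU (n : ℕ) (F : Type*) [Field F] (ω : Equiv.Perm (Fin n)) :
    Set (Matrix (Fin n) (Fin n) F)ˣ :=
  {m | ∃ b₁ ∈ borelU n F, ∃ b₂ ∈ borelU n F,
    (m : Matrix (Fin n) (Fin n) F) = (b₁ : Matrix (Fin n) (Fin n) F) * ω.permMatrix F * b₂}

/-- `𝟙_B = |B|⁻¹ ∑_{b ∈ B} b` in the complex group algebra `ℂ[GL_n(F)]`. -/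
noncomputable def oneB (n : ℕ) (F : Type*) [Field F] [Fintype F] :
    MonoidAlgebra ℂ (Matrix (Fin n) (Fin n) F)ˣ :=
  (Nat.card (borelU n F) : ℂ)⁻¹ •
    ∑ b ∈ (borelU n F).toFinite.toFinset, MonoidAlgebra.of ℂ _ b

/-- `T_ω = |B|⁻¹ ∑_{m ∈ BωB} m` in `ℂ[GL_n(F)]`. -/
noncomputable def heckeT (n : ℕ) (F : Type*) [Field F] [Fintype F] (ω : Equiv.Perm (Fin n)) :
    MonoidAlgebra ℂ (Matrix (Fin n) (Fin n) F)ˣ :=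
  (Nat.card (borelU n F) : ℂ)⁻¹ •
    ∑ m ∈ (bruhatCellU n F ω).toFinite.toFinset, MonoidAlgebra.of ℂ _ m

/-- `D = ∑_{T ∈ 𝒯} T`, the sum of all transvections in `ℂ[GL_n(F)]`. -/
noncomputable def transvectionSum (n : ℕ) (F : Type*) [Field F] [Fintype F] :
    MonoidAlgebra ℂ (Matrix (Fin n) (Fin n) F)ˣ :=
  ∑ T ∈ (transvectionsU n F).toFinite.toFinset, MonoidAlgebra.of ℂ _ T

set_option linter.unusedSectionVars false

open Matrix Finset

namespace S8
open scoped Classical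
set_option linter.dupNamespace false

variable {n : ℕ} {F : Type*} [Field F]

/-- `vecMulVec v a * B = vecMulVec v (a ᵥ* B)` -/
theorem vmv_mul (v a : Fin n → F) (B : Matrix (Fin n) (Fin n) F) :
    vecMulVec v a * B = vecMulVec v (a ᵥ* B) := by
  ext k l
  simp only [Matrix.mul_apply, Matrix.vecMulVec_apply, Matrix.vecMul, dotProduct,
    Finset.mul_sum]
  exact Finset.sum_congr rfl fun m _ => by ring

theorem mul_vmv (v a : Fin n → F) (B : Matrix (Fin n) (Fin n) F) :
    B * vecMulVec v a = vecMulVec (B *ᵥ v) a := by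
  ext k l
  simp only [Matrix.mul_apply, Matrix.vecMulVec_apply, Matrix.mulVec, dotProduct,
    Finset.sum_mul]
  exact Finset.sum_congr rfl fun m _ => by ring

theorem vmv_mul_vmv (v a w b : Fin n → F) :
    vecMulVec v a * vecMulVec w b = (∑ k, a k * w k) • vecMulVec v b := by
  ext k l
  simp only [Matrix.mul_apply, Matrix.vecMulVec_apply, Matrix.smul_apply, smul_eq_mul,
    Finset.sum_mul]
  exact Finset.sum_congr rfl fun m _ => by ring

theorem vecMul_one_add_vmv (x v a : Fin n → F) :
    x ᵥ* (1 + vecMulVec v a) = x + (∑ k, x k * v k) • a := by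
  ext l
  simp only [Matrix.vecMul, dotProduct, Matrix.add_apply, Matrix.one_apply,
    Matrix.vecMulVec_apply, Pi.add_apply, Pi.smul_apply, smul_eq_mul, mul_add,
    Finset.sum_add_distrib, Finset.sum_mul]
  congr 1
  · simp [Finset.sum_ite_eq' Finset.univ l x, mul_comm]
  · exact Finset.sum_congr rfl fun m _ => by ring

theorem one_add_vmv_mulVec (z v a : Fin n → F) :
    (1 + vecMulVec v a) *ᵥ z = z + (∑ k, a k * z k) • v := by
  ext k
  simp only [Matrix.mulVec, dotProduct, Matrix.add_apply, Matrix.one_apply,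
    Matrix.vecMulVec_apply, Pi.add_apply, Pi.smul_apply, smul_eq_mul, add_mul,
    Finset.sum_add_distrib, Finset.mul_sum]
  congr 1
  · simp [Finset.sum_ite_eq Finset.univ k z]
  · rw [Finset.sum_mul]
    exact Finset.sum_congr rfl fun m _ => by ring

/-- transvection-type unit `1 + v aᵀ`, `aᵀ v = 0`. -/
def tUnit (v a : Fin n → F) (h : ∑ k, a k * v k = 0) : (Matrix (Fin n) (Fin n) F)ˣ where
  val := 1 + vecMulVec v a
  inv := 1 - vecMulVec v a
  val_inv := by
    have h2 : vecMulVec v a * vecMulVec v a = 0 := by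
      rw [vmv_mul_vmv, h, zero_smul]
    have : (1 + vecMulVec v a) * (1 - vecMulVec v a)
        = 1 - vecMulVec v a * vecMulVec v a := by noncomm_ring
    rw [this, h2, sub_zero]
  inv_val := by
    have h2 : vecMulVec v a * vecMulVec v a = 0 := by
      rw [vmv_mul_vmv, h, zero_smul]
    have : (1 - vecMulVec v a) * (1 + vecMulVec v a)
        = 1 - vecMulVec v a * vecMulVec v a := by noncomm_ring
    rw [this, h2, sub_zero]

@[simp] theorem tUnit_val (v a : Fin n → F) (h) :
    ((tUnit v a h : (Matrix (Fin n) (Fin n) F)ˣ) : Matrix (Fin n) (Fin n) F)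
      = 1 + vecMulVec v a := rfl

@[simp] theorem tUnit_inv_val (v a : Fin n → F) (h) :
    (((tUnit v a h)⁻¹ : (Matrix (Fin n) (Fin n) F)ˣ) : Matrix (Fin n) (Fin n) F)
      = 1 - vecMulVec v a := rfl

/-- rank-one update unit, `1 + aᵀv ≠ 0`. -/
def roUnit (v a : Fin n → F) (h : (1 : F) + ∑ k, a k * v k ≠ 0) :
    (Matrix (Fin n) (Fin n) F)ˣ where
  val := 1 + vecMulVec v a
  inv := 1 - ((1 : F) + ∑ k, a k * v k)⁻¹ • vecMulVec v a
  val_inv := by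
    set t : F := ∑ k, a k * v k with ht
    have h2 : vecMulVec v a * vecMulVec v a = t • vecMulVec v a := by rw [vmv_mul_vmv]
    have expand : (1 + vecMulVec v a) * (1 - (1 + t)⁻¹ • vecMulVec v a)
        = 1 + vecMulVec v a - (1 + t)⁻¹ • vecMulVec v a
          - (1 + t)⁻¹ • (vecMulVec v a * vecMulVec v a) := by
      rw [mul_sub, mul_one, add_mul, one_mul, mul_smul_comm]
      abel
    rw [expand, h2, smul_smul, sub_sub, ← add_smul]
    have hc : (1 + t)⁻¹ + (1 + t)⁻¹ * t = 1 := by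
      field_simp
    rw [hc, one_smul, add_sub_cancel_right]
  inv_val := by
    set t : F := ∑ k, a k * v k with ht
    have h2 : vecMulVec v a * vecMulVec v a = t • vecMulVec v a := by rw [vmv_mul_vmv]
    have expand : (1 - (1 + t)⁻¹ • vecMulVec v a) * (1 + vecMulVec v a)
        = 1 + vecMulVec v a - (1 + t)⁻¹ • vecMulVec v a
          - (1 + t)⁻¹ • (vecMulVec v a * vecMulVec v a) := by
      rw [sub_mul, one_mul, mul_add, mul_one, smul_mul_assoc]
      abel
    rw [expand, h2, smul_smul, sub_sub, ← add_smul]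
    have hc : (1 + t)⁻¹ + (1 + t)⁻¹ * t = 1 := by
      field_simp
    rw [hc, one_smul, add_sub_cancel_right]

@[simp] theorem roUnit_val (v a : Fin n → F) (h) :
    ((roUnit v a h : (Matrix (Fin n) (Fin n) F)ˣ) : Matrix (Fin n) (Fin n) F)
      = 1 + vecMulVec v a := rfl

variable [Fintype F]

theorem conj_val (u T : (Matrix (Fin n) (Fin n) F)ˣ) (v a : Fin n → F)
    (hT : (T : Matrix (Fin n) (Fin n) F) = 1 + vecMulVec v a) :
    ((u⁻¹ * T * u : (Matrix (Fin n) (Fin n) F)ˣ) : Matrix (Fin n) (Fin n) F)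
      = 1 + vecMulVec ((u⁻¹ : (Matrix (Fin n) (Fin n) F)ˣ) *ᵥ v)
          (a ᵥ* (u : Matrix (Fin n) (Fin n) F)) := by
  have h1 : ((u⁻¹ : (Matrix (Fin n) (Fin n) F)ˣ) : Matrix (Fin n) (Fin n) F)
      * (u : Matrix (Fin n) (Fin n) F) = 1 := by
    rw [← Units.val_mul, inv_mul_cancel, Units.val_one]
  calc ((u⁻¹ * T * u : (Matrix (Fin n) (Fin n) F)ˣ) : Matrix (Fin n) (Fin n) F)
      = (↑u⁻¹ : Matrix (Fin n) (Fin n) F) * (1 + vecMulVec v a) * ↑u := by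
        rw [Units.val_mul, Units.val_mul, hT]
    _ = (↑u⁻¹ : Matrix (Fin n) (Fin n) F) * ↑u
        + (↑u⁻¹ : Matrix (Fin n) (Fin n) F) * vecMulVec v a * ↑u := by noncomm_ring
    _ = 1 + vecMulVec ((u⁻¹ : (Matrix (Fin n) (Fin n) F)ˣ) *ᵥ v) (a ᵥ* ↑u) := by
        rw [h1, mul_vmv, vmv_mul]

theorem conj_trace (u : (Matrix (Fin n) (Fin n) F)ˣ) (v a : Fin n → F)
    (h : ∑ k, a k * v k = 0) :
    ∑ k, (a ᵥ* (u : Matrix (Fin n) (Fin n) F)) k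
      * (((u⁻¹ : (Matrix (Fin n) (Fin n) F)ˣ) : Matrix (Fin n) (Fin n) F) *ᵥ v) k = 0 := by
  have : ∑ k, (a ᵥ* (u : Matrix (Fin n) (Fin n) F)) k
      * (((u⁻¹ : (Matrix (Fin n) (Fin n) F)ˣ) : Matrix (Fin n) (Fin n) F) *ᵥ v) k
      = (a ᵥ* (u : Matrix (Fin n) (Fin n) F)) ⬝ᵥ
        (((u⁻¹ : (Matrix (Fin n) (Fin n) F)ˣ) : Matrix (Fin n) (Fin n) F) *ᵥ v) := rfl
  rw [this, dotProduct_mulVec, vecMul_vecMul, ← Units.val_mul, mul_inv_cancel, Units.val_one,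
    vecMul_one]
  exact h


section Part2
variable {n : ℕ} {F : Type*} [Field F] [Fintype F]

theorem mem_borelU {b : (Matrix (Fin n) (Fin n) F)ˣ} :
    b ∈ borelU n F ↔ Matrix.BlockTriangular (b : Matrix (Fin n) (Fin n) F) id := Iff.rfl

theorem borel_one : (1 : (Matrix (Fin n) (Fin n) F)ˣ) ∈ borelU n F := by
  rw [mem_borelU, Units.val_one]
  exact Matrix.blockTriangular_one

theorem borel_mul {b b' : (Matrix (Fin n) (Fin n) F)ˣ} (hb : b ∈ borelU n F)
    (hb' : b' ∈ borelU n F) : b * b' ∈ borelU n F := by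
  rw [mem_borelU, Units.val_mul]
  exact Matrix.BlockTriangular.mul hb hb'

theorem borel_inv {b : (Matrix (Fin n) (Fin n) F)ˣ} (hb : b ∈ borelU n F) :
    b⁻¹ ∈ borelU n F := by
  haveI : Invertible (b : Matrix (Fin n) (Fin n) F) := b.invertible
  have h := Matrix.blockTriangular_inv_of_blockTriangular (mem_borelU.1 hb)
  rw [mem_borelU]
  rwa [← Matrix.coe_units_inv] at h

theorem borel_diag {b : (Matrix (Fin n) (Fin n) F)ˣ} (hb : b ∈ borelU n F) (k : Fin n) :
    (b : Matrix (Fin n) (Fin n) F) k k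
      * ((b⁻¹ : (Matrix (Fin n) (Fin n) F)ˣ) : Matrix (Fin n) (Fin n) F) k k = 1 := by
  have hinv := borel_inv hb
  have h1 : ((b * b⁻¹ : (Matrix (Fin n) (Fin n) F)ˣ) : Matrix (Fin n) (Fin n) F) k k = 1 := by
    rw [mul_inv_cancel, Units.val_one, Matrix.one_apply_eq]
  rw [Units.val_mul, Matrix.mul_apply] at h1
  
  rw [← h1]
  symm
  apply Finset.sum_eq_single k
  · intro m _ hm
    rcases lt_or_gt_of_ne hm with hlt | hgt
    · rw [hb (show id m < id k from hlt), zero_mul]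
    · rw [hinv (show id k < id m from hgt), mul_zero]
  · intro h; exact absurd (Finset.mem_univ k) h

theorem borel_diag_ne_zero {b : (Matrix (Fin n) (Fin n) F)ˣ} (hb : b ∈ borelU n F) (k : Fin n) :
    (b : Matrix (Fin n) (Fin n) F) k k ≠ 0 :=
  left_ne_zero_of_mul_eq_one (borel_diag hb k)

theorem borel_inv_diag_ne_zero {b : (Matrix (Fin n) (Fin n) F)ˣ} (hb : b ∈ borelU n F)
    (k : Fin n) :
    ((b⁻¹ : (Matrix (Fin n) (Fin n) F)ˣ) : Matrix (Fin n) (Fin n) F) k k ≠ 0 :=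
  right_ne_zero_of_mul_eq_one (borel_diag hb k)

theorem mulVec_supp_gt {B : Matrix (Fin n) (Fin n) F} (hB : Matrix.BlockTriangular B id)
    {j : Fin n} {v : Fin n → F} (hv : ∀ k, j < k → v k = 0) :
    ∀ k, j < k → (B *ᵥ v) k = 0 := by
  intro k hk
  simp only [Matrix.mulVec, dotProduct]
  apply Finset.sum_eq_zero
  intro m _
  rcases le_or_gt m j with hm | hm
  · rw [hB (show id m < id k from lt_of_le_of_lt hm hk), zero_mul]
  · rw [hv m hm, mul_zero]

theorem mulVec_supp_top {B : Matrix (Fin n) (Fin n) F} (hB : Matrix.BlockTriangular B id)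
    {j : Fin n} {v : Fin n → F} (hv : ∀ k, j < k → v k = 0) :
    (B *ᵥ v) j = B j j * v j := by
  simp only [Matrix.mulVec, dotProduct]
  apply Finset.sum_eq_single j
  · intro m _ hm
    rcases lt_or_gt_of_ne hm with hlt | hgt
    · rw [hB (show id m < id j from hlt), zero_mul]
    · rw [hv m hgt, mul_zero]
  · intro h; exact absurd (Finset.mem_univ j) h

theorem vecMul_supp_lt {B : Matrix (Fin n) (Fin n) F} (hB : Matrix.BlockTriangular B id)
    {i : Fin n} {a : Fin n → F} (ha : ∀ k, k < i → a k = 0) :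
    ∀ k, k < i → (a ᵥ* B) k = 0 := by
  intro l hl
  simp only [Matrix.vecMul, dotProduct]
  apply Finset.sum_eq_zero
  intro m _
  rcases lt_or_ge m i with hm | hm
  · rw [ha m hm, zero_mul]
  · rw [hB (show id l < id m from lt_of_lt_of_le hl hm), mul_zero]

theorem vecMul_supp_bot {B : Matrix (Fin n) (Fin n) F} (hB : Matrix.BlockTriangular B id)
    {i : Fin n} {a : Fin n → F} (ha : ∀ k, k < i → a k = 0) :
    (a ᵥ* B) i = a i * B i i := by
  simp only [Matrix.vecMul, dotProduct]
  apply Finset.sum_eq_single i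
  · intro m _ hm
    rcases lt_or_gt_of_ne hm with hlt | hgt
    · rw [ha m hlt, zero_mul]
    · rw [hB (show id i < id m from hgt), mul_zero]
  · intro h; exact absurd (Finset.mem_univ i) h

/-- transvections of "lower type": corner at `(j, i)`, lying in `B (i j) B`. -/
def lowSet (n : ℕ) (F : Type*) [Field F] (i j : Fin n) : Set (Matrix (Fin n) (Fin n) F)ˣ :=
  {T | ∃ v a : Fin n → F, (∀ k, k < i → a k = 0) ∧ a i ≠ 0 ∧ (∀ k, j < k → v k = 0) ∧ v j ≠ 0 ∧
    (∑ k, a k * v k) = 0 ∧ (T : Matrix (Fin n) (Fin n) F) = 1 + Matrix.vecMulVec v a}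

/-- transvections of "upper type": corner at `(i, j)`, lying in `B`. -/
def upSet (n : ℕ) (F : Type*) [Field F] (i j : Fin n) : Set (Matrix (Fin n) (Fin n) F)ˣ :=
  {T | ∃ v a : Fin n → F, (∀ k, k < j → a k = 0) ∧ a j ≠ 0 ∧ (∀ k, i < k → v k = 0) ∧ v i ≠ 0 ∧
    (∑ k, a k * v k) = 0 ∧ (T : Matrix (Fin n) (Fin n) F) = 1 + Matrix.vecMulVec v a}

theorem corner_le {M : Matrix (Fin n) (Fin n) F} {r c r' c' : Fin n}
    (h : M r c ≠ 0) (hr : ∀ k l, r' < k → M k l = 0) (hc : ∀ k l, l < c' → M k l = 0) :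
    r ≤ r' ∧ c' ≤ c := by
  constructor
  · by_contra hx
    exact h (hr r c (not_le.1 hx))
  · by_contra hx
    exact h (hc r c (not_le.1 hx))

theorem lowSet_corner {i j : Fin n} {T : (Matrix (Fin n) (Fin n) F)ˣ}
    (hT : T ∈ lowSet n F i j) :
    ((T : Matrix (Fin n) (Fin n) F) - 1) j i ≠ 0 ∧
      (∀ k l, j < k → ((T : Matrix (Fin n) (Fin n) F) - 1) k l = 0) ∧
      (∀ k l, l < i → ((T : Matrix (Fin n) (Fin n) F) - 1) k l = 0) := by
  obtain ⟨v, a, ha, hai, hv, hvj, -, hshape⟩ := hT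
  have hM : (T : Matrix (Fin n) (Fin n) F) - 1 = Matrix.vecMulVec v a := by
    rw [hshape]; abel
  rw [hM]
  refine ⟨?_, ?_, ?_⟩
  · simp only [Matrix.vecMulVec_apply]; exact mul_ne_zero hvj hai
  · intro k l hk; simp only [Matrix.vecMulVec_apply, hv k hk, zero_mul]
  · intro k l hl; simp only [Matrix.vecMulVec_apply, ha l hl, mul_zero]

theorem upSet_corner {i j : Fin n} {T : (Matrix (Fin n) (Fin n) F)ˣ}
    (hT : T ∈ upSet n F i j) :
    ((T : Matrix (Fin n) (Fin n) F) - 1) i j ≠ 0 ∧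
      (∀ k l, i < k → ((T : Matrix (Fin n) (Fin n) F) - 1) k l = 0) ∧
      (∀ k l, l < j → ((T : Matrix (Fin n) (Fin n) F) - 1) k l = 0) := by
  obtain ⟨v, a, ha, haj, hv, hvi, -, hshape⟩ := hT
  have hM : (T : Matrix (Fin n) (Fin n) F) - 1 = Matrix.vecMulVec v a := by
    rw [hshape]; abel
  rw [hM]
  refine ⟨?_, ?_, ?_⟩
  · simp only [Matrix.vecMulVec_apply]; exact mul_ne_zero hvi haj
  · intro k l hk; simp only [Matrix.vecMulVec_apply, hv k hk, zero_mul]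
  · intro k l hl; simp only [Matrix.vecMulVec_apply, ha l hl, mul_zero]

theorem lowSet_disj {i j i' j' : Fin n} {T : (Matrix (Fin n) (Fin n) F)ˣ}
    (h1 : T ∈ lowSet n F i j) (h2 : T ∈ lowSet n F i' j') : i = i' ∧ j = j' := by
  obtain ⟨hne, hr, hc⟩ := lowSet_corner h1
  obtain ⟨hne', hr', hc'⟩ := lowSet_corner h2
  obtain ⟨hj, hi⟩ := corner_le hne hr' hc'
  obtain ⟨hj', hi'⟩ := corner_le hne' hr hc
  exact ⟨le_antisymm hi' hi, le_antisymm hj hj'⟩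

theorem upSet_disj {i j i' j' : Fin n} {T : (Matrix (Fin n) (Fin n) F)ˣ}
    (h1 : T ∈ upSet n F i j) (h2 : T ∈ upSet n F i' j') : i = i' ∧ j = j' := by
  obtain ⟨hne, hr, hc⟩ := upSet_corner h1
  obtain ⟨hne', hr', hc'⟩ := upSet_corner h2
  obtain ⟨hj, hi⟩ := corner_le hne hr' hc'
  obtain ⟨hj', hi'⟩ := corner_le hne' hr hc
  exact ⟨le_antisymm hj hj', le_antisymm hi' hi⟩

theorem low_up_disj {i j i' j' : Fin n} {T : (Matrix (Fin n) (Fin n) F)ˣ}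
    (hij : i < j) (hij' : i' < j')
    (h1 : T ∈ lowSet n F i j) (h2 : T ∈ upSet n F i' j') : False := by
  obtain ⟨hne, hr, hc⟩ := lowSet_corner h1
  obtain ⟨hne', hr', hc'⟩ := upSet_corner h2
  obtain ⟨hj, hi⟩ := corner_le hne hr' hc'
  exact absurd (lt_of_le_of_lt hj (lt_of_lt_of_le hij' hi)) (not_lt.2 (le_of_lt hij))

theorem lowSet_subset_trans {i j : Fin n} {T : (Matrix (Fin n) (Fin n) F)ˣ}
    (hT : T ∈ lowSet n F i j) : T ∈ transvectionsU n F := by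
  obtain ⟨v, a, ha, hai, hv, hvj, hsum, hshape⟩ := hT
  exact ⟨a, v, fun h => hai (by rw [h]; rfl), fun h => hvj (by rw [h]; rfl), hsum, hshape⟩

theorem upSet_subset_trans {i j : Fin n} {T : (Matrix (Fin n) (Fin n) F)ˣ}
    (hT : T ∈ upSet n F i j) : T ∈ transvectionsU n F := by
  obtain ⟨v, a, ha, haj, hv, hvi, hsum, hshape⟩ := hT
  exact ⟨a, v, fun h => haj (by rw [h]; rfl), fun h => hvi (by rw [h]; rfl), hsum, hshape⟩

theorem upSet_mem_borel {i j : Fin n} (hij : i < j) {T : (Matrix (Fin n) (Fin n) F)ˣ}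
    (hT : T ∈ upSet n F i j) : T ∈ borelU n F := by
  obtain ⟨v, a, ha, haj, hv, hvi, hsum, hshape⟩ := hT
  rw [mem_borelU, hshape]
  apply Matrix.BlockTriangular.add Matrix.blockTriangular_one
  intro k l hlt
  simp only [Matrix.vecMulVec_apply]
  rcases le_or_gt k i with hk | hk
  · rw [ha l (lt_of_lt_of_le (show (l:Fin n) < k from hlt) (le_trans hk (le_of_lt hij))), mul_zero]
  · rw [hv k hk, zero_mul]

theorem trans_split {T : (Matrix (Fin n) (Fin n) F)ˣ} (hT : T ∈ transvectionsU n F) :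
    (∃ i j, i < j ∧ T ∈ upSet n F i j) ∨ (∃ i j, i < j ∧ T ∈ lowSet n F i j) := by
  obtain ⟨a, v, ha0, hv0, hsum, hshape⟩ := hT
  have hsv : (Finset.univ.filter (fun k => v k ≠ 0)).Nonempty := by
    rcases Function.ne_iff.1 hv0 with ⟨k, hk⟩
    exact ⟨k, Finset.mem_filter.2 ⟨Finset.mem_univ k, hk⟩⟩
  have hsa : (Finset.univ.filter (fun k => a k ≠ 0)).Nonempty := by
    rcases Function.ne_iff.1 ha0 with ⟨k, hk⟩
    exact ⟨k, Finset.mem_filter.2 ⟨Finset.mem_univ k, hk⟩⟩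
  set j₀ := (Finset.univ.filter (fun k => v k ≠ 0)).max' hsv with hj₀
  set i₀ := (Finset.univ.filter (fun k => a k ≠ 0)).min' hsa with hi₀
  have hvj : v j₀ ≠ 0 := (Finset.mem_filter.1 ((Finset.univ.filter (fun k => v k ≠ 0)).max'_mem hsv)).2
  have hai : a i₀ ≠ 0 := (Finset.mem_filter.1 ((Finset.univ.filter (fun k => a k ≠ 0)).min'_mem hsa)).2
  have hvtop : ∀ k, j₀ < k → v k = 0 := by
    intro k hk
    by_contra hne
    exact absurd (Finset.le_max' _ k (Finset.mem_filter.2 ⟨Finset.mem_univ k, hne⟩)) (not_le.2 hk)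
  have habot : ∀ k, k < i₀ → a k = 0 := by
    intro k hk
    by_contra hne
    exact absurd (Finset.min'_le _ k (Finset.mem_filter.2 ⟨Finset.mem_univ k, hne⟩)) (not_le.2 hk)
  rcases lt_trichotomy i₀ j₀ with hlt | heq | hgt
  · exact Or.inr ⟨i₀, j₀, hlt, v, a, habot, hai, hvtop, hvj, hsum, hshape⟩
  · exfalso
    rw [Finset.sum_eq_single i₀ (fun m _ hm => by
      rcases lt_or_gt_of_ne hm with h1 | h1
      · rw [habot m h1, zero_mul]
      · rw [hvtop m (heq ▸ h1), mul_zero]) (fun h => absurd (Finset.mem_univ i₀) h)] at hsum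
    exact mul_ne_zero hai (heq ▸ hvj) hsum
  · exact Or.inl ⟨j₀, i₀, hgt, v, a, habot, hai, hvtop, hvj, hsum, hshape⟩

theorem permMatrix_apply (σ : Equiv.Perm (Fin n)) (k l : Fin n) :
    Equiv.Perm.permMatrix F σ k l = if σ k = l then 1 else 0 := by
  simp [Equiv.Perm.permMatrix, PEquiv.toMatrix_apply, Equiv.toPEquiv_apply, Option.mem_def]

theorem permMatrix_mul_apply (σ : Equiv.Perm (Fin n)) (B : Matrix (Fin n) (Fin n) F)
    (k l : Fin n) : (Equiv.Perm.permMatrix F σ * B) k l = B (σ k) l := by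
  rw [show Equiv.Perm.permMatrix F σ = σ.toPEquiv.toMatrix from rfl,
    PEquiv.toMatrix_toPEquiv_mul]
  rfl

theorem vecMul_permMatrix (σ : Equiv.Perm (Fin n)) (x : Fin n → F) (l : Fin n) :
    (x ᵥ* Equiv.Perm.permMatrix F σ) l = x (σ⁻¹ l) := by
  show (∑ m, x m * Equiv.Perm.permMatrix F σ m l) = x (σ⁻¹ l)
  rw [Finset.sum_eq_single (σ⁻¹ l)]
  · rw [permMatrix_apply]
    simp
  · intro m _ hm
    rw [permMatrix_apply, if_neg, mul_zero]
    intro h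
    exact hm (by rw [← h]; simp)
  · intro h; exact absurd (Finset.mem_univ _) h

theorem permMatrix_mulVec (σ : Equiv.Perm (Fin n)) (z : Fin n → F) (k : Fin n) :
    (Equiv.Perm.permMatrix F σ *ᵥ z) k = z (σ k) := by
  show (∑ m, Equiv.Perm.permMatrix F σ k m * z m) = z (σ k)
  rw [Finset.sum_eq_single (σ k)]
  · rw [permMatrix_apply, if_pos rfl, one_mul]
  · intro m _ hm
    rw [permMatrix_apply, if_neg (fun h => hm h.symm), zero_mul]
  · intro h; exact absurd (Finset.mem_univ _) h

theorem swap_permMatrix_mul_self (i j : Fin n) :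
    Equiv.Perm.permMatrix F (Equiv.swap i j) * Equiv.Perm.permMatrix F (Equiv.swap i j) = 1 := by
  ext k l
  rw [permMatrix_mul_apply, permMatrix_apply, Equiv.swap_apply_self, Matrix.one_apply]

/-- the permutation matrix of the transposition `(i j)` as a unit. -/
def swapUnit (i j : Fin n) : (Matrix (Fin n) (Fin n) F)ˣ where
  val := Equiv.Perm.permMatrix F (Equiv.swap i j)
  inv := Equiv.Perm.permMatrix F (Equiv.swap i j)
  val_inv := swap_permMatrix_mul_self i j
  inv_val := swap_permMatrix_mul_self i j

@[simp] theorem swapUnit_val (i j : Fin n) :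
    ((swapUnit i j : (Matrix (Fin n) (Fin n) F)ˣ) : Matrix (Fin n) (Fin n) F)
      = Equiv.Perm.permMatrix F (Equiv.swap i j) := rfl

@[simp] theorem swapUnit_inv_val (i j : Fin n) :
    (((swapUnit i j)⁻¹ : (Matrix (Fin n) (Fin n) F)ˣ) : Matrix (Fin n) (Fin n) F)
      = Equiv.Perm.permMatrix F (Equiv.swap i j) := rfl

end Part2

section Part3
variable {n : ℕ} {F : Type*} [Field F] [Fintype F]

/-- abbreviation for `GL_n(F)` as units of the matrix ring. -/
abbrev GLn (n : ℕ) (F : Type*) [Field F] := (Matrix (Fin n) (Fin n) F)ˣ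

theorem one_sub_vmv_eq_inv {v a : Fin n → F} (h : ∑ k, a k * v k = 0)
    {T : GLn n F} (hshape : (T : Matrix (Fin n) (Fin n) F) = 1 + Matrix.vecMulVec v a) :
    ((T⁻¹ : GLn n F) : Matrix (Fin n) (Fin n) F) = 1 - Matrix.vecMulVec v a := by
  have hval : (T : Matrix (Fin n) (Fin n) F) * (1 - Matrix.vecMulVec v a) = 1 := by
    rw [hshape]
    have h2 : Matrix.vecMulVec v a * Matrix.vecMulVec v a = 0 := by
      rw [vmv_mul_vmv, h, zero_smul]
    have : (1 + Matrix.vecMulVec v a) * (1 - Matrix.vecMulVec v a)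
        = 1 - Matrix.vecMulVec v a * Matrix.vecMulVec v a := by noncomm_ring
    rw [this, h2, sub_zero]
  calc ((T⁻¹ : GLn n F) : Matrix (Fin n) (Fin n) F)
      = ↑T⁻¹ * ((T : Matrix (Fin n) (Fin n) F) * (1 - Matrix.vecMulVec v a)) := by
        rw [hval, mul_one]
    _ = (((T⁻¹ * T : GLn n F)) : Matrix (Fin n) (Fin n) F) * (1 - Matrix.vecMulVec v a) := by
        rw [Units.val_mul, mul_assoc]
    _ = 1 - Matrix.vecMulVec v a := by rw [inv_mul_cancel, Units.val_one, one_mul]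

/-- the `a`-vector of the normal form of a lower transvection in `w B`. -/
def avec (i j : Fin n) (c : F) (x : Fin n → F) : Fin n → F :=
  fun k => if k = i then 1 else if k = j then c else x k

/-- the `v`-vector of the normal form of a lower transvection in `w B`. -/
def lvec (i j : Fin n) (c : F) (y : Fin n → F) : Fin n → F :=
  fun k => if k = i then -1 else if k = j then c⁻¹ else y k

theorem avec_self (i j : Fin n) (c : F) (x : Fin n → F) : avec i j c x i = 1 := by
  simp [avec]

theorem avec_snd {i j : Fin n} (hij : i ≠ j) (c : F) (x : Fin n → F) : avec i j c x j = c := by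
  simp [avec, hij.symm]

theorem avec_other {i j k : Fin n} (h1 : k ≠ i) (h2 : k ≠ j) (c : F) (x : Fin n → F) :
    avec i j c x k = x k := by
  simp [avec, h1, h2]

theorem lvec_self (i j : Fin n) (c : F) (y : Fin n → F) : lvec i j c y i = -1 := by
  simp [lvec]

theorem lvec_snd {i j : Fin n} (hij : i ≠ j) (c : F) (y : Fin n → F) : lvec i j c y j = c⁻¹ := by
  simp [lvec, hij.symm]

theorem lvec_other {i j k : Fin n} (h1 : k ≠ i) (h2 : k ≠ j) (c : F) (y : Fin n → F) :
    lvec i j c y k = y k := by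
  simp [lvec, h1, h2]

theorem av_trace {i j : Fin n} (hij : i < j) (c : Fˣ) {x y : Fin n → F}
    (hx : ∀ k ∉ Finset.Ioi j, x k = 0) (hy : ∀ k ∉ Finset.Iio i, y k = 0) :
    ∑ k, avec i j (c : F) x k * lvec i j (c : F) y k = 0 := by
  have hij' : i ≠ j := ne_of_lt hij
  rw [← Finset.sum_subset (Finset.subset_univ ({i, j} : Finset (Fin n)))]
  · rw [Finset.sum_pair hij']
    rw [avec_self, lvec_self, avec_snd hij', lvec_snd hij']
    rw [one_mul, mul_inv_cancel₀ (Units.ne_zero c)]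
    ring
  · intro k _ hk
    simp only [Finset.mem_insert, Finset.mem_singleton, not_or] at hk
    simp only [avec, lvec, if_neg hk.1, if_neg hk.2]
    rcases lt_or_ge j k with h | h
    · rw [hy k (by simp only [Finset.mem_Iio, not_lt]; exact le_of_lt (lt_trans hij h)), mul_zero]
    · rw [hx k (by simp only [Finset.mem_Ioi, not_lt]; exact h), zero_mul]

/-- normal form of lower-type transvections in the coset `w B`. -/
def phiU (i j : Fin n) (hij : i < j) (c : Fˣ) (x y : Fin n → F)
    (hx : ∀ k ∉ Finset.Ioi j, x k = 0) (hy : ∀ k ∉ Finset.Iio i, y k = 0) : GLn n F :=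
  tUnit (lvec i j (c : F) y) (avec i j (c : F) x) (av_trace hij c hx hy)

theorem phiU_mem_lowSet {i j : Fin n} (hij : i < j) (c : Fˣ) (x y : Fin n → F)
    (hx : ∀ k ∉ Finset.Ioi j, x k = 0) (hy : ∀ k ∉ Finset.Iio i, y k = 0) :
    phiU i j hij c x y hx hy ∈ lowSet n F i j := by
  refine ⟨lvec i j (c : F) y, avec i j (c : F) x, ?_, ?_, ?_, ?_, av_trace hij c hx hy, rfl⟩
  · intro k hk
    have h1 : k ≠ i := ne_of_lt hk
    have h2 : k ≠ j := ne_of_lt (lt_trans hk hij)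
    simp only [avec, if_neg h1, if_neg h2]
    exact hx k (by simp only [Finset.mem_Ioi, not_lt]; exact le_of_lt (lt_trans hk hij))
  · simp only [avec, if_pos rfl]; exact one_ne_zero
  · intro k hk
    have h1 : k ≠ i := ne_of_gt (lt_trans hij hk)
    have h2 : k ≠ j := ne_of_gt hk
    simp only [lvec, if_neg h1, if_neg h2]
    exact hy k (by simp only [Finset.mem_Iio, not_lt]; exact le_of_lt (lt_trans hij hk))
  · simp only [lvec, if_neg (ne_of_gt hij), if_pos rfl]
    exact inv_ne_zero (Units.ne_zero c)

theorem phiU_wB {i j : Fin n} (hij : i < j) (c : Fˣ) (x y : Fin n → F)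
    (hx : ∀ k ∉ Finset.Ioi j, x k = 0) (hy : ∀ k ∉ Finset.Iio i, y k = 0) :
    (phiU i j hij c x y hx hy)⁻¹ * swapUnit i j ∈ borelU n F := by
  rw [mem_borelU, Units.val_mul]
  have hval : (((phiU i j hij c x y hx hy)⁻¹ : GLn n F) : Matrix (Fin n) (Fin n) F)
      = 1 - Matrix.vecMulVec (lvec i j (c : F) y) (avec i j (c : F) x) := rfl
  rw [hval, swapUnit_val, sub_mul, one_mul, vmv_mul]
  intro k l hlt
  have hlk : l < k := hlt
  rw [Matrix.sub_apply, sub_eq_zero, Matrix.vecMulVec_apply, vecMul_permMatrix,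
    Equiv.swap_inv]
  by_cases hl : l = i
  · rw [hl, Equiv.swap_apply_left]
    have hik : i < k := hl ▸ hlk
    by_cases hk : k = j
    · rw [hk, permMatrix_apply, if_pos (Equiv.swap_apply_right i j),
        avec_snd (ne_of_lt hij), lvec_snd (ne_of_lt hij), inv_mul_cancel₀ (Units.ne_zero c)]
    · have h1 : Equiv.swap i j k ≠ i := fun h =>
        hk ((Equiv.swap i j).injective (h.trans (Equiv.swap_apply_right i j).symm))
      rw [permMatrix_apply, if_neg h1, avec_snd (ne_of_lt hij),
        lvec_other (ne_of_gt hik) hk,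
        hy k (by simp only [Finset.mem_Iio, not_lt]; exact le_of_lt hik), zero_mul]
  · by_cases hl2 : l = j
    · rw [hl2, Equiv.swap_apply_right]
      have hjk : j < k := hl2 ▸ hlk
      have hki : k ≠ i := ne_of_gt (lt_trans hij hjk)
      have hkj : k ≠ j := ne_of_gt hjk
      have h1 : Equiv.swap i j k ≠ j := fun h =>
        hki ((Equiv.swap i j).injective (h.trans (Equiv.swap_apply_left i j).symm))
      rw [permMatrix_apply, if_neg h1, avec_self, mul_one, lvec_other hki hkj,
        hy k (by simp only [Finset.mem_Iio, not_lt]; exact le_of_lt (lt_trans hij hjk))]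
    · rw [Equiv.swap_apply_of_ne_of_ne hl hl2]
      have h1 : Equiv.swap i j k ≠ l := by
        intro h
        rw [← Equiv.swap_apply_of_ne_of_ne hl hl2] at h
        exact (ne_of_gt hlk) ((Equiv.swap i j).injective h)
      rw [permMatrix_apply, if_neg h1, avec_other hl hl2]
      rcases lt_or_ge j l with h | h
      · have hki : k ≠ i := ne_of_gt (lt_trans (lt_trans hij h) hlk)
        have hkj : k ≠ j := ne_of_gt (lt_trans h hlk)
        rw [lvec_other hki hkj]
        rw [hy k (by simp only [Finset.mem_Iio, not_lt]
                     exact le_of_lt (lt_trans (lt_trans hij h) hlk)), zero_mul]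
      · rw [hx l (by simp only [Finset.mem_Ioi, not_lt]; exact h), mul_zero]

theorem phiU_inj {i j : Fin n} (hij : i < j) {c c' : Fˣ} {x y x' y' : Fin n → F}
    {hx hy hx' hy'}
    (h : phiU i j hij c x y hx hy = phiU i j hij c' x' y' hx' hy') :
    c = c' ∧ x = x' ∧ y = y' := by
  have hval : (1 : Matrix (Fin n) (Fin n) F) + Matrix.vecMulVec (lvec i j (c : F) y) (avec i j (c : F) x)
      = 1 + Matrix.vecMulVec (lvec i j (c' : F) y') (avec i j (c' : F) x') :=
    congrArg Units.val h
  have hM := add_left_cancel hval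
  have hv : ∀ k, lvec i j (c : F) y k = lvec i j (c' : F) y' k := by
    intro k
    have := congrFun (congrFun hM k) i
    rwa [Matrix.vecMulVec_apply, Matrix.vecMulVec_apply, avec_self, avec_self, mul_one,
      mul_one] at this
  have ha : ∀ l, avec i j (c : F) x l = avec i j (c' : F) x' l := by
    intro l
    have := congrFun (congrFun hM i) l
    rw [Matrix.vecMulVec_apply, Matrix.vecMulVec_apply, lvec_self, lvec_self, neg_one_mul,
      neg_one_mul] at this
    exact neg_injective this
  have hc : c = c' := by
    have := ha j
    rw [avec_snd (ne_of_lt hij), avec_snd (ne_of_lt hij)] at this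
    exact Units.ext this
  refine ⟨hc, funext fun k => ?_, funext fun k => ?_⟩
  · by_cases h1 : k = i
    · subst h1
      rw [hx k (by simp [Finset.mem_Ioi]; exact le_of_lt hij),
        hx' k (by simp [Finset.mem_Ioi]; exact le_of_lt hij)]
    · by_cases h2 : k = j
      · subst h2
        rw [hx k (by simp [Finset.mem_Ioi]), hx' k (by simp [Finset.mem_Ioi])]
      · have := ha k
        rwa [avec_other h1 h2, avec_other h1 h2] at this
  · by_cases h1 : k = i
    · subst h1
      rw [hy k (by simp [Finset.mem_Iio]), hy' k (by simp [Finset.mem_Iio])]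
    · by_cases h2 : k = j
      · subst h2
        rw [hy k (by simp [Finset.mem_Iio]; exact le_of_lt hij),
          hy' k (by simp [Finset.mem_Iio]; exact le_of_lt hij)]
      · have := hv k
        rwa [lvec_other h1 h2, lvec_other h1 h2] at this

theorem vmv_smul_cancel {α : F} (hα : α ≠ 0) (v a : Fin n → F) :
    Matrix.vecMulVec (α • v) (α⁻¹ • a) = Matrix.vecMulVec v a := by
  ext k l
  simp only [Matrix.vecMulVec_apply, Pi.smul_apply, smul_eq_mul]
  field_simp

theorem phiU_surj {i j : Fin n} (hij : i < j) {T : GLn n F} (hT : T ∈ lowSet n F i j)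
    (hBT : T⁻¹ * swapUnit i j ∈ borelU n F) :
    ∃ (c : Fˣ) (x y : Fin n → F) (hx : ∀ k ∉ Finset.Ioi j, x k = 0)
      (hy : ∀ k ∉ Finset.Iio i, y k = 0), T = phiU i j hij c x y hx hy := by
  obtain ⟨v, a, ha, hai, hv, hvj, hsum, hshape⟩ := hT
  have hTinv := one_sub_vmv_eq_inv hsum hshape
  have key : ∀ k l : Fin n, l < k →
      v k * a (Equiv.swap i j l) = (if Equiv.swap i j k = l then (1 : F) else 0) := by
    intro k l hlk
    have h0 := hBT (show id l < id k from hlk)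
    rw [Units.val_mul, hTinv, swapUnit_val, sub_mul, one_mul, vmv_mul, Matrix.sub_apply,
      Matrix.vecMulVec_apply, vecMul_permMatrix, Equiv.swap_inv, permMatrix_apply] at h0
    rw [← sub_eq_zero]
    rw [sub_eq_zero] at h0
    rw [← h0]
    ring_nf
  have f1 : v j * a j = 1 := by
    have := key j i hij
    rw [Equiv.swap_apply_left, if_pos (Equiv.swap_apply_right i j)] at this
    exact this
  have haj : a j ≠ 0 := right_ne_zero_of_mul (f1 ▸ one_ne_zero)
  have f2 : ∀ k, i < k → k ≠ j → v k = 0 := by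
    intro k hk hkj
    have := key k i hk
    rw [Equiv.swap_apply_left, if_neg (fun h => hkj
      ((Equiv.swap i j).injective (h.trans (Equiv.swap_apply_right i j).symm)))] at this
    exact (mul_eq_zero.1 this).resolve_right haj
  have f3 : ∀ l, l < j → l ≠ i → a l = 0 := by
    intro l hl hli
    have := key j l hl
    have hne : Equiv.swap i j j ≠ l := by
      rw [Equiv.swap_apply_right]
      exact fun h => hli h.symm
    rw [Equiv.swap_apply_of_ne_of_ne hli (ne_of_lt hl), if_neg hne] at this
    exact (mul_eq_zero.1 this).resolve_left hvj
  have f4 : a i * v i = -1 := by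
    have hsum' := hsum
    rw [← Finset.sum_subset (Finset.subset_univ ({i, j} : Finset (Fin n)))
      (fun k _ hk => by
        simp only [Finset.mem_insert, Finset.mem_singleton, not_or] at hk
        rcases lt_trichotomy k j with h | h | h
        · rw [f3 k h hk.1, zero_mul]
        · exact absurd h hk.2
        · rw [f2 k (lt_trans hij h) hk.2, mul_zero])] at hsum'
    rw [Finset.sum_pair (ne_of_lt hij), mul_comm (a j) (v j), f1] at hsum'
    linear_combination hsum'
  set α := a i with hαdef
  have hc1 : (α⁻¹ * a j) * (v j * α) = 1 := by
    calc (α⁻¹ * a j) * (v j * α) = (v j * a j) * (α⁻¹ * α) := by ring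
      _ = 1 := by rw [f1, inv_mul_cancel₀ hai, one_mul]
  have hc2 : (v j * α) * (α⁻¹ * a j) = 1 := by rw [mul_comm]; exact hc1
  refine ⟨⟨α⁻¹ * a j, v j * α, hc1, hc2⟩,
    (fun k => if j < k then α⁻¹ * a k else 0), (fun k => if k < i then α * v k else 0),
    fun k hk => if_neg (by simpa [Finset.mem_Ioi] using hk),
    fun k hk => if_neg (by simpa [Finset.mem_Iio] using hk), ?_⟩
  have ha' : avec i j (α⁻¹ * a j) (fun k => if j < k then α⁻¹ * a k else 0) = α⁻¹ • a := by
    funext l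
    simp only [Pi.smul_apply, smul_eq_mul]
    by_cases h1 : l = i
    · subst h1; rw [avec_self, inv_mul_cancel₀ hai]
    · by_cases h2 : l = j
      · subst h2; rw [avec_snd (ne_of_lt hij)]
      · rw [avec_other h1 h2]
        rcases lt_or_ge j l with h | h
        · rw [if_pos h]
        · rw [if_neg (not_lt.2 h), f3 l (lt_of_le_of_ne h h2) h1, mul_zero]
  have hv' : lvec i j (α⁻¹ * a j) (fun k => if k < i then α * v k else 0) = α • v := by
    funext k
    simp only [Pi.smul_apply, smul_eq_mul]
    by_cases h1 : k = i
    · subst h1; rw [lvec_self]; linear_combination -f4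
    · by_cases h2 : k = j
      · subst h2
        rw [lvec_snd (ne_of_lt hij), inv_eq_of_mul_eq_one_right hc1, mul_comm]
      · rw [lvec_other h1 h2]
        rcases lt_or_ge k i with h | h
        · rw [if_pos h]
        · rw [if_neg (not_lt.2 h), f2 k (lt_of_le_of_ne h (Ne.symm h1)) h2, mul_zero]
  apply Units.ext
  show (T : Matrix (Fin n) (Fin n) F) = _
  rw [hshape]
  show _ = (1 : Matrix (Fin n) (Fin n) F) + Matrix.vecMulVec _ _
  rw [hv', ha', vmv_smul_cancel hai]

end Part3

section Part4
variable {n : ℕ} {F : Type*} [Field F] [Fintype F]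

theorem single_dot (j : Fin n) (c : F) (w : Fin n → F) :
    ∑ k, (Pi.single j c : Fin n → F) k * w k = c * w j := by
  rw [Finset.sum_eq_single j]
  · rw [Pi.single_eq_same]
  · intro m _ hm
    rw [Pi.single_eq_of_ne hm, zero_mul]
  · intro h; exact absurd (Finset.mem_univ j) h

theorem dot_single (j : Fin n) (c : F) (w : Fin n → F) :
    ∑ k, w k * (Pi.single j c : Fin n → F) k = w j * c := by
  rw [Finset.sum_eq_single j]
  · rw [Pi.single_eq_same]
  · intro m _ hm
    rw [Pi.single_eq_of_ne hm, mul_zero]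
  · intro h; exact absurd (Finset.mem_univ j) h

theorem one_sub_vmv_mulVec (z v a : Fin n → F) :
    (1 - Matrix.vecMulVec v a) *ᵥ z = z - (∑ k, a k * z k) • v := by
  have h1 : (1 - Matrix.vecMulVec v a) *ᵥ z
      = (1 : Matrix (Fin n) (Fin n) F) *ᵥ z - Matrix.vecMulVec v a *ᵥ z := by
    rw [Matrix.sub_mulVec]
  rw [h1, Matrix.one_mulVec]
  congr 1
  ext k
  simp only [Matrix.mulVec, dotProduct, Matrix.vecMulVec_apply, Pi.smul_apply,
    smul_eq_mul, Finset.sum_mul]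
  exact Finset.sum_congr rfl fun m _ => by ring

theorem conj_mem_lowSet {i j : Fin n} {u T : GLn n F} (hu : u ∈ borelU n F)
    (hT : T ∈ lowSet n F i j) : u⁻¹ * T * u ∈ lowSet n F i j := by
  obtain ⟨v, a, ha, hai, hv, hvj, hsum, hshape⟩ := hT
  have huinv := borel_inv hu
  refine ⟨((u⁻¹ : GLn n F) : Matrix (Fin n) (Fin n) F) *ᵥ v,
    a ᵥ* (u : Matrix (Fin n) (Fin n) F), ?_, ?_, ?_, ?_,
    conj_trace u v a hsum, conj_val u T v a hshape⟩
  · exact vecMul_supp_lt (mem_borelU.1 hu) ha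
  · rw [vecMul_supp_bot (mem_borelU.1 hu) ha]
    exact mul_ne_zero hai (borel_diag_ne_zero hu i)
  · exact mulVec_supp_gt (mem_borelU.1 huinv) hv
  · rw [mulVec_supp_top (mem_borelU.1 huinv) hv]
    exact mul_ne_zero (borel_inv_diag_ne_zero hu j) hvj

theorem corner_decomp_eq {i j : Fin n} (hij : i < j) {c : F} (hc : c ≠ 0) :
    (1 : Matrix (Fin n) (Fin n) F)
      + Matrix.vecMulVec (Pi.single j 1 : Fin n → F) (c • (Pi.single i 1 : Fin n → F))
      = Equiv.Perm.permMatrix F (Equiv.swap i j)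
        + Matrix.vecMulVec
            ((c⁻¹ : F) • (Pi.single j 1 : Fin n → F) + (-c⁻¹ - 1) • (Pi.single i 1 : Fin n → F))
            (Pi.single j 1 : Fin n → F)
        + Matrix.vecMulVec
            ((Pi.single i 1 : Fin n → F) + (c - 1) • (Pi.single j 1 : Fin n → F))
            ((Pi.single i 1 : Fin n → F) + (c⁻¹ : F) • (Pi.single j 1 : Fin n → F)) := by
  have hne : i ≠ j := ne_of_lt hij
  have hne' : j ≠ i := Ne.symm hne
  ext k l
  simp only [Matrix.add_apply, Matrix.one_apply, Matrix.vecMulVec_apply, Pi.add_apply,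
    Pi.smul_apply, Pi.single_apply, smul_eq_mul, permMatrix_apply, Equiv.swap_apply_def]
  by_cases hk1 : k = i <;> by_cases hk2 : k = j <;> by_cases hl1 : l = i <;>
    by_cases hl2 : l = j <;> simp_all [eq_comm] <;> try field_simp <;> try ring

theorem corner_decomp {i j : Fin n} (hij : i < j) {c : F} (hc : c ≠ 0) :
    ∃ U₁ U₂ : GLn n F, U₁ ∈ borelU n F ∧ U₂ ∈ borelU n F ∧
      (1 : Matrix (Fin n) (Fin n) F)
        + Matrix.vecMulVec (Pi.single j 1 : Fin n → F) (c • (Pi.single i 1 : Fin n → F))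
        = (U₁ : Matrix (Fin n) (Fin n) F) * Equiv.Perm.permMatrix F (Equiv.swap i j)
          * (U₂ : Matrix (Fin n) (Fin n) F) := by
  have hne : i ≠ j := ne_of_lt hij
  set s₁ : Fin n → F :=
    (Pi.single i 1 : Fin n → F) + (c - 1) • (Pi.single j 1 : Fin n → F) with hs₁
  set s₂ : Fin n → F :=
    (c⁻¹ : F) • (Pi.single i 1 : Fin n → F) + (-c⁻¹ - 1) • (Pi.single j 1 : Fin n → F) with hs₂
  have htr₁ : (1 : F) + ∑ k, (Pi.single j 1 : Fin n → F) k * s₁ k ≠ 0 := by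
    rw [single_dot, one_mul, hs₁]
    simp only [Pi.add_apply, Pi.smul_apply, Pi.single_eq_same, Pi.single_eq_of_ne hne.symm,
      smul_eq_mul, mul_one, zero_add]
    intro h
    exact hc (by linear_combination h)
  have htr₂ : (1 : F) + ∑ k, (Pi.single j 1 : Fin n → F) k * s₂ k ≠ 0 := by
    rw [single_dot, one_mul, hs₂]
    simp only [Pi.add_apply, Pi.smul_apply, Pi.single_eq_same, Pi.single_eq_of_ne hne.symm,
      smul_eq_mul, mul_one, mul_zero, zero_add]
    intro h
    exact inv_ne_zero hc (by linear_combination -h)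
  refine ⟨roUnit s₁ (Pi.single j 1) htr₁, roUnit s₂ (Pi.single j 1) htr₂, ?_, ?_, ?_⟩
  · rw [mem_borelU, roUnit_val]
    apply Matrix.BlockTriangular.add Matrix.blockTriangular_one
    intro k l hlt
    rw [Matrix.vecMulVec_apply]
    by_cases hl : l = j
    · have hjk : j < k := by rw [← hl]; exact hlt
      have hki : k ≠ i := fun h => absurd (h ▸ hjk) (not_lt.2 (le_of_lt hij))
      have hkj : k ≠ j := ne_of_gt hjk
      rw [hl, hs₁]
      simp [Pi.single_eq_of_ne hki, Pi.single_eq_of_ne hkj]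
    · rw [Pi.single_eq_of_ne hl, mul_zero]
  · rw [mem_borelU, roUnit_val]
    apply Matrix.BlockTriangular.add Matrix.blockTriangular_one
    intro k l hlt
    rw [Matrix.vecMulVec_apply]
    by_cases hl : l = j
    · have hjk : j < k := by rw [← hl]; exact hlt
      have hki : k ≠ i := fun h => absurd (h ▸ hjk) (not_lt.2 (le_of_lt hij))
      have hkj : k ≠ j := ne_of_gt hjk
      rw [hl, hs₂]
      simp [Pi.single_eq_of_ne hki, Pi.single_eq_of_ne hkj]
    · rw [Pi.single_eq_of_ne hl, mul_zero]
  · have hu2W : (Pi.single j (1 : F)) ᵥ* Equiv.Perm.permMatrix F (Equiv.swap i j)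
        = Pi.single i 1 := by
      funext l
      rw [vecMul_permMatrix, Equiv.swap_inv]
      by_cases hl : l = i
      · rw [hl, Equiv.swap_apply_left, Pi.single_eq_same, Pi.single_eq_same]
      · rw [Pi.single_eq_of_ne hl]
        apply Pi.single_eq_of_ne
        intro h
        exact hl (((Equiv.swap i j).injective (h.trans (Equiv.swap_apply_left i j).symm)).symm ▸ rfl)
    have hWs₂ : Equiv.Perm.permMatrix F (Equiv.swap i j) *ᵥ s₂
        = (c⁻¹ : F) • (Pi.single j 1 : Fin n → F) + (-c⁻¹ - 1) • (Pi.single i 1 : Fin n → F) := by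
      funext k
      rw [permMatrix_mulVec, hs₂]
      simp only [Pi.add_apply, Pi.smul_apply, smul_eq_mul]
      by_cases hk : k = i
      · rw [hk, Equiv.swap_apply_left]
        simp [Pi.single_eq_same, Pi.single_eq_of_ne hne, Pi.single_eq_of_ne hne.symm] <;> ring
      · by_cases hk2 : k = j
        · rw [hk2, Equiv.swap_apply_right]
          simp [Pi.single_eq_same, Pi.single_eq_of_ne hne, Pi.single_eq_of_ne hne.symm] <;> ring
        · rw [Equiv.swap_apply_of_ne_of_ne hk hk2]
          simp [Pi.single_eq_of_ne hk, Pi.single_eq_of_ne hk2] <;> ring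
    have heiU₂ : (Pi.single i (1 : F)) ᵥ* ((roUnit s₂ (Pi.single j 1) htr₂ : GLn n F)
        : Matrix (Fin n) (Fin n) F)
        = (Pi.single i 1 : Fin n → F) + (c⁻¹ : F) • (Pi.single j 1 : Fin n → F) := by
      rw [roUnit_val, vecMul_one_add_vmv, single_dot, one_mul, hs₂]
      simp only [Pi.add_apply, Pi.smul_apply, Pi.single_eq_same, Pi.single_eq_of_ne hne,
        smul_eq_mul, mul_one, mul_zero, add_zero]
    symm
    calc (↑(roUnit s₁ (Pi.single j 1) htr₁) : Matrix (Fin n) (Fin n) F)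
          * Equiv.Perm.permMatrix F (Equiv.swap i j) * ↑(roUnit s₂ (Pi.single j 1) htr₂)
        = (Equiv.Perm.permMatrix F (Equiv.swap i j) + Matrix.vecMulVec s₁ (Pi.single i 1))
            * ↑(roUnit s₂ (Pi.single j 1) htr₂) := by
          rw [roUnit_val, add_mul, one_mul, vmv_mul, hu2W]
      _ = Equiv.Perm.permMatrix F (Equiv.swap i j)
            + Matrix.vecMulVec (Equiv.Perm.permMatrix F (Equiv.swap i j) *ᵥ s₂) (Pi.single j 1)
            + Matrix.vecMulVec s₁ (Pi.single i 1 ᵥ* ↑(roUnit s₂ (Pi.single j 1) htr₂)) := by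
          rw [add_mul, vmv_mul]
          congr 1
          rw [roUnit_val, mul_add, mul_one, mul_vmv]
      _ = (1 : Matrix (Fin n) (Fin n) F)
            + Matrix.vecMulVec (Pi.single j 1 : Fin n → F) (c • (Pi.single i 1 : Fin n → F)) := by
          rw [hWs₂, heiU₂]
          exact (corner_decomp_eq hij hc).symm

theorem lowSet_subset_cell {i j : Fin n} (hij : i < j) {T : GLn n F}
    (hT : T ∈ lowSet n F i j) : T ∈ bruhatCellU n F (Equiv.swap i j) := by
  obtain ⟨v, a, ha, hai, hv, hvj, hsum, hshape⟩ := hT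
  have hne : i ≠ j := ne_of_lt hij
  -- step 1 : E
  have htrE : (1 : F)
      + ∑ k, (Pi.single j 1 : Fin n → F) k * (v - (Pi.single j 1 : Fin n → F)) k ≠ 0 := by
    rw [single_dot, one_mul, Pi.sub_apply, Pi.single_eq_same]
    intro h
    exact hvj (by linear_combination h)
  set Eu : GLn n F := roUnit (v - (Pi.single j 1 : Fin n → F)) (Pi.single j 1) htrE with hEu
  have hEborel : Eu ∈ borelU n F := by
    rw [mem_borelU, hEu, roUnit_val]
    apply Matrix.BlockTriangular.add Matrix.blockTriangular_one
    intro k l hlt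
    rw [Matrix.vecMulVec_apply]
    by_cases hl : l = j
    · have hjk : j < k := by rw [← hl]; exact hlt
      rw [hl, Pi.sub_apply, hv k hjk, Pi.single_eq_of_ne (ne_of_gt hjk), sub_zero, zero_mul]
    · rw [Pi.single_eq_of_ne hl, mul_zero]
  set a₁ : Fin n → F := a - a j • (Pi.single j 1 : Fin n → F) with ha₁
  have hav : a ᵥ* (Eu : Matrix (Fin n) (Fin n) F) = a₁ := by
    rw [hEu, roUnit_val, vecMul_one_add_vmv]
    have hdot : ∑ k, a k * (v - (Pi.single j 1 : Fin n → F)) k = -a j := by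
      simp only [Pi.sub_apply, mul_sub, Finset.sum_sub_distrib, hsum, dot_single, zero_sub,
        mul_one]
    rw [hdot, ha₁, neg_smul, sub_eq_add_neg]
  have hEv : ((Eu⁻¹ : GLn n F) : Matrix (Fin n) (Fin n) F) *ᵥ v = Pi.single j 1 := by
    have h1 : (Eu : Matrix (Fin n) (Fin n) F) *ᵥ Pi.single j 1 = v := by
      rw [hEu, roUnit_val, one_add_vmv_mulVec, single_dot, Pi.single_eq_same, one_mul, one_smul]
      abel
    rw [← h1, Matrix.mulVec_mulVec, ← Units.val_mul, inv_mul_cancel, Units.val_one,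
      Matrix.one_mulVec]
  have hT₁ : ((Eu⁻¹ * T * Eu : GLn n F) : Matrix (Fin n) (Fin n) F)
      = 1 + Matrix.vecMulVec (Pi.single j 1) a₁ := by
    rw [conj_val Eu T v a hshape, hEv, hav]
  -- step 2 : F'
  have ha₁i : a₁ i = a i := by
    rw [ha₁, Pi.sub_apply, Pi.smul_apply, Pi.single_eq_of_ne hne, smul_eq_mul, mul_zero,
      sub_zero]
  have ha₁j : a₁ j = 0 := by
    rw [ha₁, Pi.sub_apply, Pi.smul_apply, Pi.single_eq_same, smul_eq_mul, mul_one, sub_self]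
  set t : Fin n → F := a i • (Pi.single i 1 : Fin n → F) - a₁ with hts
  have hti : t i = 0 := by
    rw [hts, Pi.sub_apply, Pi.smul_apply, Pi.single_eq_same, smul_eq_mul, mul_one, ha₁i,
      sub_self]
  have htj : t j = 0 := by
    rw [hts, Pi.sub_apply, Pi.smul_apply, Pi.single_eq_of_ne hne.symm, smul_eq_mul, mul_zero,
      ha₁j, sub_zero]
  have htrF : ∑ k, t k * (Pi.single i ((a i)⁻¹ : F) : Fin n → F) k = 0 := by
    rw [dot_single, hti, zero_mul]
  set Fu : GLn n F := tUnit (Pi.single i ((a i)⁻¹ : F)) t htrF with hFu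
  have hFborel : Fu ∈ borelU n F := by
    rw [mem_borelU, hFu, tUnit_val]
    apply Matrix.BlockTriangular.add Matrix.blockTriangular_one
    intro k l hlt
    rw [Matrix.vecMulVec_apply]
    by_cases hk : k = i
    · have hl : l < i := by rw [← hk]; exact hlt
      rw [hk, hts, Pi.sub_apply, Pi.smul_apply, Pi.single_eq_of_ne (ne_of_lt hl), smul_eq_mul,
        mul_zero, ha₁, Pi.sub_apply, ha l hl, Pi.smul_apply,
        Pi.single_eq_of_ne (ne_of_lt (lt_trans hl hij)), smul_eq_mul, mul_zero, sub_zero,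
        zero_sub, neg_zero, mul_zero]
    · rw [Pi.single_eq_of_ne hk, zero_mul]
  have hFej : ((Fu⁻¹ : GLn n F) : Matrix (Fin n) (Fin n) F) *ᵥ Pi.single j 1
      = Pi.single j 1 := by
    rw [hFu, tUnit_inv_val, one_sub_vmv_mulVec, dot_single, htj, zero_mul, zero_smul, sub_zero]
  have ha₂ : a₁ ᵥ* (Fu : Matrix (Fin n) (Fin n) F)
      = a i • (Pi.single i 1 : Fin n → F) := by
    rw [hFu, tUnit_val, vecMul_one_add_vmv, dot_single, ha₁i, mul_inv_cancel₀ hai, one_smul,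
      hts]
    abel
  have hT₂ : ((Fu⁻¹ * (Eu⁻¹ * T * Eu) * Fu : GLn n F) : Matrix (Fin n) (Fin n) F)
      = 1 + Matrix.vecMulVec (Pi.single j 1 : Fin n → F)
          (a i • (Pi.single i 1 : Fin n → F)) := by
    rw [conj_val Fu (Eu⁻¹ * T * Eu) (Pi.single j 1) a₁ hT₁, hFej, ha₂]
  obtain ⟨U₁, U₂, hU₁, hU₂, hdecomp⟩ := corner_decomp (n := n) (F := F) hij hai
  -- assemble
  have hunit : Fu⁻¹ * (Eu⁻¹ * T * Eu) * Fu = U₁ * swapUnit i j * U₂ := by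
    apply Units.ext
    rw [hT₂, hdecomp]
    rw [Units.val_mul, Units.val_mul, swapUnit_val]
  have hTdecomp : T = (Eu * Fu * U₁) * swapUnit i j * (U₂ * Fu⁻¹ * Eu⁻¹) := by
    calc T = (Eu * Fu) * (Fu⁻¹ * (Eu⁻¹ * T * Eu) * Fu) * (Fu⁻¹ * Eu⁻¹) := by group
      _ = (Eu * Fu) * (U₁ * swapUnit i j * U₂) * (Fu⁻¹ * Eu⁻¹) := by rw [hunit]
      _ = (Eu * Fu * U₁) * swapUnit i j * (U₂ * Fu⁻¹ * Eu⁻¹) := by group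
  refine ⟨Eu * Fu * U₁, borel_mul (borel_mul hEborel hFborel) hU₁,
    U₂ * Fu⁻¹ * Eu⁻¹, borel_mul (borel_mul hU₂ (borel_inv hFborel)) (borel_inv hEborel), ?_⟩
  rw [hTdecomp]
  rw [Units.val_mul, Units.val_mul, swapUnit_val]

end Part4

section Part5
variable {n : ℕ} {F : Type*} [Field F] [Fintype F]

/-- the `v`-vector for upper-type transvections. -/
def uvec (i : Fin n) (c : F) (y : Fin n → F) : Fin n → F := fun k => if k = i then c else y k

/-- the `a`-vector for upper-type transvections. -/
def ubvec (j : Fin n) (x : Fin n → F) : Fin n → F := fun k => if k = j then 1 else x k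

theorem uvec_self (i : Fin n) (c : F) (y : Fin n → F) : uvec i c y i = c := by simp [uvec]

theorem uvec_other {i k : Fin n} (h : k ≠ i) (c : F) (y : Fin n → F) :
    uvec i c y k = y k := by simp [uvec, h]

theorem ubvec_self (j : Fin n) (x : Fin n → F) : ubvec j x j = 1 := by simp [ubvec]

theorem ubvec_other {j k : Fin n} (h : k ≠ j) (x : Fin n → F) : ubvec j x k = x k := by
  simp [ubvec, h]

theorem ub_trace {i j : Fin n} (hij : i < j) (c : F) {x y : Fin n → F}
    (hx : ∀ k ∉ Finset.Ioi j, x k = 0) (hy : ∀ k ∉ Finset.Iio i, y k = 0) :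
    ∑ k, ubvec j x k * uvec i c y k = 0 := by
  apply Finset.sum_eq_zero
  intro k _
  by_cases hk : k = j
  · rw [hk, ubvec_self, one_mul, uvec_other (ne_of_gt hij),
      hy j (by simp only [Finset.mem_Iio, not_lt]; exact le_of_lt hij)]
  · rw [ubvec_other hk]
    by_cases hk2 : k = i
    · rw [hx k (by simp only [Finset.mem_Ioi, not_lt]
                   exact le_of_lt (hk2 ▸ hij)), zero_mul]
    · rw [uvec_other hk2]
      rcases lt_or_ge j k with h | h
      · rw [hy k (by simp only [Finset.mem_Iio, not_lt]
                     exact le_of_lt (lt_trans hij h)), mul_zero]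
      · rw [hx k (by simp only [Finset.mem_Ioi, not_lt]; exact h), zero_mul]

/-- normal form of upper-type transvections. -/
def psiU (i j : Fin n) (hij : i < j) (c : Fˣ) (x y : Fin n → F)
    (hx : ∀ k ∉ Finset.Ioi j, x k = 0) (hy : ∀ k ∉ Finset.Iio i, y k = 0) : GLn n F :=
  tUnit (uvec i (c : F) y) (ubvec j x) (ub_trace hij (c : F) hx hy)

theorem psiU_mem_upSet {i j : Fin n} (hij : i < j) (c : Fˣ) (x y : Fin n → F)
    (hx : ∀ k ∉ Finset.Ioi j, x k = 0) (hy : ∀ k ∉ Finset.Iio i, y k = 0) :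
    psiU i j hij c x y hx hy ∈ upSet n F i j := by
  refine ⟨uvec i (c : F) y, ubvec j x, ?_, ?_, ?_, ?_, ub_trace hij (c : F) hx hy, rfl⟩
  · intro k hk
    rw [ubvec_other (ne_of_lt hk)]
    exact hx k (by simp only [Finset.mem_Ioi, not_lt]; exact le_of_lt hk)
  · rw [ubvec_self]; exact one_ne_zero
  · intro k hk
    rw [uvec_other (ne_of_gt hk)]
    exact hy k (by simp only [Finset.mem_Iio, not_lt]; exact le_of_lt hk)
  · rw [uvec_self]; exact Units.ne_zero c

theorem psiU_inj {i j : Fin n} (hij : i < j) {c c' : Fˣ} {x y x' y' : Fin n → F}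
    {hx hy hx' hy'}
    (h : psiU i j hij c x y hx hy = psiU i j hij c' x' y' hx' hy') :
    c = c' ∧ x = x' ∧ y = y' := by
  have hval : (1 : Matrix (Fin n) (Fin n) F)
      + Matrix.vecMulVec (uvec i (c : F) y) (ubvec j x)
      = 1 + Matrix.vecMulVec (uvec i (c' : F) y') (ubvec j x') := congrArg Units.val h
  have hM := add_left_cancel hval
  have hv : ∀ k, uvec i (c : F) y k = uvec i (c' : F) y' k := by
    intro k
    have := congrFun (congrFun hM k) j
    rwa [Matrix.vecMulVec_apply, Matrix.vecMulVec_apply, ubvec_self, ubvec_self, mul_one,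
      mul_one] at this
  have hc : c = c' := by
    have := hv i
    rw [uvec_self, uvec_self] at this
    exact Units.ext this
  have ha : ∀ l, ubvec j x l = ubvec j x' l := by
    intro l
    have := congrFun (congrFun hM i) l
    rw [Matrix.vecMulVec_apply, Matrix.vecMulVec_apply, uvec_self, uvec_self, ← hc] at this
    exact mul_left_cancel₀ (Units.ne_zero c) this
  refine ⟨hc, funext fun k => ?_, funext fun k => ?_⟩
  · by_cases h1 : k = j
    · subst h1
      rw [hx k (by simp [Finset.mem_Ioi]), hx' k (by simp [Finset.mem_Ioi])]
    · have := ha k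
      rwa [ubvec_other h1, ubvec_other h1] at this
  · by_cases h1 : k = i
    · subst h1
      rw [hy k (by simp [Finset.mem_Iio]), hy' k (by simp [Finset.mem_Iio])]
    · have := hv k
      rwa [uvec_other h1, uvec_other h1] at this

theorem psiU_surj {i j : Fin n} (hij : i < j) {T : GLn n F} (hT : T ∈ upSet n F i j) :
    ∃ (c : Fˣ) (x y : Fin n → F) (hx : ∀ k ∉ Finset.Ioi j, x k = 0)
      (hy : ∀ k ∉ Finset.Iio i, y k = 0), T = psiU i j hij c x y hx hy := by
  obtain ⟨v, a, ha, haj, hv, hvi, hsum, hshape⟩ := hT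
  refine ⟨Units.mk0 (a j * v i) (mul_ne_zero haj hvi),
    (fun k => if j < k then (a j)⁻¹ * a k else 0), (fun k => if k < i then a j * v k else 0),
    fun k hk => if_neg (by simpa [Finset.mem_Ioi] using hk),
    fun k hk => if_neg (by simpa [Finset.mem_Iio] using hk), ?_⟩
  have ha' : ubvec j (fun k => if j < k then (a j)⁻¹ * a k else 0) = (a j)⁻¹ • a := by
    funext l
    simp only [Pi.smul_apply, smul_eq_mul]
    by_cases h1 : l = j
    · subst h1; rw [ubvec_self, inv_mul_cancel₀ haj]
    · rw [ubvec_other h1]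
      rcases lt_or_ge j l with h | h
      · rw [if_pos h]
      · rw [if_neg (not_lt.2 h), ha l (lt_of_le_of_ne h h1), mul_zero]
  have hv' : uvec i ((Units.mk0 (a j * v i) (mul_ne_zero haj hvi) : Fˣ) : F)
      (fun k => if k < i then a j * v k else 0) = a j • v := by
    funext k
    simp only [Pi.smul_apply, smul_eq_mul]
    by_cases h1 : k = i
    · subst h1; rw [uvec_self]; rfl
    · rw [uvec_other h1]
      rcases lt_or_ge k i with h | h
      · rw [if_pos h]
      · rw [if_neg (not_lt.2 h), hv k (lt_of_le_of_ne h (Ne.symm h1)), mul_zero]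
  apply Units.ext
  show (T : Matrix (Fin n) (Fin n) F) = _
  rw [hshape]
  show _ = (1 : Matrix (Fin n) (Fin n) F) + Matrix.vecMulVec _ _
  rw [hv', ha', vmv_smul_cancel haj]

end Part5

section Part6
open scoped Classical
variable {n : ℕ} {F : Type*} [Field F] [Fintype F]

/-- parameter space: vectors supported in `Ioi j`. -/
def PX (n : ℕ) (F : Type*) [Field F] (j : Fin n) : Type _ :=
  {x : Fin n → F // ∀ k ∉ Finset.Ioi j, x k = 0}

/-- parameter space: vectors supported in `Iio i`. -/
def PY (n : ℕ) (F : Type*) [Field F] (i : Fin n) : Type _ :=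
  {y : Fin n → F // ∀ k ∉ Finset.Iio i, y k = 0}

noncomputable instance (j : Fin n) : Fintype (PX n F j) := by
  unfold PX; infer_instance

noncomputable instance (i : Fin n) : Fintype (PY n F i) := by
  unfold PY; infer_instance

/-- vectors supported in a finset `s` are equivalent to functions on `s`. -/
def suppEquiv (s : Finset (Fin n)) :
    {f : Fin n → F // ∀ k ∉ s, f k = 0} ≃ ((k : {k // k ∈ s}) → F) where
  toFun f := fun k => f.1 k.1
  invFun g := ⟨fun k => if h : k ∈ s then g ⟨k, h⟩ else 0, fun k hk => dif_neg hk⟩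
  left_inv f := by
    apply Subtype.ext
    funext k
    by_cases h : k ∈ s
    · simp [h]
    · simp [h, f.2 k h]
  right_inv g := by
    funext k
    simp [k.2]

theorem card_supp (s : Finset (Fin n)) :
    Fintype.card {f : Fin n → F // ∀ k ∉ s, f k = 0} = Fintype.card F ^ s.card := by
  rw [Fintype.card_congr (suppEquiv s), Fintype.card_fun, Fintype.card_coe]

theorem card_PX (j : Fin n) : Fintype.card (PX n F j) = Fintype.card F ^ (n - 1 - (j : ℕ)) := by
  show Fintype.card {x : Fin n → F // ∀ k ∉ Finset.Ioi j, x k = 0} = _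
  rw [card_supp, Fin.card_Ioi]

theorem card_PY (i : Fin n) : Fintype.card (PY n F i) = Fintype.card F ^ (i : ℕ) := by
  show Fintype.card {y : Fin n → F // ∀ k ∉ Finset.Iio i, y k = 0} = _
  rw [card_supp, Fin.card_Iio]

/-- the common cardinality of the parameter space. -/
theorem card_param (i j : Fin n) :
    Fintype.card (Fˣ × PX n F j × PY n F i)
      = (Fintype.card F - 1) * (Fintype.card F ^ ((n - 1 - (j : ℕ)) + (i : ℕ))) := by
  rw [Fintype.card_prod, Fintype.card_prod, Fintype.card_units, card_PX, card_PY, pow_add]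

theorem low_count_cell {i j : Fin n} (hij : i < j) {g : GLn n F}
    (hg : g ∈ bruhatCellU n F (Equiv.swap i j)) :
    ((lowSet n F i j).toFinite.toFinset.filter fun T => T⁻¹ * g ∈ borelU n F).card
      = Fintype.card (Fˣ × PX n F j × PY n F i) := by
  obtain ⟨b₁, hb₁, b₂, hb₂, hgval⟩ := hg
  have hgU : g = b₁ * swapUnit i j * b₂ := by
    apply Units.ext
    rw [Units.val_mul, Units.val_mul, swapUnit_val]
    exact hgval
  rw [← Finset.card_univ]
  symm
  apply Finset.card_bij (fun (p : Fˣ × PX n F j × PY n F i) _ =>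
    b₁ * phiU i j hij p.1 p.2.1.1 p.2.2.1 p.2.1.2 p.2.2.2 * b₁⁻¹)
  · intro p _
    rw [Finset.mem_filter, Set.Finite.mem_toFinset]
    constructor
    · have := conj_mem_lowSet (borel_inv hb₁)
        (phiU_mem_lowSet hij p.1 p.2.1.1 p.2.2.1 p.2.1.2 p.2.2.2)
      rwa [inv_inv] at this
    · have heq : (b₁ * phiU i j hij p.1 p.2.1.1 p.2.2.1 p.2.1.2 p.2.2.2 * b₁⁻¹)⁻¹ * g
          = b₁ * ((phiU i j hij p.1 p.2.1.1 p.2.2.1 p.2.1.2 p.2.2.2)⁻¹ * swapUnit i j) * b₂ := by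
        rw [hgU]; group
      rw [heq]
      exact borel_mul (borel_mul hb₁ (phiU_wB hij p.1 p.2.1.1 p.2.2.1 p.2.1.2 p.2.2.2)) hb₂
  · intro p _ p' _ h
    have h2 : phiU i j hij p.1 p.2.1.1 p.2.2.1 p.2.1.2 p.2.2.2
        = phiU i j hij p'.1 p'.2.1.1 p'.2.2.1 p'.2.1.2 p'.2.2.2 :=
      mul_left_cancel (mul_right_cancel h)
    obtain ⟨hc, hx, hy⟩ := phiU_inj hij h2
    exact Prod.ext hc (Prod.ext (Subtype.ext hx) (Subtype.ext hy))
  · intro T hT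
    rw [Finset.mem_filter, Set.Finite.mem_toFinset] at hT
    obtain ⟨hTlow, hTcond⟩ := hT
    have hT₀low : b₁⁻¹ * T * b₁ ∈ lowSet n F i j := conj_mem_lowSet hb₁ hTlow
    have hT₀B : (b₁⁻¹ * T * b₁)⁻¹ * swapUnit i j ∈ borelU n F := by
      have heq : (b₁⁻¹ * T * b₁)⁻¹ * swapUnit i j = b₁⁻¹ * (T⁻¹ * g) * b₂⁻¹ := by
        rw [hgU]; group
      rw [heq]
      exact borel_mul (borel_mul (borel_inv hb₁) hTcond) (borel_inv hb₂)
    obtain ⟨c, x, y, hx, hy, hphi⟩ := phiU_surj hij hT₀low hT₀B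
    refine ⟨⟨c, ⟨x, hx⟩, ⟨y, hy⟩⟩, Finset.mem_univ _, ?_⟩
    rw [← hphi]
    group

theorem low_count_nocell {i j : Fin n} (hij : i < j) {g : GLn n F}
    (hg : g ∉ bruhatCellU n F (Equiv.swap i j)) :
    ((lowSet n F i j).toFinite.toFinset.filter fun T => T⁻¹ * g ∈ borelU n F).card = 0 := by
  rw [Finset.card_eq_zero, Finset.filter_eq_empty_iff]
  intro T hT
  rw [Set.Finite.mem_toFinset] at hT
  intro hcond
  apply hg
  obtain ⟨c₁, hc₁, c₂, hc₂, hval⟩ := lowSet_subset_cell hij hT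
  refine ⟨c₁, hc₁, c₂ * (T⁻¹ * g), borel_mul hc₂ hcond, ?_⟩
  calc (g : Matrix (Fin n) (Fin n) F) = ↑T * ↑(T⁻¹ * g) := by
        rw [← Units.val_mul]
        congr 1
        group
    _ = (↑c₁ * Equiv.Perm.permMatrix F (Equiv.swap i j) * ↑c₂) * ↑(T⁻¹ * g) := by rw [hval]
    _ = ↑c₁ * Equiv.Perm.permMatrix F (Equiv.swap i j) * ↑(c₂ * (T⁻¹ * g)) := by
        rw [Units.val_mul c₂, mul_assoc]

theorem up_count_borel {i j : Fin n} (hij : i < j) {g : GLn n F} (hg : g ∈ borelU n F) :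
    ((upSet n F i j).toFinite.toFinset.filter fun T => T⁻¹ * g ∈ borelU n F).card
      = (upSet n F i j).toFinite.toFinset.card := by
  congr 1
  apply Finset.filter_true_of_mem
  intro T hT
  rw [Set.Finite.mem_toFinset] at hT
  exact borel_mul (borel_inv (upSet_mem_borel hij hT)) hg

theorem up_count_noborel {i j : Fin n} (hij : i < j) {g : GLn n F} (hg : g ∉ borelU n F) :
    ((upSet n F i j).toFinite.toFinset.filter fun T => T⁻¹ * g ∈ borelU n F).card = 0 := by
  rw [Finset.card_eq_zero, Finset.filter_eq_empty_iff]
  intro T hT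
  rw [Set.Finite.mem_toFinset] at hT
  intro hcond
  apply hg
  have hTg : g = T * (T⁻¹ * g) := by group
  rw [hTg]
  exact borel_mul (upSet_mem_borel hij hT) hcond

theorem up_card {i j : Fin n} (hij : i < j) :
    (upSet n F i j).toFinite.toFinset.card = Fintype.card (Fˣ × PX n F j × PY n F i) := by
  rw [← Finset.card_univ]
  symm
  apply Finset.card_bij (fun (p : Fˣ × PX n F j × PY n F i) _ =>
    psiU i j hij p.1 p.2.1.1 p.2.2.1 p.2.1.2 p.2.2.2)
  · intro p _
    rw [Set.Finite.mem_toFinset]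
    exact psiU_mem_upSet hij p.1 p.2.1.1 p.2.2.1 p.2.1.2 p.2.2.2
  · intro p _ p' _ h
    obtain ⟨hc, hx, hy⟩ := psiU_inj hij h
    exact Prod.ext hc (Prod.ext (Subtype.ext hx) (Subtype.ext hy))
  · intro T hT
    rw [Set.Finite.mem_toFinset] at hT
    obtain ⟨c, x, y, hx, hy, hpsi⟩ := psiU_surj hij hT
    exact ⟨⟨c, ⟨x, hx⟩, ⟨y, hy⟩⟩, Finset.mem_univ _, hpsi.symm⟩

end Part6

section Part7
open scoped Classical
variable {n : ℕ} {F : Type*} [Field F] [Fintype F]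

theorem trans_partition :
    (transvectionsU n F).toFinite.toFinset
      = (Finset.univ.filter (fun p : Fin n × Fin n => p.1 < p.2)).biUnion
          (fun p => (upSet n F p.1 p.2).toFinite.toFinset
            ∪ (lowSet n F p.1 p.2).toFinite.toFinset) := by
  ext T
  simp only [Set.Finite.mem_toFinset, Finset.mem_biUnion, Finset.mem_filter, Finset.mem_univ,
    true_and, Finset.mem_union, Set.Finite.mem_toFinset]
  constructor
  · intro hT
    rcases trans_split hT with ⟨i, j, hij, hup⟩ | ⟨i, j, hij, hlow⟩
    · exact ⟨(i, j), hij, Or.inl hup⟩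
    · exact ⟨(i, j), hij, Or.inr hlow⟩
  · rintro ⟨p, hp, h | h⟩
    · exact upSet_subset_trans h
    · exact lowSet_subset_trans h

theorem pieces_disjoint :
    (↑(Finset.univ.filter (fun p : Fin n × Fin n => p.1 < p.2)) : Set (Fin n × Fin n)).PairwiseDisjoint
      (fun p => (upSet n F p.1 p.2).toFinite.toFinset
        ∪ (lowSet n F p.1 p.2).toFinite.toFinset) := by
  intro p hp q hq hpq
  rw [Finset.mem_coe, Finset.mem_filter] at hp hq
  simp only [Function.onFun]
  rw [Finset.disjoint_left]
  intro T hTp hTq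
  rw [Finset.mem_union, Set.Finite.mem_toFinset, Set.Finite.mem_toFinset] at hTp hTq
  apply hpq
  rcases hTp with h1 | h1 <;> rcases hTq with h2 | h2
  · obtain ⟨e1, e2⟩ := upSet_disj h1 h2
    exact Prod.ext e1 e2
  · exact absurd (low_up_disj hq.2 hp.2 h2 h1) not_false
  · exact absurd (low_up_disj hp.2 hq.2 h1 h2) not_false
  · obtain ⟨e1, e2⟩ := lowSet_disj h1 h2
    exact Prod.ext e1 e2

theorem up_low_disjoint {p : Fin n × Fin n} (hp : p.1 < p.2) :
    Disjoint ((upSet n F p.1 p.2).toFinite.toFinset)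
      ((lowSet n F p.1 p.2).toFinite.toFinset) := by
  rw [Finset.disjoint_left]
  intro T h1 h2
  rw [Set.Finite.mem_toFinset] at h1 h2
  exact low_up_disj hp hp h2 h1

theorem mul_count {S C : Finset (GLn n F)} {c : ℕ}
    (h : ∀ g : GLn n F, (S.filter fun T => T⁻¹ * g ∈ borelU n F).card
      = if g ∈ C then c else 0) :
    (∑ T ∈ S, MonoidAlgebra.of ℂ (GLn n F) T)
        * ∑ b ∈ (borelU n F).toFinite.toFinset, MonoidAlgebra.of ℂ (GLn n F) b
      = (c : ℂ) • ∑ g ∈ C, MonoidAlgebra.of ℂ (GLn n F) g := by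
  rw [Finset.sum_mul_sum]
  simp only [MonoidAlgebra.of_apply, MonoidAlgebra.single_mul_single, one_mul]
  refine MonoidAlgebra.coeff_injective (Finsupp.ext fun g => ?_)
  rw [MonoidAlgebra.coeff_sum, Finsupp.finset_sum_apply, MonoidAlgebra.coeff_smul,
    Finsupp.smul_apply, MonoidAlgebra.coeff_sum, Finsupp.finset_sum_apply]
  have hinner : ∀ T : GLn n F,
      (∑ b ∈ (borelU n F).toFinite.toFinset, MonoidAlgebra.single (T * b) (1 : ℂ)).coeff g
        = if T⁻¹ * g ∈ borelU n F then 1 else 0 := by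
    intro T
    rw [MonoidAlgebra.coeff_sum, Finsupp.finset_sum_apply]
    have h1 : ∀ b : GLn n F, (MonoidAlgebra.single (T * b) (1 : ℂ)).coeff g
        = if b = T⁻¹ * g then 1 else 0 := by
      intro b
      rw [MonoidAlgebra.coeff_single, Finsupp.single_apply]
      congr 1
      apply propext
      constructor
      · intro hh; rw [← hh]; group
      · intro hh; rw [hh]; group
    rw [Finset.sum_congr rfl (fun b _ => h1 b), Finset.sum_ite_eq' _ (T⁻¹ * g) (fun _ => (1:ℂ))]
    simp only [Set.Finite.mem_toFinset]
  rw [Finset.sum_congr rfl (fun T _ => hinner T), Finset.sum_boole, h g]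
  have h2 : (∑ x ∈ C, (MonoidAlgebra.single x (1:ℂ)).coeff g) = if g ∈ C then 1 else 0 := by
    have h1 : ∀ x : GLn n F, (MonoidAlgebra.single x (1 : ℂ)).coeff g
        = if x = g then 1 else 0 := fun x => Finsupp.single_apply
    rw [Finset.sum_congr rfl (fun x _ => h1 x), Finset.sum_ite_eq' _ g (fun _ => (1:ℂ))]
  rw [h2]
  split_ifs
  · rw [smul_eq_mul, mul_one]
  · rw [smul_eq_mul, mul_zero, Nat.cast_zero]

theorem up_mul {p : Fin n × Fin n} (hp : p.1 < p.2) :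
    (∑ T ∈ (upSet n F p.1 p.2).toFinite.toFinset, MonoidAlgebra.of ℂ (GLn n F) T)
        * ∑ b ∈ (borelU n F).toFinite.toFinset, MonoidAlgebra.of ℂ (GLn n F) b
      = (Fintype.card (Fˣ × PX n F p.2 × PY n F p.1) : ℂ)
          • ∑ b ∈ (borelU n F).toFinite.toFinset, MonoidAlgebra.of ℂ (GLn n F) b := by
  apply mul_count
  intro g
  by_cases hg : g ∈ borelU n F
  · rw [if_pos (Set.Finite.mem_toFinset _ |>.2 hg), up_count_borel hp hg, up_card hp]
  · rw [if_neg (fun hh => hg ((Set.Finite.mem_toFinset _).1 hh)), up_count_noborel hp hg]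

theorem low_mul {p : Fin n × Fin n} (hp : p.1 < p.2) :
    (∑ T ∈ (lowSet n F p.1 p.2).toFinite.toFinset, MonoidAlgebra.of ℂ (GLn n F) T)
        * ∑ b ∈ (borelU n F).toFinite.toFinset, MonoidAlgebra.of ℂ (GLn n F) b
      = (Fintype.card (Fˣ × PX n F p.2 × PY n F p.1) : ℂ)
          • ∑ m ∈ (bruhatCellU n F (Equiv.swap p.1 p.2)).toFinite.toFinset,
              MonoidAlgebra.of ℂ (GLn n F) m := by
  apply mul_count
  intro g
  by_cases hg : g ∈ bruhatCellU n F (Equiv.swap p.1 p.2)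
  · rw [if_pos (Set.Finite.mem_toFinset _ |>.2 hg), low_count_cell hp hg]
  · rw [if_neg (fun hh => hg ((Set.Finite.mem_toFinset _).1 hh)), low_count_nocell hp hg]

theorem key_identity (hn : 2 ≤ n) :
    transvectionSum n F * oneB n F
      = (∑ p ∈ Finset.univ.filter (fun p : Fin n × Fin n => p.1 < p.2),
            (Fintype.card (Fˣ × PX n F p.2 × PY n F p.1) : ℂ)) • oneB n F
        + ∑ p ∈ Finset.univ.filter (fun p : Fin n × Fin n => p.1 < p.2),
            (Fintype.card (Fˣ × PX n F p.2 × PY n F p.1) : ℂ)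
              • heckeT n F (Equiv.swap p.1 p.2) := by
  simp only [transvectionSum, oneB, heckeT]
  rw [trans_partition, Finset.sum_biUnion pieces_disjoint]
  rw [mul_smul_comm]
  have hsplit : ∀ p ∈ Finset.univ.filter (fun p : Fin n × Fin n => p.1 < p.2),
      (∑ T ∈ (upSet n F p.1 p.2).toFinite.toFinset ∪ (lowSet n F p.1 p.2).toFinite.toFinset,
        MonoidAlgebra.of ℂ (GLn n F) T)
        * ∑ b ∈ (borelU n F).toFinite.toFinset, MonoidAlgebra.of ℂ (GLn n F) b
      = (Fintype.card (Fˣ × PX n F p.2 × PY n F p.1) : ℂ)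
          • (∑ b ∈ (borelU n F).toFinite.toFinset, MonoidAlgebra.of ℂ (GLn n F) b)
        + (Fintype.card (Fˣ × PX n F p.2 × PY n F p.1) : ℂ)
          • ∑ m ∈ (bruhatCellU n F (Equiv.swap p.1 p.2)).toFinite.toFinset,
              MonoidAlgebra.of ℂ (GLn n F) m := by
    intro p hp
    have hplt : p.1 < p.2 := (Finset.mem_filter.1 hp).2
    rw [Finset.sum_union (up_low_disjoint hplt), add_mul, up_mul hplt, low_mul hplt]
  rw [Finset.sum_mul, Finset.sum_congr rfl hsplit, Finset.sum_add_distrib, ← Finset.sum_smul]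
  rw [smul_add]
  congr 1
  · rw [smul_comm]
  · rw [Finset.smul_sum]
    apply Finset.sum_congr rfl
    intro p _
    rw [smul_comm]

theorem geom_aux (q : ℂ) (m : ℕ) :
    (q - 1) * ∑ j ∈ Finset.range (m+1), ∑ i ∈ Finset.range j, q ^ (m - (j - i))
      = (m : ℂ) * q ^ m - ∑ k ∈ Finset.range m, q ^ k := by
  induction m with
  | zero => simp
  | succ m ih =>
    have hstep : ∑ j ∈ Finset.range (m+2), ∑ i ∈ Finset.range j, q ^ (m + 1 - (j - i))
        = q * (∑ j ∈ Finset.range (m+1), ∑ i ∈ Finset.range j, q ^ (m - (j - i)))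
          + ∑ i ∈ Finset.range (m+1), q ^ i := by
      rw [Finset.sum_range_succ]
      congr 1
      · rw [Finset.mul_sum]
        apply Finset.sum_congr rfl
        intro j hj
        rw [Finset.mul_sum]
        apply Finset.sum_congr rfl
        intro i hi
        rw [Finset.mem_range] at hj hi
        rw [show m + 1 - (j - i) = (m - (j - i)) + 1 by omega, pow_succ]
        ring
      · apply Finset.sum_congr rfl
        intro i hi
        rw [Finset.mem_range] at hi
        congr 1
        omega
    have hsum : ∑ k ∈ Finset.range (m+1), q ^ k = 1 + q * ∑ k ∈ Finset.range m, q ^ k := by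
      rw [Finset.sum_range_succ', pow_zero, add_comm]
      congr 1
      rw [Finset.mul_sum]
      exact Finset.sum_congr rfl fun k _ => pow_succ' q k
    have hgeom : (q - 1) * ∑ i ∈ Finset.range (m+1), q ^ i = q ^ (m+1) - 1 := by
      rw [mul_comm]
      exact geom_sum_mul q (m+1)
    rw [hstep, mul_add, hgeom]
    have h3 : (q - 1) * (q * ∑ j ∈ Finset.range (m+1), ∑ i ∈ Finset.range j, q ^ (m - (j - i)))
        = q * ((q - 1) * ∑ j ∈ Finset.range (m+1), ∑ i ∈ Finset.range j, q ^ (m - (j - i))) := by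
      ring
    rw [h3, ih, hsum]
    push_cast
    ring

theorem pair_sum_eq (f : ℕ → ℕ → ℂ) :
    ∑ p ∈ Finset.univ.filter (fun p : Fin n × Fin n => p.1 < p.2), f (p.1 : ℕ) (p.2 : ℕ)
      = ∑ j ∈ Finset.range n, ∑ i ∈ Finset.range j, f i j := by
  rw [← Finset.sum_sigma (Finset.range n) (fun j => Finset.range j)
    (fun x => f x.2 x.1)]
  apply Finset.sum_bij (fun (p : Fin n × Fin n) _ => (⟨(p.2 : ℕ), (p.1 : ℕ)⟩ : Σ _ : ℕ, ℕ))
  · intro p hp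
    rw [Finset.mem_filter] at hp
    rw [Finset.mem_sigma, Finset.mem_range, Finset.mem_range]
    exact ⟨p.2.isLt, hp.2⟩
  · intro p hp p' hp' h
    have h1 : (p.2 : ℕ) = (p'.2 : ℕ) := congrArg Sigma.fst h
    have h2 : (p.1 : ℕ) = (p'.1 : ℕ) := by
      have := congrArg Sigma.snd h
      simpa using this
    exact Prod.ext (Fin.ext h2) (Fin.ext h1)
  · intro x hx
    rw [Finset.mem_sigma, Finset.mem_range, Finset.mem_range] at hx
    refine ⟨(⟨x.2, lt_trans hx.2 hx.1⟩, ⟨x.1, hx.1⟩), ?_, rfl⟩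
    rw [Finset.mem_filter]
    exact ⟨Finset.mem_univ _, hx.2⟩
  · intro p hp
    rfl

theorem card_param_cast {i j : Fin n} (hij : i < j) :
    (Fintype.card (Fˣ × PX n F j × PY n F i) : ℂ)
      = ((Fintype.card F : ℂ) - 1)
          * (Fintype.card F : ℂ) ^ (n - 1 - ((j : ℕ) - (i : ℕ))) := by
  have hj := j.isLt
  have hij' : (i : ℕ) < (j : ℕ) := hij
  have hexp : (n - 1 - (j : ℕ)) + (i : ℕ) = n - 1 - ((j : ℕ) - (i : ℕ)) := by omega
  have hq : 1 ≤ Fintype.card F := Fintype.card_pos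
  rw [card_param, hexp, Nat.cast_mul, Nat.cast_sub hq, Nat.cast_pow, Nat.cast_one]

theorem scalar_sum (hn : 2 ≤ n) :
    ∑ p ∈ Finset.univ.filter (fun p : Fin n × Fin n => p.1 < p.2),
        (Fintype.card (Fˣ × PX n F p.2 × PY n F p.1) : ℂ)
      = ((n : ℂ) - 1) * (Fintype.card F : ℂ) ^ (n - 1)
          - ∑ k ∈ Finset.range (n - 1), (Fintype.card F : ℂ) ^ k := by
  have h1 : ∑ p ∈ Finset.univ.filter (fun p : Fin n × Fin n => p.1 < p.2),
      (Fintype.card (Fˣ × PX n F p.2 × PY n F p.1) : ℂ)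
      = ∑ p ∈ Finset.univ.filter (fun p : Fin n × Fin n => p.1 < p.2),
          ((Fintype.card F : ℂ) - 1)
            * (Fintype.card F : ℂ) ^ (n - 1 - ((p.2 : ℕ) - (p.1 : ℕ))) := by
    apply Finset.sum_congr rfl
    intro p hp
    exact card_param_cast (Finset.mem_filter.1 hp).2
  rw [h1, ← Finset.mul_sum]
  rw [pair_sum_eq (fun i j => (Fintype.card F : ℂ) ^ (n - 1 - (j - i)))]
  obtain ⟨m, hm⟩ : ∃ m, n = m + 1 := ⟨n - 1, by omega⟩
  subst hm
  have hm1 : m + 1 - 1 = m := by omega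
  rw [hm1, geom_aux (Fintype.card F : ℂ) m]
  push_cast
  ring

end Part7

end S8

/-- In `ℂ[GL_n(F)]` with `q = |F|` and `n ≥ 2`,
`D · 𝟙_B = ((n−1) q^{n−1} − [n−1]_q) 𝟙_B + (q−1) ∑_{i<j} q^{n−1−(j−i)} T_{(i j)}`. -/
theorem transvectionSum_mul_oneB
    (F : Type*) [Field F] [Fintype F] (n : ℕ) (hn : 2 ≤ n) :
    transvectionSum n F * oneB n F
      = (((n : ℂ) - 1) * (Fintype.card F : ℂ) ^ (n - 1)
            - ∑ k ∈ Finset.range (n - 1), (Fintype.card F : ℂ) ^ k) • oneB n F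
        + ((Fintype.card F : ℂ) - 1) •
            ∑ p ∈ Finset.univ.filter (fun p : Fin n × Fin n => p.1 < p.2),
              (Fintype.card F : ℂ) ^ (n - 1 - ((p.2 : ℕ) - (p.1 : ℕ))) •
                heckeT n F (Equiv.swap p.1 p.2) := by
  classical
  rw [S8.key_identity hn, S8.scalar_sum hn]
  congr 1
  rw [Finset.smul_sum]
  apply Finset.sum_congr rfl
  intro p hp
  rw [S8.card_param_cast (Finset.mem_filter.1 hp).2, smul_smul]
end

section
/- Let F be a finite field with q = |F| elements and n ≥ 1. For every permutation ω ∈ S_n, the Bruhat double coset satisfies |B ω B| = q^{I(ω)} · |B|, and consequently |B ω B| · [n]_q! = q^{I(ω)} · |GL_n(F)|; that is, the pushforward of the uniform distribution on GL_n(F) to the Bruhat double cosets B\GL_n(F)/B ≅ S_n is the Mallows measure π_q(ω) = q^{I(ω)} / [n]_q!. -/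
/-- `I(ω)`: the number of inversions of the permutation `ω ∈ S_n`. -/
def inversions (n : ℕ) (ω : Equiv.Perm (Fin n)) : ℕ :=
  (Finset.univ.filter fun p : Fin n × Fin n => p.1 < p.2 ∧ ω p.2 < ω p.1).card

/-- `[n]_q! = [1]_q [2]_q ⋯ [n]_q` where `[m]_q = 1 + q + ⋯ + q^{m−1}`. -/
def qFactorial (q n : ℕ) : ℕ :=
  ∏ k ∈ Finset.range n, ∑ i ∈ Finset.range (k + 1), q ^ i

open Finset Matrix

set_option linter.unusedSectionVars false
set_option maxHeartbeats 1000000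

section Aux

variable {n : ℕ} {F : Type*} [Field F] [Fintype F]

lemma mem_borel_iff {M : Matrix (Fin n) (Fin n) F} :
    M ∈ borelSubgroup n F ↔ (∀ i j, j < i → M i j = 0) ∧ ∀ i, M i i ≠ 0 := by
  constructor
  · rintro ⟨ht, hd⟩
    refine ⟨fun i j h => ht h, fun i => ?_⟩
    rw [Matrix.det_of_upperTriangular ht] at hd
    exact Finset.prod_ne_zero_iff.mp (isUnit_iff_ne_zero.mp hd) i (mem_univ i)
  · rintro ⟨ht, hd⟩
    have hbt : M.BlockTriangular id := fun i j h => ht i j h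
    refine ⟨hbt, ?_⟩
    rw [Matrix.det_of_upperTriangular hbt]
    exact isUnit_iff_ne_zero.mpr (Finset.prod_ne_zero_iff.mpr fun i _ => hd i)

lemma borel_mul {a b : Matrix (Fin n) (Fin n) F} (ha : a ∈ borelSubgroup n F)
    (hb : b ∈ borelSubgroup n F) : a * b ∈ borelSubgroup n F :=
  ⟨ha.1.mul hb.1, by rw [det_mul]; exact ha.2.mul hb.2⟩

lemma borel_inv {a : Matrix (Fin n) (Fin n) F} (ha : a ∈ borelSubgroup n F) :
    a⁻¹ ∈ borelSubgroup n F := by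
  have : Invertible a := a.invertibleOfIsUnitDet ha.2
  exact ⟨Matrix.blockTriangular_inv_of_blockTriangular ha.1,
    Matrix.isUnit_nonsing_inv_det_iff.mpr ha.2⟩

lemma conj_apply (ω : Equiv.Perm (Fin n)) (c : Matrix (Fin n) (Fin n) F) (i j : Fin n) :
    (ω.permMatrix F * c * (ω⁻¹).permMatrix F) i j = c (ω i) (ω j) := by
  rw [mul_assoc, PEquiv.toMatrix_toPEquiv_mul, PEquiv.mul_toMatrix_toPEquiv]
  simp [Equiv.Perm.inv_def]

lemma perm_mul_inv (ω : Equiv.Perm (Fin n)) :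
    ω.permMatrix F * (ω⁻¹).permMatrix F = (1 : Matrix (Fin n) (Fin n) F) := by
  ext i j
  rw [PEquiv.toMatrix_toPEquiv_mul]
  simp [PEquiv.toMatrix_apply, Equiv.toPEquiv_apply, Matrix.one_apply, Matrix.submatrix_apply,
    Equiv.Perm.inv_def, eq_comm]

lemma perm_inv_mul (ω : Equiv.Perm (Fin n)) :
    (ω⁻¹).permMatrix F * ω.permMatrix F = (1 : Matrix (Fin n) (Fin n) F) := by
  have := perm_mul_inv (F := F) ω⁻¹
  rwa [inv_inv] at this

lemma perm_isUnit_det (ω : Equiv.Perm (Fin n)) : IsUnit ((ω.permMatrix F).det) :=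
  Matrix.isUnit_det_of_right_inverse (perm_mul_inv ω)

lemma cancel_left {X Y Z : Matrix (Fin n) (Fin n) F} (hX : IsUnit X.det)
    (h : X * Y = X * Z) : Y = Z := by
  have := congrArg (X⁻¹ * ·) h
  simpa [← mul_assoc, Matrix.nonsing_inv_mul _ hX] using this

lemma cancel_right {X Y Z : Matrix (Fin n) (Fin n) F} (hX : IsUnit X.det)
    (h : Y * X = Z * X) : Y = Z := by
  have := congrArg (· * X⁻¹) h
  simpa [mul_assoc, Matrix.mul_nonsing_inv _ hX] using this

lemma card_ne_zero_set : Nat.card {x : F | x ≠ 0} = Fintype.card F - 1 := by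
  classical
  have e : Fˣ ≃ {x : F | x ≠ 0} := unitsEquivNeZero
  rw [← Nat.card_congr e, Nat.card_eq_fintype_card, Fintype.card_units]

lemma card_pattern (S : Fin n → Fin n → Prop) [∀ i j, Decidable (S i j)] (hS : ∀ i, ¬ S i i) :
    Nat.card {M : Matrix (Fin n) (Fin n) F |
        (∀ i j, i ≠ j → ¬ S i j → M i j = 0) ∧ ∀ i, M i i ≠ 0}
      = (Fintype.card F - 1) ^ n
        * Fintype.card F ^ (Finset.univ.filter fun p : Fin n × Fin n => S p.1 p.2).card := by
  classical
  set A : Fin n → Fin n → Set F := fun i j =>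
    if i = j then {x | x ≠ 0} else if S i j then Set.univ else {0} with hA
  have hset : {M : Matrix (Fin n) (Fin n) F |
        (∀ i j, i ≠ j → ¬ S i j → M i j = 0) ∧ ∀ i, M i i ≠ 0}
      = {M : Matrix (Fin n) (Fin n) F | ∀ i j, M i j ∈ A i j} := by
    ext M
    simp only [Set.mem_setOf_eq, hA]
    constructor
    · rintro ⟨h0, hd⟩ i j
      by_cases hij : i = j
      · subst hij; simpa using hd i
      · by_cases hs : S i j
        · simp [hij, hs]
        · simp [hij, hs, h0 i j hij hs]
    · intro h
      refine ⟨fun i j hij hs => ?_, fun i => ?_⟩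
      · have := h i j; simpa [hij, hs] using this
      · have := h i i; simpa using this
  have e : {M : Matrix (Fin n) (Fin n) F | ∀ i j, M i j ∈ A i j} ≃ ∀ i, ∀ j, A i j :=
    { toFun := fun x i j => ⟨x.1 i j, x.2 i j⟩
      invFun := fun f => ⟨fun i j => (f i j).1, fun i j => (f i j).2⟩
      left_inv := fun x => rfl
      right_inv := fun f => rfl }
  rw [hset, Nat.card_congr e, Nat.card_pi]
  have hcard : ∀ i j, Nat.card (A i j)
      = (Fintype.card F - 1) ^ (if i = j then 1 else 0)
        * Fintype.card F ^ (if S i j then 1 else 0) := by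
    intro i j
    by_cases hij : i = j
    · subst hij
      rw [show A i i = {x | x ≠ 0} by simp [hA], card_ne_zero_set]; simp [hS i]
    · by_cases hs : S i j
      · have : A i j = Set.univ := by simp [hA, hij, hs]
        rw [this, Nat.card_congr (Equiv.Set.univ F), Nat.card_eq_fintype_card]
        simp [hij, hs]
      · have : A i j = {0} := by simp [hA, hij, hs]
        rw [this]
        simp [hij, hs]
  simp_rw [Nat.card_pi, hcard]
  rw [← Finset.prod_product']
  rw [Finset.prod_mul_distrib, Finset.prod_pow_eq_pow_sum, Finset.prod_pow_eq_pow_sum]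
  congr 1
  · congr 1
    rw [Finset.sum_product]
    simp [Finset.sum_ite_eq]
  · congr 1
    rw [Finset.card_filter, ← Finset.univ_product_univ]

lemma inversions_add (ω : Equiv.Perm (Fin n)) :
    (Finset.univ.filter fun p : Fin n × Fin n => p.1 < p.2 ∧ ω p.1 < ω p.2).card
      + inversions n ω
      = (Finset.univ.filter fun p : Fin n × Fin n => p.1 < p.2).card := by
  classical
  rw [inversions, ← Finset.card_union_of_disjoint, ← Finset.filter_or]
  · congr 1
    apply Finset.filter_congr
    intro p _
    constructor
    · rintro (⟨h, _⟩ | ⟨h, _⟩) <;> exact h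
    · intro h
      rcases lt_or_gt_of_ne (fun he : ω p.1 = ω p.2 => absurd (ω.injective he) (ne_of_lt h)) with
        h' | h'
      · exact Or.inl ⟨h, h'⟩
      · exact Or.inr ⟨h, h'⟩
  · rw [Finset.disjoint_left]
    rintro p hp hq
    simp only [Finset.mem_filter] at hp hq
    exact absurd hq.2.2 (not_lt.mpr (le_of_lt hp.2.2))

lemma card_lt_pairs : (Finset.univ.filter fun p : Fin n × Fin n => p.1 < p.2).card
    = ∑ i ∈ Finset.range n, i := by
  rw [Finset.card_filter, ← Finset.univ_product_univ, Finset.sum_product_right]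
  have : ∀ j : Fin n, (∑ i : Fin n, if i < j then (1:ℕ) else 0) = (j : ℕ) := by
    intro j
    rw [← Finset.card_filter]
    have : Finset.univ.filter (fun i : Fin n => i < j) = Finset.Iio j := by
      ext i; simp
    rw [this, Fin.card_Iio]
  simp_rw [this]
  exact Fin.sum_univ_eq_sum_range (fun i => i) n

lemma geom_mul (q : ℕ) (hq : 1 ≤ q) (m : ℕ) :
    (q - 1) * ∑ j ∈ Finset.range m, q ^ j = q ^ m - 1 := by
  induction m with
  | zero => simp
  | succ m ih =>
    rw [Finset.sum_range_succ, Nat.mul_add, ih]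
    have ha : 1 ≤ q ^ m := Nat.one_le_pow _ _ hq
    have h2 : (q - 1) * q ^ m = q * q ^ m - q ^ m := by rw [Nat.sub_mul, one_mul]
    have h3 : q ^ m ≤ q * q ^ m := Nat.le_mul_of_pos_left _ hq
    rw [h2, pow_succ]
    rw [mul_comm (q ^ m) q]
    omega

lemma prod_card_GL (q : ℕ) (hq : 1 ≤ q) :
    ∏ i ∈ Finset.range n, (q ^ n - q ^ i)
      = (q - 1) ^ n * q ^ (∑ i ∈ Finset.range n, i) * qFactorial q n := by
  have hterm : ∀ i ∈ Finset.range n, q ^ n - q ^ i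
      = q ^ i * ((q - 1) * ∑ j ∈ Finset.range (n - i), q ^ j) := by
    intro i hi
    rw [Finset.mem_range] at hi
    rw [geom_mul q hq, Nat.mul_sub, mul_one, ← pow_add]
    congr 2
    omega
  rw [Finset.prod_congr rfl hterm]
  rw [Finset.prod_mul_distrib, Finset.prod_mul_distrib, Finset.prod_const,
    Finset.prod_pow_eq_pow_sum, Finset.card_range]
  have : ∏ i ∈ Finset.range n, (∑ j ∈ Finset.range (n - i), q ^ j) = qFactorial q n := by
    rw [qFactorial, ← Finset.prod_range_reflect]
    apply Finset.prod_congr rfl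
    intro k hk
    rw [Finset.mem_range] at hk
    have h : n - (n - 1 - k) = k + 1 := by omega
    rw [h]
  rw [this]; ring

/-- The set `B ∩ ω B ω⁻¹`. -/
def borelConj (n : ℕ) (F : Type*) [Field F] (ω : Equiv.Perm (Fin n)) :
    Set (Matrix (Fin n) (Fin n) F) :=
  borelSubgroup n F ∩
    {M | ∃ c ∈ borelSubgroup n F, M = ω.permMatrix F * c * (ω⁻¹).permMatrix F}

lemma borelConj_eq (ω : Equiv.Perm (Fin n)) :
    borelConj n F ω = {M : Matrix (Fin n) (Fin n) F |
      (∀ i j, i ≠ j → ¬ (i < j ∧ ω i < ω j) → M i j = 0) ∧ ∀ i, M i i ≠ 0} := by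
  ext M
  constructor
  · rintro ⟨hB, c, hc, rfl⟩
    rw [mem_borel_iff] at hB hc
    constructor
    · intro i j hij hs
      rcases lt_or_gt_of_ne hij with hlt | hgt
      · have : ¬ ω i < ω j := fun h => hs ⟨hlt, h⟩
        have hne : ω i ≠ ω j := fun h => hij (ω.injective h)
        have : ω j < ω i := lt_of_le_of_ne (not_lt.mp this) (Ne.symm hne)
        rw [conj_apply]
        exact hc.1 _ _ this
      · exact hB.1 i j hgt
    · intro i
      exact hB.2 i
  · rintro ⟨h0, hd⟩
    have hB : M ∈ borelSubgroup n F := by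
      rw [mem_borel_iff]
      exact ⟨fun i j h => h0 i j (ne_of_gt h) (fun hs => absurd hs.1 (not_lt.mpr (le_of_lt h))),
        hd⟩
    refine ⟨hB, (ω⁻¹).permMatrix F * M * ω.permMatrix F, ?_, ?_⟩
    · rw [mem_borel_iff]
      constructor
      · intro i j hji
        have : ((ω⁻¹).permMatrix F * M * ((ω⁻¹)⁻¹).permMatrix F) i j = M (ω⁻¹ i) (ω⁻¹ j) :=
          conj_apply ω⁻¹ M i j
        rw [inv_inv] at this
        rw [this]
        have hne : ω⁻¹ i ≠ ω⁻¹ j := fun h => (ne_of_gt hji) (by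
          have := congrArg ω h; simpa using this)
        refine h0 _ _ hne (fun hs => ?_)
        have h2 := hs.2
        simp only [Equiv.Perm.inv_def, Equiv.apply_symm_apply] at h2
        exact absurd h2 (not_lt.mpr (le_of_lt hji))
      · intro i
        have : ((ω⁻¹).permMatrix F * M * ((ω⁻¹)⁻¹).permMatrix F) i i = M (ω⁻¹ i) (ω⁻¹ i) :=
          conj_apply ω⁻¹ M i i
        rw [inv_inv] at this
        rw [this]
        exact hd _
    · rw [show ω.permMatrix F * ((ω⁻¹).permMatrix F * M * ω.permMatrix F) * (ω⁻¹).permMatrix F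
          = (ω.permMatrix F * (ω⁻¹).permMatrix F) * M
            * (ω.permMatrix F * (ω⁻¹).permMatrix F) by
        noncomm_ring]
      rw [perm_mul_inv]
      simp

lemma card_borelConj (ω : Equiv.Perm (Fin n)) :
    Nat.card (borelConj n F ω) = (Fintype.card F - 1) ^ n
      * Fintype.card F ^ (Finset.univ.filter
          fun p : Fin n × Fin n => p.1 < p.2 ∧ ω p.1 < ω p.2).card := by
  classical
  rw [borelConj_eq]
  exact card_pattern (fun i j => i < j ∧ ω i < ω j) (fun i => by simp)

lemma card_borel :
    Nat.card (borelSubgroup n F) = (Fintype.card F - 1) ^ n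
      * Fintype.card F ^ (Finset.univ.filter fun p : Fin n × Fin n => p.1 < p.2).card := by
  classical
  have hset : borelSubgroup n F = {M : Matrix (Fin n) (Fin n) F |
      (∀ i j, i ≠ j → ¬ (i < j) → M i j = 0) ∧ ∀ i, M i i ≠ 0} := by
    ext M
    rw [mem_borel_iff]
    constructor
    · rintro ⟨h0, hd⟩
      exact ⟨fun i j hij hs => h0 i j (lt_of_le_of_ne (not_lt.mp hs) (Ne.symm hij)), hd⟩
    · rintro ⟨h0, hd⟩
      exact ⟨fun i j hji => h0 i j (ne_of_gt hji) (not_lt.mpr (le_of_lt hji)), hd⟩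
  rw [hset]
  exact card_pattern (fun i j => i < j) (fun i => lt_irrefl i)

noncomputable def rep1 (ω : Equiv.Perm (Fin n)) (M : bruhatCell n F ω) :
    Matrix (Fin n) (Fin n) F := M.2.choose

lemma rep1_spec (ω : Equiv.Perm (Fin n)) (M : bruhatCell n F ω) :
    rep1 ω M ∈ borelSubgroup n F ∧ ∃ b₂ ∈ borelSubgroup n F,
      (M : Matrix (Fin n) (Fin n) F) = rep1 ω M * ω.permMatrix F * b₂ := M.2.choose_spec

lemma brF_aux (ω : Equiv.Perm (Fin n)) (M : bruhatCell n F ω)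
    {b₁ b₂ : Matrix (Fin n) (Fin n) F} (h₁ : b₁ ∈ borelSubgroup n F)
    (h₂ : b₂ ∈ borelSubgroup n F)
    (hM : (M : Matrix (Fin n) (Fin n) F) = b₁ * ω.permMatrix F * b₂) :
    (rep1 ω M)⁻¹ * b₁ ∈ borelConj n F ω := by
  obtain ⟨ha₁, a₂, ha₂, hrep⟩ := rep1_spec ω M
  set a₁ := rep1 ω M
  refine ⟨borel_mul (borel_inv ha₁) h₁, a₂ * b₂⁻¹, borel_mul ha₂ (borel_inv h₂), ?_⟩
  apply cancel_left ha₁.2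
  have key : a₁ * (ω.permMatrix F * (a₂ * b₂⁻¹) * (ω⁻¹).permMatrix F)
      = b₁ := by
    have h5 : a₁ * ω.permMatrix F * a₂ = b₁ * ω.permMatrix F * b₂ := by
      rw [← hrep, ← hM]
    calc a₁ * (ω.permMatrix F * (a₂ * b₂⁻¹) * (ω⁻¹).permMatrix F)
        = (a₁ * ω.permMatrix F * a₂) * b₂⁻¹ * (ω⁻¹).permMatrix F := by noncomm_ring
      _ = (b₁ * ω.permMatrix F * b₂) * b₂⁻¹ * (ω⁻¹).permMatrix F := by rw [h5]
      _ = b₁ * ω.permMatrix F * (b₂ * b₂⁻¹) * (ω⁻¹).permMatrix F := by noncomm_ring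
      _ = b₁ * (ω.permMatrix F * (ω⁻¹).permMatrix F) := by
          rw [Matrix.mul_nonsing_inv _ h₂.2]; noncomm_ring
      _ = b₁ := by rw [perm_mul_inv, mul_one]
  rw [key]
  rw [← mul_assoc, Matrix.mul_nonsing_inv _ ha₁.2, one_mul]

noncomputable def brF (ω : Equiv.Perm (Fin n))
    (p : (borelSubgroup n F) × (borelSubgroup n F)) :
    (bruhatCell n F ω) × (borelConj n F ω) :=
  let M : bruhatCell n F ω :=
    ⟨(p.1 : Matrix (Fin n) (Fin n) F) * ω.permMatrix F * (p.2 : Matrix (Fin n) (Fin n) F),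
      p.1, p.1.2, p.2, p.2.2, rfl⟩
  ⟨M, ⟨(rep1 ω M)⁻¹ * (p.1 : Matrix (Fin n) (Fin n) F),
    brF_aux ω M p.1.2 p.2.2 rfl⟩⟩

lemma brF_bijective (ω : Equiv.Perm (Fin n)) : Function.Bijective (brF (F := F) ω) := by
  constructor
  · rintro ⟨⟨b₁, hb₁⟩, ⟨b₂, hb₂⟩⟩ ⟨⟨b₁', hb₁'⟩, ⟨b₂', hb₂'⟩⟩ h
    rw [Prod.ext_iff] at h
    obtain ⟨h1, h2⟩ := h
    have hM : b₁ * ω.permMatrix F * b₂ = b₁' * ω.permMatrix F * b₂' :=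
      congrArg Subtype.val h1
    have hrep : rep1 ω ⟨b₁ * ω.permMatrix F * b₂, _⟩ = rep1 ω ⟨b₁' * ω.permMatrix F * b₂', _⟩ :=
      congrArg (rep1 ω) h1
    have h2' : (rep1 ω (⟨b₁ * ω.permMatrix F * b₂, _⟩ : bruhatCell n F ω))⁻¹ * b₁
        = (rep1 ω (⟨b₁' * ω.permMatrix F * b₂', _⟩ : bruhatCell n F ω))⁻¹ * b₁' :=
      congrArg Subtype.val h2
    rw [← hrep] at h2'
    have hb : b₁ = b₁' := by
      have ha₁ := (rep1_spec ω (⟨b₁ * ω.permMatrix F * b₂,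
        ⟨b₁, hb₁, b₂, hb₂, rfl⟩⟩ : bruhatCell n F ω)).1
      exact cancel_left (borel_inv ha₁).2 h2'
    subst hb
    have : ω.permMatrix F * b₂ = ω.permMatrix F * b₂' := cancel_left hb₁.2 (by
      rw [← mul_assoc, ← mul_assoc]; exact hM)
    have hb2 : b₂ = b₂' := cancel_left (perm_isUnit_det ω) this
    subst hb2
    rfl
  · rintro ⟨M, x⟩
    obtain ⟨hxB, c, hc, hxc⟩ := x.2
    obtain ⟨ha₁, a₂, ha₂, hrep⟩ := rep1_spec ω M
    set a₁ := rep1 ω M with ha₁def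
    set p : (borelSubgroup n F) × (borelSubgroup n F) :=
      (⟨a₁ * (x : Matrix (Fin n) (Fin n) F), borel_mul ha₁ hxB⟩,
        ⟨c⁻¹ * a₂, borel_mul (borel_inv hc) ha₂⟩) with hp
    refine ⟨p, ?_⟩
    have h1 : a₁ * (x : Matrix (Fin n) (Fin n) F) * ω.permMatrix F * (c⁻¹ * a₂)
        = (M : Matrix (Fin n) (Fin n) F) := by
      rw [hxc]
      calc a₁ * (ω.permMatrix F * c * (ω⁻¹).permMatrix F) * ω.permMatrix F * (c⁻¹ * a₂)
          = a₁ * ω.permMatrix F * c * ((ω⁻¹).permMatrix F * ω.permMatrix F)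
            * c⁻¹ * a₂ := by noncomm_ring
        _ = a₁ * ω.permMatrix F * (c * c⁻¹) * a₂ := by
            rw [perm_inv_mul]; noncomm_ring
        _ = a₁ * ω.permMatrix F * a₂ := by
            rw [Matrix.mul_nonsing_inv _ hc.2, mul_one]
        _ = (M : Matrix (Fin n) (Fin n) F) := hrep.symm
    have hMeq : (brF ω p).1 = M := Subtype.ext h1
    refine Prod.ext hMeq (Subtype.ext ?_)
    show (rep1 ω (brF ω p).1)⁻¹ * (a₁ * (x : Matrix (Fin n) (Fin n) F))
      = (x : Matrix (Fin n) (Fin n) F)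
    rw [show rep1 ω (brF ω p).1 = rep1 ω M from congrArg (rep1 ω) hMeq]
    rw [← ha₁def, ← mul_assoc, Matrix.nonsing_inv_mul _ ha₁.2, one_mul]

lemma bruhat_card_mul (ω : Equiv.Perm (Fin n)) :
    Nat.card (bruhatCell n F ω) * Nat.card (borelConj n F ω)
      = Nat.card (borelSubgroup n F) * Nat.card (borelSubgroup n F) := by
  rw [← Nat.card_prod, ← Nat.card_prod]
  exact (Nat.card_congr (Equiv.ofBijective _ (brF_bijective ω))).symm

lemma card_isUnit_set :
    Nat.card {M : Matrix (Fin n) (Fin n) F | IsUnit M.det}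
      = ∏ i ∈ Finset.range n, (Fintype.card F ^ n - Fintype.card F ^ i) := by
  have e : (GL (Fin n) F) ≃ {M : Matrix (Fin n) (Fin n) F | IsUnit M.det} :=
    { toFun := fun u => ⟨(u : Matrix (Fin n) (Fin n) F), by
        have : IsUnit (u : Matrix (Fin n) (Fin n) F) := u.isUnit
        exact (Matrix.isUnit_iff_isUnit_det _).mp this⟩
      invFun := fun x => ((Matrix.isUnit_iff_isUnit_det _).mpr x.2).unit
      left_inv := fun u => Units.ext (IsUnit.unit_spec
        ((Matrix.isUnit_iff_isUnit_det _).mpr ((Matrix.isUnit_iff_isUnit_det _).mp u.isUnit)))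
      right_inv := fun x => Subtype.ext (IsUnit.unit_spec
        ((Matrix.isUnit_iff_isUnit_det _).mpr x.2)) }
  rw [← Nat.card_congr e, Matrix.card_GL_field]
  exact Fin.prod_univ_eq_prod_range (fun i => Fintype.card F ^ n - Fintype.card F ^ i) n

end Aux

/-- For `F` a finite field with `q` elements and any `ω ∈ S_n`,
`|B ω B| = q^{I(ω)} |B|` and `|B ω B| · [n]_q! = q^{I(ω)} |GL_n(F)|`; i.e. the pushforward
of the uniform distribution on `GL_n(F)` to `B\GL_n(F)/B ≅ S_n` is the Mallows measure
`π_q(ω) = q^{I(ω)} / [n]_q!`. -/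
theorem card_bruhatCell
    (F : Type*) [Field F] [Fintype F] (n : ℕ) (hn : 1 ≤ n) (ω : Equiv.Perm (Fin n)) :
    Nat.card (bruhatCell n F ω)
        = Fintype.card F ^ inversions n ω * Nat.card (borelSubgroup n F) ∧
      Nat.card (bruhatCell n F ω) * qFactorial (Fintype.card F) n
        = Fintype.card F ^ inversions n ω
            * Nat.card {M : Matrix (Fin n) (Fin n) F | IsUnit M.det} := by
  classical
  set q := Fintype.card F with hq
  have hq2 : 2 ≤ q := Fintype.one_lt_card
  set aω := (Finset.univ.filter fun p : Fin n × Fin n => p.1 < p.2 ∧ ω p.1 < ω p.2).card with haω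
  set a1 := (Finset.univ.filter fun p : Fin n × Fin n => p.1 < p.2).card with ha1
  have hsum : aω + inversions n ω = a1 := inversions_add ω
  have hKpos : 0 < (q - 1) ^ n * q ^ aω :=
    Nat.mul_pos (Nat.pow_pos (by omega)) (Nat.pow_pos (by omega))
  have hmain : Nat.card (bruhatCell n F ω)
      = q ^ inversions n ω * Nat.card (borelSubgroup n F) := by
    have h1 := bruhat_card_mul (F := F) ω
    rw [card_borelConj, card_borel, ← haω, ← ha1, ← hq] at h1
    apply Nat.eq_of_mul_eq_mul_right hKpos
    rw [h1, card_borel, ← ha1, ← hq, ← hsum]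
    simp only [pow_add]
    ring
  refine ⟨hmain, ?_⟩
  rw [hmain, card_isUnit_set, card_borel, ← hq, prod_card_GL q (by omega), card_lt_pairs]
  ring
end
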